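/- arXiv:2006.16979 — 11 statements merged into one kernel-verified Lean document; each statement's English description precedes it below -/
import Mathlib

section
/- A balanced stored-energy configuration with total energy Ê and total rate P̂ can completely serve a nonnegative residual demand process (d(u), u ≥ t) (using proportional discharge rates r_i(u) = (P_i/P̂) d(u)) if and only if d(u) ≤ P̂ for all u ≥ t and ∫_t^∞ d(u) du ≤ Ê. -/
open MeasureTheory Set Finset
open scoped Classical

/-- A balanced stored-energy configuration with total energy `Ê` and total rate
`P̂` can completely serve a nonnegative residual demand process `(d(u), u ≥ t)`
if and only if `d(u) ≤ P̂` for all `u ≥ t` and `∫_t^∞ d(u) du ≤ Ê`. -/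
theorem balanced_configuration_serves_iff
    {S : Type*} [Fintype S] (E P : S → ℝ) (hE : ∀ i, 0 ≤ E i) (hP : ∀ i, 0 < P i)
    (c : ℝ) (hbal : ∀ i, E i / P i = c)
    (t : ℝ) (d : ℝ → ℝ) (hd : Measurable d) (hd0 : ∀ u, t ≤ u → 0 ≤ d u)
    (hdint : IntegrableOn d (Ici t)) :
    (∃ r : S → ℝ → ℝ,
        (∀ i, Measurable (r i)) ∧
        (∀ i u, t ≤ u → 0 ≤ r i u ∧ r i u ≤ P i) ∧
        (∀ u, t ≤ u → ∑ i, r i u = d u) ∧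
        (∀ i u, t ≤ u → 0 ≤ E i - ∫ v in t..u, r i v)) ↔
      ((∀ u, t ≤ u → d u ≤ ∑ i, P i) ∧ (∫ u in Ici t, d u) ≤ ∑ i, E i) := by
  constructor
  · rintro ⟨r, hrm, hrb, hrsum, hrE⟩
    constructor
    · intro u hu
      rw [← hrsum u hu]
      exact Finset.sum_le_sum fun i _ => (hrb i u hu).2
    · have key : ∀ u, t ≤ u → (∫ v in t..u, d v) ≤ ∑ i, E i := by
        intro u hu
        have hint : ∀ i : S, IntervalIntegrable (r i) volume t u := by
          intro i
          rw [intervalIntegrable_iff_integrableOn_Ioc_of_le hu]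
          have hg : IntegrableOn (fun _ : ℝ => P i) (Set.Ioc t u) volume :=
            integrableOn_const measure_Ioc_lt_top.ne enorm_ne_top
          refine Integrable.mono' hg ((hrm i).aestronglyMeasurable) ?_
          refine ae_restrict_of_forall_mem measurableSet_Ioc fun v hv => ?_
          have hv' : t ≤ v := le_of_lt hv.1
          rw [Real.norm_eq_abs, abs_of_nonneg (hrb i v hv').1]
          exact (hrb i v hv').2
        have heq : ∫ v in t..u, d v = ∑ i, ∫ v in t..u, r i v := by
          rw [← intervalIntegral.integral_finset_sum (fun i _ => hint i)]
          apply intervalIntegral.integral_congr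
          intro v hv
          rw [uIcc_of_le hu] at hv
          exact (hrsum v hv.1).symm
        rw [heq]
        refine Finset.sum_le_sum fun i _ => ?_
        linarith [hrE i u hu]
      rw [integral_Ici_eq_integral_Ioi]
      have htend := MeasureTheory.intervalIntegral_tendsto_integral_Ioi t
        (hdint.mono_set Ioi_subset_Ici_self) Filter.tendsto_id
      refine le_of_tendsto htend ?_
      filter_upwards [Filter.eventually_ge_atTop t] with u hu using key u hu
  · rintro ⟨hub, hintle⟩
    by_cases hS : Nonempty S
    · have hPhatpos : (0:ℝ) < ∑ i, P i := Finset.sum_pos (fun i _ => hP i) Finset.univ_nonempty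
      have hdiv : ∀ i : S, 0 ≤ P i / ∑ j, P j := fun i => div_nonneg (hP i).le hPhatpos.le
      refine ⟨fun i u => if t ≤ u then (P i / ∑ j, P j) * d u else 0, ?_, ?_, ?_, ?_⟩
      · intro i
        exact Measurable.ite measurableSet_Ici (measurable_const.mul hd) measurable_const
      · intro i u hu
        simp only [if_pos hu]
        refine ⟨mul_nonneg (hdiv i) (hd0 u hu), ?_⟩
        have h := mul_le_mul_of_nonneg_left (hub u hu) (hdiv i)
        rwa [div_mul_cancel₀ _ hPhatpos.ne'] at h
      · intro u hu
        simp only [if_pos hu]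
        rw [← Finset.sum_mul, ← Finset.sum_div, div_self hPhatpos.ne', one_mul]
      · intro i u hu
        have hEeq : ∀ j : S, E j = c * P j := fun j =>
          (div_eq_iff (hP j).ne').mp (hbal j)
        have hsumE : ∑ j, E j = c * ∑ j, P j := by
          rw [Finset.mul_sum]
          exact Finset.sum_congr rfl fun j _ => hEeq j
        have hcongr : (∫ v in t..u, (if t ≤ v then (P i / ∑ j, P j) * d v else 0))
            = (P i / ∑ j, P j) * ∫ v in t..u, d v := by
          rw [← intervalIntegral.integral_const_mul]
          apply intervalIntegral.integral_congr
          intro v hv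
          rw [uIcc_of_le hu] at hv
          exact if_pos hv.1
        rw [hcongr]
        have hle1 : (∫ v in t..u, d v) ≤ ∫ v in Ici t, d v := by
          rw [intervalIntegral.integral_of_le hu]
          refine setIntegral_mono_set hdint ?_ ?_
          · exact ae_restrict_of_forall_mem measurableSet_Ici fun v hv => hd0 v hv
          · exact HasSubset.Subset.eventuallyLE fun v hv => le_of_lt hv.1
        have hle2 : (∫ v in t..u, d v) ≤ ∑ j, E j := le_trans hle1 hintle
        have h3 : (P i / ∑ j, P j) * (∫ v in t..u, d v) ≤ (P i / ∑ j, P j) * ∑ j, E j :=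
          mul_le_mul_of_nonneg_left hle2 (hdiv i)
        have h4 : (P i / ∑ j, P j) * ∑ j, E j = E i := by
          rw [hsumE, hEeq i]
          field_simp
        linarith
    · haveI : IsEmpty S := not_nonempty_iff.mp hS
      refine ⟨fun i u => 0, fun i => measurable_const, fun i u _ => ⟨le_rfl, (hP i).le⟩, ?_,
        fun i u _ => by simp [hE i]⟩
      intro u hu
      have h1 := hub u hu
      have h2 := hd0 u hu
      simp only [Finset.univ_eq_empty, Finset.sum_empty] at h1 ⊢
      linarith
end

section
/- For any set of stores with burst-power profile s and any nonnegative demand d on [0,T], a necessary condition for the demand to be completely servable is that for every p ≥ 0, ∫_0^{m(τ_p)} s(u) du ≥ ∫_{τ_p} d(u) du, where τ_p = {t ∈ [0,T] : d(t) ≥ p} and m(τ_p) is its Lebesgue measure. -/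
open MeasureTheory Set Finset
open scoped Classical

private lemma ite_integral (m c Pv : ℝ) (hm : 0 ≤ m) (hc : 0 ≤ c) :
    (∫ v in (0:ℝ)..m, (if v ≤ c then Pv else 0)) = Pv * min m c := by
  have h1 : (fun v : ℝ => if v ≤ c then Pv else 0) = (Iic c).indicator (fun _ => Pv) := by
    ext v; simp [Set.indicator_apply]
  have h2 : Ioc (0:ℝ) m ∩ Iic c = Ioc 0 (min m c) := by
    ext v; simp [and_assoc, le_min_iff]
  rw [intervalIntegral.integral_of_le hm, h1,
    MeasureTheory.setIntegral_indicator measurableSet_Iic, h2]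
  simp [Real.volume_Ioc]
  rw [max_eq_left (le_min hm hc)]; ring


/-- A necessary condition for a nonnegative demand on `[0,T]` to be completely
servable by a set of stores with burst-power profile `s`: for every `p ≥ 0`,
`∫_0^{m(τ_p)} s(u) du ≥ ∫_{τ_p} d(u) du`, where `τ_p = {t ∈ [0,T] : d(t) ≥ p}`
and `m(τ_p)` is its Lebesgue measure. -/
theorem necessary_condition_for_service
    {S : Type*} [Fintype S] (E P : S → ℝ) (hE : ∀ i, 0 ≤ E i) (hP : ∀ i, 0 < P i)
    (T : ℝ) (hT : 0 ≤ T)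
    (d : ℝ → ℝ) (hd : Measurable d) (hd0 : ∀ u ∈ Icc 0 T, 0 ≤ d u)
    (hdint : IntegrableOn d (Icc 0 T))
    (s : ℝ → ℝ)
    (hs : ∀ u, s u = ∑ i ∈ Finset.univ.filter (fun i => u ≤ E i / P i), P i)
    -- a policy completely serving the demand
    (r : S → ℝ → ℝ) (hrm : ∀ i, Measurable (r i))
    (hrate : ∀ i, ∀ u ∈ Icc 0 T, 0 ≤ r i u ∧ r i u ≤ P i)
    (hserve : ∀ u ∈ Icc 0 T, ∑ i, r i u = d u)
    (hlevel : ∀ i, ∀ u ∈ Icc 0 T, 0 ≤ E i - ∫ v in (0:ℝ)..u, r i v) :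
    ∀ p, 0 ≤ p →
      (∫ u in {u | u ∈ Icc 0 T ∧ p ≤ d u}, d u) ≤
        ∫ v in (0:ℝ)..((volume {u | u ∈ Icc 0 T ∧ p ≤ d u}).toReal), s v := by
  intro p hp
  set τ : Set ℝ := {u | u ∈ Icc 0 T ∧ p ≤ d u} with hτdef
  have hτeq : τ = Icc 0 T ∩ {u | p ≤ d u} := rfl
  have hτm : MeasurableSet τ := by
    rw [hτeq]; exact measurableSet_Icc.inter (measurableSet_le measurable_const hd)
  have hτsub : τ ⊆ Icc 0 T := fun u hu => hu.1
  have hvolfin : volume τ < ⊤ :=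
    lt_of_le_of_lt (measure_mono hτsub) measure_Icc_lt_top
  set m := (volume τ).toReal with hmdef
  have hm0 : 0 ≤ m := ENNReal.toReal_nonneg
  -- integrability of r i on Icc 0 T
  have hri : ∀ i, IntegrableOn (r i) (Icc 0 T) := by
    intro i
    refine Integrable.mono' ((integrableOn_const measure_Icc_lt_top.ne) : IntegrableOn (fun _ => P i) (Icc 0 T) volume)
      ((hrm i).aestronglyMeasurable.restrict) ?_
    filter_upwards [ae_restrict_mem measurableSet_Icc] with u hu
    rw [Real.norm_eq_abs, abs_of_nonneg (hrate i u hu).1]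
    exact (hrate i u hu).2
  have hriτ : ∀ i, IntegrableOn (r i) τ := fun i => (hri i).mono_set hτsub
  -- bound: ∫_τ r i ≤ P i * m
  have hbound1 : ∀ i, (∫ u in τ, r i u) ≤ P i * m := by
    intro i
    calc (∫ u in τ, r i u) ≤ ∫ _ in τ, P i :=
          setIntegral_mono_on (hriτ i) (integrableOn_const hvolfin.ne) hτm
            (fun u hu => (hrate i u (hτsub hu)).2)
      _ = m * P i := by rw [setIntegral_const, smul_eq_mul]; rfl
      _ = P i * m := mul_comm _ _
  -- bound: ∫_τ r i ≤ E i
  have hbound2 : ∀ i, (∫ u in τ, r i u) ≤ E i := by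
    intro i
    have h1 : (∫ u in τ, r i u) ≤ ∫ u in Icc 0 T, r i u := by
      refine setIntegral_mono_set (hri i) ?_ (HasSubset.Subset.eventuallyLE hτsub)
      filter_upwards [ae_restrict_mem measurableSet_Icc] with u hu
      exact (hrate i u hu).1
    have h2 : (∫ u in Icc 0 T, r i u) = ∫ v in (0:ℝ)..T, r i v := by
      rw [intervalIntegral.integral_of_le hT, MeasureTheory.integral_Icc_eq_integral_Ioc]
    have h3 := hlevel i T ⟨hT, le_refl T⟩
    linarith
  -- combined bound
  have hbound : ∀ i, (∫ u in τ, r i u) ≤ P i * min m (E i / P i) := by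
    intro i
    rw [mul_min_of_nonneg _ _ (hP i).le, mul_div_cancel₀ _ (hP i).ne']
    exact le_min (hbound1 i) (hbound2 i)
  -- LHS equality
  have hL : (∫ u in τ, d u) = ∑ i, ∫ u in τ, r i u := by
    rw [← MeasureTheory.integral_finset_sum _ (fun i _ => hriτ i)]
    exact setIntegral_congr_fun hτm (fun u hu => (hserve u (hτsub hu)).symm)
  -- RHS equality
  have hR : (∫ v in (0:ℝ)..m, s v) = ∑ i, P i * min m (E i / P i) := by
    have hs' : ∀ u, s u = ∑ i, (if u ≤ E i / P i then P i else 0) := by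
      intro u; rw [hs u, Finset.sum_filter]
    have hint : ∀ i : S, IntervalIntegrable
        (fun v => if v ≤ E i / P i then P i else 0) volume 0 m := by
      intro i
      have : (fun v : ℝ => if v ≤ E i / P i then P i else 0)
          = (Iic (E i / P i)).indicator (fun _ => P i) := by
        ext v; simp [Set.indicator_apply]
      rw [intervalIntegrable_iff, this]
      exact (integrableOn_const measure_Ioc_lt_top.ne).indicator measurableSet_Iic
        |>.mono_set (by rw [uIoc_of_le hm0])
    calc (∫ v in (0:ℝ)..m, s v)
        = ∫ v in (0:ℝ)..m, ∑ i, (if v ≤ E i / P i then P i else 0) := by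
          simp_rw [hs']
      _ = ∑ i, ∫ v in (0:ℝ)..m, (if v ≤ E i / P i then P i else 0) :=
          intervalIntegral.integral_finset_sum (fun i _ => hint i)
      _ = ∑ i, P i * min m (E i / P i) := by
          refine Finset.sum_congr rfl (fun i _ => ?_)
          exact ite_integral m (E i / P i) (P i) hm0 (div_nonneg (hE i) (hP i).le)
  rw [hL, hR]
  exact Finset.sum_le_sum (fun i _ => hbound i)
end

section
/- If for every p ≥ 0 one has ∫_0^{m(τ_p)} s(u) du ≥ ∫_{τ_p} d(u) du with τ_p = {t ∈ [0,T] : d(t) ≥ p}, then e^S(p) ≥ e^D_{0,T}(p) for all p ≥ 0, where e^S and e^D are the energy-power transforms of the storage configuration and of the demand respectively. -/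
open MeasureTheory Set

/-- If for every `p ≥ 0` one has `∫_0^{m(τ_p)} s(u) du ≥ ∫_{τ_p} d(u) du`, with
`τ_p = {t ∈ [0,T] : d(t) ≥ p}`, then `e^S(p) ≥ e^D_{0,T}(p)` for all `p ≥ 0`. -/
theorem transform_domination_of_sufficiency
    (T : ℝ) (hT : 0 ≤ T)
    (s : ℝ → ℝ) (hs_anti : Antitone s) (hs0 : ∀ u, 0 ≤ s u)
    (hsint : IntegrableOn s (Ioi (0:ℝ)))
    (d : ℝ → ℝ) (hd : Measurable d) (hd0 : ∀ u ∈ Icc 0 T, 0 ≤ d u)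
    (hdint : IntegrableOn d (Icc 0 T))
    (eS eD : ℝ → ℝ)
    (heS : ∀ p, eS p = ∫ u in Set.Ioi (0:ℝ), max 0 (s u - p))
    (heD : ∀ p, eD p = ∫ u in (0:ℝ)..T, max 0 (d u - p))
    (hyp : ∀ p, 0 ≤ p →
      (∫ u in {u | u ∈ Icc 0 T ∧ p ≤ d u}, d u) ≤
        ∫ v in (0:ℝ)..((volume {u | u ∈ Icc 0 T ∧ p ≤ d u}).toReal), s v) :
    ∀ p, 0 ≤ p → eD p ≤ eS p := by
  intro p hp
  set τ : Set ℝ := {u | u ∈ Icc 0 T ∧ p ≤ d u} with hτ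
  have hτmeas : MeasurableSet τ := by
    have : τ = Icc 0 T ∩ d ⁻¹' Ici p := by
      rfl
    rw [this]
    exact measurableSet_Icc.inter (hd measurableSet_Ici)
  have hτsub : τ ⊆ Icc 0 T := fun u hu => hu.1
  have hτfin : volume τ < ⊤ :=
    lt_of_le_of_lt (measure_mono hτsub) measure_Icc_lt_top
  set M := (volume τ).toReal with hM
  have hM0 : 0 ≤ M := ENNReal.toReal_nonneg
  have hdτ : IntegrableOn d τ := hdint.mono_set hτsub
  have hconstτ : IntegrableOn (fun _ : ℝ => p) τ := by
    exact integrableOn_const hτfin.ne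
  -- demand side: eD p = ∫_τ d - p * M
  have heDτ : eD p = (∫ u in τ, d u) - p * M := by
    rw [heD, intervalIntegral.integral_of_le hT, ← integral_Icc_eq_integral_Ioc]
    have hcong : ∫ u in Icc 0 T, max 0 (d u - p)
        = ∫ u in Icc 0 T, τ.indicator (fun u => d u - p) u := by
      apply setIntegral_congr_fun measurableSet_Icc
      intro u hu
      by_cases h : p ≤ d u
      · have huτ : u ∈ τ := ⟨hu, h⟩
        simp [indicator_of_mem huτ, max_eq_right (sub_nonneg.mpr h)]
      · have huτ : u ∉ τ := fun hc => h hc.2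
        simp [indicator_of_notMem huτ,
          max_eq_left (le_of_lt (sub_neg.mpr (lt_of_not_ge h)))]
    rw [hcong, setIntegral_indicator hτmeas, inter_eq_right.mpr hτsub,
      integral_sub hdτ hconstτ, setIntegral_const]
    simp [hM, mul_comm, smul_eq_mul, Measure.real]
  -- supply side
  have hsmeas : Measurable s := hs_anti.measurable
  have hmaxmeas : Measurable fun u => max 0 (s u - p) :=
    measurable_const.max (hsmeas.sub measurable_const)
  have hsmax_int : IntegrableOn (fun u => max 0 (s u - p)) (Ioi (0:ℝ)) := by
    apply Integrable.mono hsint hmaxmeas.aestronglyMeasurable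
    filter_upwards with u
    rw [Real.norm_eq_abs, Real.norm_eq_abs, abs_of_nonneg (le_max_left _ _),
      abs_of_nonneg (hs0 u)]
    exact max_le (hs0 u) (by linarith [hs0 u])
  have hsM : IntegrableOn s (Ioc 0 M) := hsint.mono_set Ioc_subset_Ioi_self
  have hconstM : IntegrableOn (fun _ : ℝ => p) (Ioc 0 M) := by
    exact integrableOn_const measure_Ioc_lt_top.ne
  have h1 : ∫ u in Ioc 0 M, max 0 (s u - p) ≤ ∫ u in Ioi 0, max 0 (s u - p) := by
    apply setIntegral_mono_set hsmax_int
    · filter_upwards with u using le_max_left _ _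
    · exact HasSubset.Subset.eventuallyLE Ioc_subset_Ioi_self
  have h2 : ∫ u in Ioc 0 M, (s u - p) ≤ ∫ u in Ioc 0 M, max 0 (s u - p) := by
    apply setIntegral_mono (hsM.sub hconstM) (hsmax_int.mono_set Ioc_subset_Ioi_self)
    intro u
    exact le_max_right _ _
  have h3 : ∫ u in Ioc 0 M, (s u - p) = (∫ v in (0:ℝ)..M, s v) - p * M := by
    rw [integral_sub hsM hconstM, setIntegral_const, intervalIntegral.integral_of_le hM0]
    simp [Real.volume_Ioc, ENNReal.toReal_ofReal hM0, mul_comm, hM0]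
  have hkey := hyp p hp
  rw [heDτ, heS]
  calc (∫ u in τ, d u) - p * M
      ≤ (∫ v in (0:ℝ)..M, s v) - p * M := by
        have : (∫ u in τ, d u) ≤ ∫ v in (0:ℝ)..M, s v := hkey
        linarith
    _ = ∫ u in Ioc 0 M, (s u - p) := h3.symm
    _ ≤ ∫ u in Ioc 0 M, max 0 (s u - p) := h2
    _ ≤ ∫ u in Ioi 0, max 0 (s u - p) := h1
end

section
/- For any nonnegative demand process on [0,T] and any initial energy configuration, the minimum over all discharge-only policies of the unserved energy demand ∫_0^T max(d(t) − Σ_i r_i(t), 0) dt equals max_{p ≥ 0} (e^D_{0,T}(p) − e^S(p)), and this minimum is achieved by the GGDDF policy. -/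
open MeasureTheory Set Finset
open scoped Classical

noncomputable def storeLevel {S : Type*} [Fintype S] (E0 : S → ℝ) (r : S → ℝ → ℝ)
    (i : S) (t : ℝ) : ℝ :=
  E0 i - ∫ v in (0:ℝ)..t, r i v

def IsPolicy {S : Type*} [Fintype S] (E0 P : S → ℝ) (d : ℝ → ℝ) (T : ℝ)
    (r : S → ℝ → ℝ) : Prop :=
  (∀ i, Measurable (r i)) ∧
  (∀ i, ∀ t ∈ Icc 0 T, 0 ≤ r i t ∧ r i t ≤ P i) ∧
  (∀ t ∈ Icc 0 T, ∑ i, r i t ≤ d t) ∧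
  (∀ i, ∀ t ∈ Icc 0 T, 0 ≤ storeLevel E0 r i t)

def IsGGDDF {S : Type*} [Fintype S] (E0 P : S → ℝ) (d : ℝ → ℝ) (T : ℝ)
    (r : S → ℝ → ℝ) : Prop :=
  IsPolicy E0 P d T r ∧
  (∀ t ∈ Icc 0 T,
    (∑ i, r i t =
      min (d t) (∑ i ∈ Finset.univ.filter (fun i => 0 < storeLevel E0 r i t), P i)) ∧
    (∀ i j, storeLevel E0 r i t / P i < storeLevel E0 r j t / P j →
      0 < r i t → r j t = P j))

/-- The unserved energy demand of a policy over `[0,T]`. -/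
noncomputable def unserved {S : Type*} [Fintype S] (d : ℝ → ℝ) (T : ℝ)
    (r : S → ℝ → ℝ) : ℝ :=
  ∫ t in (0:ℝ)..T, max (d t - ∑ i, r i t) 0

namespace GGDDFAux

lemma integrableOn_Icc_of_abs_le {f : ℝ → ℝ} {a b C : ℝ} (hm : Measurable f)
    (h : ∀ t ∈ Icc a b, |f t| ≤ C) : IntegrableOn f (Icc a b) := by
  refine Integrable.mono' (integrable_const C) hm.aestronglyMeasurable ?_
  exact (ae_restrict_iff' measurableSet_Icc).mpr (Filter.Eventually.of_forall h)

lemma II_of_Icc {f : ℝ → ℝ} {a b : ℝ} (hab : a ≤ b) (hf : IntegrableOn f (Icc a b)) :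
    IntervalIntegrable f volume a b := by
  rw [← uIcc_of_le hab] at hf; exact hf.intervalIntegrable

lemma integrableOn_max0 {f : ℝ → ℝ} {s : Set ℝ} (hf : IntegrableOn f s) :
    IntegrableOn (fun t => max 0 (f t)) s := by
  have h : IntegrableOn (fun t => max (f t) 0) s := hf.pos_part
  simpa [max_comm] using h

lemma indic_integral {a c : ℝ} (ha : 0 ≤ a) :
    (∫ u in Set.Ioi (0:ℝ), Set.indicator (Ioc (0:ℝ) a) (fun _ => c) u) = c * a := by
  rw [MeasureTheory.setIntegral_indicator measurableSet_Ioc,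
      Set.inter_eq_self_of_subset_right Set.Ioc_subset_Ioi_self,
      setIntegral_const, Real.volume_real_Ioc_of_le ha, sub_zero, smul_eq_mul]
  ring

lemma indic_integrableOn {a c : ℝ} :
    IntegrableOn (fun u => Set.indicator (Ioc (0:ℝ) a) (fun _ => c) u) (Set.Ioi 0) :=
  ((integrable_indicator_iff measurableSet_Ioc).mpr
    ((integrableOn_const_iff).mpr (Or.inr measure_Ioc_lt_top))).integrableOn

variable {S : Type*} [Fintype S] {E0 P : S → ℝ} {d : ℝ → ℝ} {T : ℝ} {r : S → ℝ → ℝ}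

lemma _root_.IsPolicy.rII (hr : IsPolicy E0 P d T r) (i : S) {a b : ℝ}
    (ha : 0 ≤ a) (hab : a ≤ b) (hb : b ≤ T) : IntervalIntegrable (r i) volume a b := by
  refine II_of_Icc hab (integrableOn_Icc_of_abs_le (hr.1 i) (C := |P i|) ?_)
  intro t ht
  have h1 := hr.2.1 i t ⟨le_trans ha ht.1, le_trans ht.2 hb⟩
  rw [abs_le]
  exact ⟨by nlinarith [abs_nonneg (P i)], le_trans h1.2 (le_abs_self _)⟩

lemma _root_.IsPolicy.rIcc (hr : IsPolicy E0 P d T r) (i : S) :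
    IntegrableOn (r i) (Icc 0 T) := by
  refine integrableOn_Icc_of_abs_le (hr.1 i) (C := |P i|) ?_
  intro t ht
  have h1 := hr.2.1 i t ht
  rw [abs_le]
  exact ⟨by nlinarith [abs_nonneg (P i)], le_trans h1.2 (le_abs_self _)⟩

lemma _root_.IsPolicy.level_mono (hr : IsPolicy E0 P d T r) (hT : 0 ≤ T) (i : S) {t : ℝ}
    (ht : t ∈ Icc 0 T) : storeLevel E0 r i T ≤ storeLevel E0 r i t := by
  have hsplit : (∫ v in (0:ℝ)..t, r i v) + (∫ v in t..T, r i v) = ∫ v in (0:ℝ)..T, r i v :=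
    intervalIntegral.integral_add_adjacent_intervals
      (hr.rII i le_rfl ht.1 ht.2) (hr.rII i ht.1 ht.2 le_rfl)
  have hnn : 0 ≤ ∫ v in t..T, r i v :=
    intervalIntegral.integral_nonneg ht.2
      (fun u hu => (hr.2.1 i u ⟨le_trans ht.1 hu.1, hu.2⟩).1)
  unfold storeLevel
  linarith

lemma _root_.IsPolicy.integral_le (hr : IsPolicy E0 P d T r) (hT : 0 ≤ T) (i : S) :
    (∫ v in (0:ℝ)..T, r i v) ≤ E0 i := by
  have h2 := hr.2.2.2 i T ⟨hT, le_rfl⟩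
  unfold storeLevel at h2; linarith

lemma _root_.IsPolicy.integral_eq (hr : IsPolicy E0 P d T r) (hT : 0 ≤ T) {i : S}
    (hi : storeLevel E0 r i T ≤ 0) : (∫ v in (0:ℝ)..T, r i v) = E0 i := by
  have h2 := hr.2.2.2 i T ⟨hT, le_rfl⟩
  unfold storeLevel at hi h2
  linarith

lemma _root_.IsPolicy.level_continuousOn (hr : IsPolicy E0 P d T r) (hT : 0 ≤ T) (i : S) :
    ContinuousOn (fun u => storeLevel E0 r i u) (Icc 0 T) := by
  have h1 : ContinuousOn (fun u => ∫ v in (0:ℝ)..u, r i v) (Icc 0 T) := by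
    have := intervalIntegral.continuousOn_primitive_interval (a := 0) (b := T)
      (f := r i) (μ := volume) (by rw [uIcc_of_le hT]; exact hr.rIcc i)
    rwa [uIcc_of_le hT] at this
  exact continuousOn_const.sub h1

lemma cap_meas (E0 P : S → ℝ) (s : Finset S) :
    Measurable (fun u : ℝ => ∑ i ∈ s.filter (fun i => u ≤ E0 i / P i), P i) := by
  have h : (fun u : ℝ => ∑ i ∈ s.filter (fun i => u ≤ E0 i / P i), P i)
      = fun u => ∑ i ∈ s, Set.indicator (Iic (E0 i / P i)) (fun _ => P i) u := by
    funext u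
    rw [Finset.sum_filter]
    exact Finset.sum_congr rfl fun i _ => by simp [Set.indicator_apply]
  rw [h]
  exact Finset.measurable_sum _ fun i _ => measurable_const.indicator measurableSet_Iic

lemma cap_eq_indicator_sum (E0 : S → ℝ) (s : Finset S) {u : ℝ} (hu : 0 < u) :
    (∑ i ∈ s.filter (fun i => u ≤ E0 i / P i), P i)
      = ∑ i ∈ s, Set.indicator (Ioc 0 (E0 i / P i)) (fun _ => P i) u := by
  rw [Finset.sum_filter]
  refine Finset.sum_congr rfl fun i _ => ?_
  by_cases h : u ≤ E0 i / P i <;> simp [Set.indicator_apply, Set.mem_Ioc, hu, h]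

lemma cap_integrable (E0 : S → ℝ) (hP : ∀ i, 0 < P i) (s : Finset S) {p : ℝ} (hp : 0 ≤ p) :
    IntegrableOn (fun u => max 0 ((∑ i ∈ s.filter (fun i => u ≤ E0 i / P i), P i) - p))
      (Set.Ioi 0) := by
  refine Integrable.mono'
    (g := fun u => ∑ i ∈ s, Set.indicator (Ioc (0:ℝ) (E0 i / P i)) (fun _ => P i) u)
    (integrable_finset_sum _ fun i _ => indic_integrableOn) ?_ ?_
  · exact (measurable_const.max ((cap_meas E0 P s).sub measurable_const)).aestronglyMeasurable
  · refine (ae_restrict_iff' measurableSet_Ioi).mpr (Filter.Eventually.of_forall fun u hu => ?_)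
    rw [Real.norm_eq_abs, abs_of_nonneg (le_max_left _ _)]
    rw [← cap_eq_indicator_sum E0 s hu]
    have h1 : (0:ℝ) ≤ ∑ i ∈ s.filter (fun i => u ≤ E0 i / P i), P i :=
      Finset.sum_nonneg fun i _ => (hP i).le
    exact max_le h1 (by linarith)

lemma lemmaA (hP : ∀ i, 0 < P i) (hE : ∀ i, 0 ≤ E0 i)
    (hT : 0 ≤ T) (hmeas : ∀ i, Measurable (r i))
    (hbd : ∀ i, ∀ t ∈ Icc 0 T, 0 ≤ r i t ∧ r i t ≤ P i)
    (hen : ∀ i, (∫ t in (0:ℝ)..T, r i t) ≤ E0 i)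
    {p : ℝ} (hp : 0 ≤ p) (s : Finset S) :
    (∫ t in (0:ℝ)..T, max ((∑ i ∈ s, r i t) - p) 0) ≤
      ∫ u in Set.Ioi (0:ℝ), max 0 ((∑ i ∈ s.filter (fun i => u ≤ E0 i / P i), P i) - p) := by
  have hrII : ∀ i, IntervalIntegrable (r i) volume 0 T := fun i =>
    II_of_Icc hT (integrableOn_Icc_of_abs_le (hmeas i) (C := |P i|) (fun t ht => by
      have h1 := hbd i t ht
      rw [abs_le]
      exact ⟨by nlinarith [abs_nonneg (P i)], le_trans h1.2 (le_abs_self _)⟩))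
  have hmaxIcc : ∀ (s₁ : Finset S),
      IntegrableOn (fun t => max ((∑ i ∈ s₁, r i t) - p) 0) (Icc 0 T) := by
    intro s₁
    refine integrableOn_Icc_of_abs_le
      (((Finset.measurable_sum s₁ fun i _ => hmeas i).sub measurable_const).max measurable_const)
      (C := ∑ i ∈ s₁, P i) ?_
    intro t ht
    have h1 : (∑ i ∈ s₁, r i t) ≤ ∑ i ∈ s₁, P i := Finset.sum_le_sum fun i _ => (hbd i t ht).2
    have h2 : (0:ℝ) ≤ ∑ i ∈ s₁, P i := Finset.sum_nonneg fun i _ => (hP i).le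
    rw [abs_of_nonneg (le_max_right _ _)]
    exact max_le (by linarith) h2
  induction s using Finset.strongInduction with
  | _ s ih =>
    rcases Finset.eq_empty_or_nonempty s with rfl | hne
    · simp [max_eq_right (neg_nonpos.mpr hp), max_eq_left (neg_nonpos.mpr hp)]
    · obtain ⟨i0, hi0s, hmin⟩ := Finset.exists_min_image s (fun i => E0 i / P i) hne
      have hsub : s.erase i0 ⊂ s := Finset.erase_ssubset hi0s
      have hCs : (∑ i ∈ s, P i) = P i0 + ∑ i ∈ s.erase i0, P i :=
        (Finset.add_sum_erase s P hi0s).symm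
      have hx0 : (0:ℝ) ≤ E0 i0 / P i0 := div_nonneg (hE i0) (hP i0).le
      rcases le_or_gt p (∑ i ∈ s.erase i0, P i) with hpC | hpC
      · -- p below remaining capacity: peel off i0
        have hpt : ∀ u ∈ Set.Ioi (0:ℝ),
            max 0 ((∑ i ∈ s.filter (fun i => u ≤ E0 i / P i), P i) - p)
              = max 0 ((∑ i ∈ (s.erase i0).filter (fun i => u ≤ E0 i / P i), P i) - p)
                + Set.indicator (Ioc (0:ℝ) (E0 i0 / P i0)) (fun _ => P i0) u := by
          intro u hu
          by_cases h : u ≤ E0 i0 / P i0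
          · have hfs : s.filter (fun i => u ≤ E0 i / P i) = s :=
              Finset.filter_true_of_mem fun i hi => le_trans h (hmin i hi)
            have hfs' : (s.erase i0).filter (fun i => u ≤ E0 i / P i) = s.erase i0 :=
              Finset.filter_true_of_mem fun i hi => le_trans h (hmin i (Finset.mem_of_mem_erase hi))
            rw [hfs, hfs', Set.indicator_of_mem (Set.mem_Ioc.mpr ⟨hu, h⟩)]
            rw [max_eq_right (by linarith [hCs, (hP i0)] : (0:ℝ) ≤ (∑ i ∈ s, P i) - p),
                max_eq_right (by linarith : (0:ℝ) ≤ (∑ i ∈ s.erase i0, P i) - p)]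
            rw [hCs]; ring
          · have hmem : i0 ∉ s.filter (fun i => u ≤ E0 i / P i) := by simp [h]
            have hfe : (s.erase i0).filter (fun i => u ≤ E0 i / P i)
                = s.filter (fun i => u ≤ E0 i / P i) := by
              rw [Finset.filter_erase, Finset.erase_eq_of_notMem hmem]
            rw [hfe, Set.indicator_of_notMem (by simp [Set.mem_Ioc, h]), add_zero]
        have hRHS : (∫ u in Set.Ioi (0:ℝ),
              max 0 ((∑ i ∈ s.filter (fun i => u ≤ E0 i / P i), P i) - p))
            = (∫ u in Set.Ioi (0:ℝ),
                max 0 ((∑ i ∈ (s.erase i0).filter (fun i => u ≤ E0 i / P i), P i) - p))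
              + E0 i0 := by
          rw [setIntegral_congr_fun measurableSet_Ioi hpt,
              integral_add (cap_integrable E0 hP _ hp) indic_integrableOn,
              indic_integral hx0]
          congr 1
          rw [mul_comm, div_mul_cancel₀ _ (hP i0).ne']
        have hLHSpt : ∀ t ∈ Icc 0 T,
            max ((∑ i ∈ s, r i t) - p) 0 ≤ max ((∑ i ∈ s.erase i0, r i t) - p) 0 + r i0 t := by
          intro t ht
          have hsum : (∑ i ∈ s, r i t) = r i0 t + ∑ i ∈ s.erase i0, r i t :=
            (Finset.add_sum_erase s (fun i => r i t) hi0s).symm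
          have hr0 : 0 ≤ r i0 t := (hbd i0 t ht).1
          rcases le_total ((∑ i ∈ s, r i t) - p) 0 with hcase | hcase
          · rw [max_eq_right hcase]
            exact add_nonneg (le_max_right _ _) hr0
          · rw [max_eq_left hcase]
            have h4 := le_max_left ((∑ i ∈ s.erase i0, r i t) - p) 0
            rw [hsum]
            linarith
        have hLHS : (∫ t in (0:ℝ)..T, max ((∑ i ∈ s, r i t) - p) 0)
            ≤ (∫ t in (0:ℝ)..T, max ((∑ i ∈ s.erase i0, r i t) - p) 0) + E0 i0 := by
          calc (∫ t in (0:ℝ)..T, max ((∑ i ∈ s, r i t) - p) 0)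
              ≤ ∫ t in (0:ℝ)..T, (max ((∑ i ∈ s.erase i0, r i t) - p) 0 + r i0 t) :=
                intervalIntegral.integral_mono_on hT (II_of_Icc hT (hmaxIcc s))
                  ((II_of_Icc hT (hmaxIcc _)).add (hrII i0)) hLHSpt
            _ = (∫ t in (0:ℝ)..T, max ((∑ i ∈ s.erase i0, r i t) - p) 0)
                + ∫ t in (0:ℝ)..T, r i0 t :=
                intervalIntegral.integral_add (II_of_Icc hT (hmaxIcc _)) (hrII i0)
            _ ≤ (∫ t in (0:ℝ)..T, max ((∑ i ∈ s.erase i0, r i t) - p) 0) + E0 i0 := by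
                have := hen i0; linarith
        rw [hRHS]
        linarith [ih _ hsub]
      · -- p above remaining capacity
        set c := max ((∑ i ∈ s, P i) - p) 0 / P i0 with hc
        have hcnn : 0 ≤ c := div_nonneg (le_max_right _ _) (hP i0).le
        have hpt2 : ∀ t ∈ Icc 0 T, max ((∑ i ∈ s, r i t) - p) 0 ≤ c * r i0 t := by
          intro t ht
          have hsum : (∑ i ∈ s, r i t) = r i0 t + ∑ i ∈ s.erase i0, r i t :=
            (Finset.add_sum_erase s (fun i => r i t) hi0s).symm
          have hle : (∑ i ∈ s.erase i0, r i t) ≤ ∑ i ∈ s.erase i0, P i :=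
            Finset.sum_le_sum fun i _ => (hbd i t ht).2
          set q := p - ∑ i ∈ s.erase i0, P i with hq
          have hq0 : 0 ≤ q := by rw [hq]; linarith
          have h1 : max ((∑ i ∈ s, r i t) - p) 0 ≤ max (r i0 t - q) 0 := by
            refine max_le_max ?_ le_rfl
            rw [hsum, hq]; linarith
          have h2 : max (r i0 t - q) 0 ≤ (max (P i0 - q) 0 / P i0) * r i0 t := by
            rcases le_total (r i0 t) q with hrq | hrq
            · rw [max_eq_right (by linarith)]
              exact mul_nonneg (div_nonneg (le_max_right _ _) (hP i0).le) (hbd i0 t ht).1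
            · rw [max_eq_left (by linarith), max_eq_left (by linarith [(hbd i0 t ht).2])]
              rw [div_mul_eq_mul_div, le_div_iff₀ (hP i0)]
              nlinarith [mul_nonneg hq0 (sub_nonneg.mpr (hbd i0 t ht).2)]
          have h3 : max (P i0 - q) 0 = max ((∑ i ∈ s, P i) - p) 0 := by
            congr 1; rw [hq, hCs]; ring
          calc max ((∑ i ∈ s, r i t) - p) 0 ≤ max (r i0 t - q) 0 := h1
            _ ≤ (max (P i0 - q) 0 / P i0) * r i0 t := h2
            _ = c * r i0 t := by rw [h3, hc]
        have hLHS2 : (∫ t in (0:ℝ)..T, max ((∑ i ∈ s, r i t) - p) 0) ≤ c * E0 i0 := by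
          calc (∫ t in (0:ℝ)..T, max ((∑ i ∈ s, r i t) - p) 0)
              ≤ ∫ t in (0:ℝ)..T, c * r i0 t :=
                intervalIntegral.integral_mono_on hT (II_of_Icc hT (hmaxIcc s))
                  ((hrII i0).const_mul c) hpt2
            _ = c * ∫ t in (0:ℝ)..T, r i0 t := intervalIntegral.integral_const_mul c _
            _ ≤ c * E0 i0 := mul_le_mul_of_nonneg_left (hen i0) hcnn
        have hRHS2 : max ((∑ i ∈ s, P i) - p) 0 * (E0 i0 / P i0)
            ≤ ∫ u in Set.Ioi (0:ℝ),
                max 0 ((∑ i ∈ s.filter (fun i => u ≤ E0 i / P i), P i) - p) := by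
          rw [← indic_integral (c := max ((∑ i ∈ s, P i) - p) 0) hx0]
          refine setIntegral_mono_on indic_integrableOn (cap_integrable E0 hP _ hp)
            measurableSet_Ioi ?_
          intro u hu
          by_cases h : u ≤ E0 i0 / P i0
          · have hfs : s.filter (fun i => u ≤ E0 i / P i) = s :=
              Finset.filter_true_of_mem fun i hi => le_trans h (hmin i hi)
            rw [hfs, Set.indicator_of_mem (Set.mem_Ioc.mpr ⟨hu, h⟩)]
            exact le_of_eq (max_comm _ _)
          · rw [Set.indicator_of_notMem (by simp [Set.mem_Ioc, h])]
            exact le_max_left _ _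
        have hfin : c * E0 i0 = max ((∑ i ∈ s, P i) - p) 0 * (E0 i0 / P i0) := by
          rw [hc]; ring
        linarith


lemma ratio_lt (hP : ∀ i, 0 < P i) (hT : 0 ≤ T) (hg : IsGGDDF E0 P d T r)
    {i j : S} (hi : storeLevel E0 r i T ≤ 0) (hj : 0 < storeLevel E0 r j T)
    {t : ℝ} (ht : t ∈ Icc 0 T) :
    storeLevel E0 r i t / P i < storeLevel E0 r j t / P j := by
  obtain ⟨hpol, hgg⟩ := hg
  by_contra hcon
  push_neg at hcon
  set g : ℝ → ℝ := fun u => storeLevel E0 r i u / P i - storeLevel E0 r j u / P j with hgdef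
  have hgcont : ContinuousOn g (Icc 0 T) :=
    ((hpol.level_continuousOn hT i).div_const _).sub ((hpol.level_continuousOn hT j).div_const _)
  set K : Set ℝ := Icc t T ∩ g ⁻¹' (Ici 0) with hKdef
  have hKcl : IsClosed K :=
    (hgcont.mono (Icc_subset_Icc ht.1 le_rfl)).preimage_isClosed_of_isClosed isClosed_Icc isClosed_Ici
  have htK : t ∈ K := ⟨⟨le_rfl, ht.2⟩, by simp only [Set.mem_preimage, Set.mem_Ici, hgdef]; linarith⟩
  have hKne : K.Nonempty := ⟨t, htK⟩
  have hKbdd : BddAbove K := ⟨T, fun u hu => hu.1.2⟩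
  set s := sSup K with hsdef
  have hsK : s ∈ K := hKcl.csSup_mem hKne hKbdd
  have hst : t ≤ s := le_csSup hKbdd htK
  have hsT : s ≤ T := hsK.1.2
  have hs0 : (0:ℝ) ≤ s := le_trans ht.1 hsK.1.1
  have key : ∀ u ∈ Ioc s T, 0 ≤ r j u / P j - r i u / P i := by
    intro u hu
    have huIcc : u ∈ Icc (0:ℝ) T := ⟨le_trans hs0 hu.1.le, hu.2⟩
    have hgu : g u < 0 := by
      by_contra hgu
      push_neg at hgu
      have huK : u ∈ K := ⟨⟨le_trans hst hu.1.le, hu.2⟩, hgu⟩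
      exact absurd (le_csSup hKbdd huK) (not_le.mpr hu.1)
    have hxy : storeLevel E0 r i u / P i < storeLevel E0 r j u / P j := by
      simp only [hgdef] at hgu; linarith
    rcases le_or_gt (r i u) 0 with h0 | h0
    · have hri : r i u = 0 := le_antisymm h0 (hpol.2.1 i u huIcc).1
      have hrj : 0 ≤ r j u := (hpol.2.1 j u huIcc).1
      have h4 : 0 ≤ r j u / P j := div_nonneg hrj (hP j).le
      rw [hri, zero_div, sub_zero]
      exact h4
    · have hfull := (hgg u huIcc).2 i j hxy h0
      rw [hfull]
      have h1 : r i u ≤ P i := (hpol.2.1 i u huIcc).2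
      have h2 : r i u / P i ≤ 1 := (div_le_one (hP i)).mpr h1
      have h3 : P j / P j = 1 := div_self (hP j).ne'
      linarith
  have hint : 0 ≤ ∫ u in s..T, (r j u / P j - r i u / P i) := by
    rw [intervalIntegral.integral_of_le hsT]
    exact setIntegral_nonneg measurableSet_Ioc key
  have hii : IntervalIntegrable (r i) volume s T := hpol.rII i hs0 hsT le_rfl
  have hjj : IntervalIntegrable (r j) volume s T := hpol.rII j hs0 hsT le_rfl
  have hgTs : g T - g s = ∫ u in s..T, (r j u / P j - r i u / P i) := by
    have ei : (∫ v in s..T, r i v) = (∫ v in (0:ℝ)..T, r i v) - ∫ v in (0:ℝ)..s, r i v := by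
      rw [← intervalIntegral.integral_add_adjacent_intervals (hpol.rII i le_rfl hs0 hsT) hii]
      ring
    have ej : (∫ v in s..T, r j v) = (∫ v in (0:ℝ)..T, r j v) - ∫ v in (0:ℝ)..s, r j v := by
      rw [← intervalIntegral.integral_add_adjacent_intervals (hpol.rII j le_rfl hs0 hsT) hjj]
      ring
    rw [intervalIntegral.integral_sub (hjj.div_const _) (hii.div_const _),
        intervalIntegral.integral_div, intervalIntegral.integral_div, ei, ej]
    simp only [hgdef, storeLevel]
    ring
  have hgs : 0 ≤ g s := hsK.2
  have hgT : g T < 0 := by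
    have h1 : storeLevel E0 r i T / P i ≤ 0 := div_nonpos_iff.mpr (Or.inr ⟨hi, (hP i).le⟩)
    have h2 : 0 < storeLevel E0 r j T / P j := div_pos hj (hP j)
    show storeLevel E0 r i T / P i - storeLevel E0 r j T / P j < 0
    linarith
  rw [← hgTs] at hint
  linarith

lemma lower_bound (hP : ∀ i, 0 < P i) (hE : ∀ i, 0 ≤ E0 i) (hT : 0 ≤ T)
    (hdint : IntegrableOn d (Icc 0 T)) (hr : IsPolicy E0 P d T r)
    {p : ℝ} (hp : 0 ≤ p) :
    (∫ u in (0:ℝ)..T, max 0 (d u - p)) -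
      (∫ u in Set.Ioi (0:ℝ),
        max 0 ((∑ i ∈ Finset.univ.filter (fun i => u ≤ E0 i / P i), P i) - p))
      ≤ unserved d T r := by
  have hA := lemmaA hP hE hT hr.1 hr.2.1 (fun i => hr.integral_le hT i) hp Finset.univ
  have hRIcc : IntegrableOn (fun t => ∑ i, r i t) (Icc 0 T) :=
    integrable_finset_sum _ fun i _ => hr.rIcc i
  have hU : IntegrableOn (fun t => max (d t - ∑ i, r i t) 0) (Icc 0 T) :=
    (hdint.sub hRIcc).pos_part
  have hM : IntegrableOn (fun t => max ((∑ i, r i t) - p) 0) (Icc 0 T) := by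
    refine integrableOn_Icc_of_abs_le
      (((Finset.measurable_sum _ fun i _ => hr.1 i).sub measurable_const).max measurable_const)
      (C := ∑ i, P i) ?_
    intro t ht
    have h1 : (∑ i, r i t) ≤ ∑ i, P i := Finset.sum_le_sum fun i _ => (hr.2.1 i t ht).2
    have h2 : (0:ℝ) ≤ ∑ i, P i := Finset.sum_nonneg fun i _ => (hP i).le
    rw [abs_of_nonneg (le_max_right _ _)]
    exact max_le (by linarith) h2
  have hE1 : IntegrableOn (fun t => max 0 (d t - p)) (Icc 0 T) :=
    integrableOn_max0 (hdint.sub ((integrableOn_const_iff).mpr (Or.inr measure_Icc_lt_top)))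
  have hpt : ∀ t ∈ Icc 0 T,
      max 0 (d t - p) ≤ max (d t - ∑ i, r i t) 0 + max ((∑ i, r i t) - p) 0 := by
    intro t ht
    rcases le_total (d t) p with h | h
    · rw [max_eq_left (by linarith)]
      exact add_nonneg (le_max_right _ _) (le_max_right _ _)
    · rw [max_eq_right (by linarith)]
      have h1 := le_max_left (d t - ∑ i, r i t) 0
      have h2 := le_max_left ((∑ i, r i t) - p) 0
      linarith
  have hmono : (∫ u in (0:ℝ)..T, max 0 (d u - p)) ≤
      ∫ t in (0:ℝ)..T, (max (d t - ∑ i, r i t) 0 + max ((∑ i, r i t) - p) 0) :=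
    intervalIntegral.integral_mono_on hT (II_of_Icc hT hE1)
      ((II_of_Icc hT hU).add (II_of_Icc hT hM)) hpt
  rw [intervalIntegral.integral_add (II_of_Icc hT hU) (II_of_Icc hT hM)] at hmono
  unfold unserved
  linarith

lemma ggddf_eq (hP : ∀ i, 0 < P i) (hE : ∀ i, 0 ≤ E0 i) (hT : 0 ≤ T)
    (hd0 : ∀ t ∈ Icc 0 T, 0 ≤ d t) (hdint : IntegrableOn d (Icc 0 T))
    (hg : IsGGDDF E0 P d T r) :
    ∃ p, 0 ≤ p ∧
      unserved d T r =
        (∫ u in (0:ℝ)..T, max 0 (d u - p)) -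
        ∫ u in Set.Ioi (0:ℝ),
          max 0 ((∑ i ∈ Finset.univ.filter (fun i => u ≤ E0 i / P i), P i) - p) := by
  classical
  set D : Finset S := Finset.univ.filter (fun i => storeLevel E0 r i T ≤ 0) with hD
  set F : Finset S := Finset.univ.filter (fun i => ¬ storeLevel E0 r i T ≤ 0) with hF
  set p : ℝ := ∑ j ∈ F, P j with hp
  have hp0 : 0 ≤ p := Finset.sum_nonneg fun i _ => (hP i).le
  have hsplitr : ∀ t : ℝ, (∑ i, r i t) = (∑ i ∈ D, r i t) + ∑ i ∈ F, r i t := fun t =>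
    (Finset.sum_filter_add_sum_filter_not Finset.univ _ _).symm
  have hL2 : ∀ t ∈ Icc 0 T, max ((∑ i, r i t) - p) 0 = ∑ i ∈ D, r i t := by
    intro t ht
    by_cases hex : ∃ i ∈ D, 0 < r i t
    · obtain ⟨i0, hi0D, hi0r⟩ := hex
      have hi0 : storeLevel E0 r i0 T ≤ 0 := (Finset.mem_filter.mp hi0D).2
      have hFfull : ∀ j ∈ F, r j t = P j := fun j hj =>
        (hg.2 t ht).2 i0 j
          (ratio_lt hP hT hg hi0 (not_le.mp (Finset.mem_filter.mp hj).2) ht) hi0r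
      have hDnn : 0 ≤ ∑ i ∈ D, r i t := Finset.sum_nonneg fun i _ => (hg.1.2.1 i t ht).1
      rw [hsplitr t, Finset.sum_congr rfl hFfull]
      have heq : (∑ i ∈ D, r i t) + (∑ j ∈ F, P j) - p = ∑ i ∈ D, r i t := by
        rw [hp]; ring
      rw [heq, max_eq_left hDnn]
    · push_neg at hex
      have hD0 : (∑ i ∈ D, r i t) = 0 :=
        Finset.sum_eq_zero fun i hi => le_antisymm (hex i hi) (hg.1.2.1 i t ht).1
      have hFle : (∑ j ∈ F, r j t) ≤ p := by
        rw [hp]; exact Finset.sum_le_sum fun j _ => (hg.1.2.1 j t ht).2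
      rw [hsplitr t, hD0, max_eq_right (by linarith)]
  have hAp : ∀ t ∈ Icc 0 T,
      p ≤ ∑ i ∈ Finset.univ.filter (fun i => 0 < storeLevel E0 r i t), P i := by
    intro t ht
    rw [hp]
    refine Finset.sum_le_sum_of_subset_of_nonneg ?_ (fun i _ _ => (hP i).le)
    intro j hj
    have h1 := not_le.mp (Finset.mem_filter.mp hj).2
    have h2 := hg.1.level_mono hT j ht
    simp only [Finset.mem_filter, Finset.mem_univ, true_and]
    linarith
  have hL3 : ∀ t ∈ Icc 0 T,
      max 0 (d t - p) = max (d t - ∑ i, r i t) 0 + ∑ i ∈ D, r i t := by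
    intro t ht
    rw [← hL2 t ht]
    have hmin := (hg.2 t ht).1
    have hA := hAp t ht
    rcases le_total (d t)
        (∑ i ∈ Finset.univ.filter (fun i => 0 < storeLevel E0 r i t), P i) with h | h
    · rw [hmin, min_eq_left h]
      simp only [sub_self, max_self, zero_add]
      exact max_comm _ _
    · rw [hmin, min_eq_right h]
      set A := ∑ i ∈ Finset.univ.filter (fun i => 0 < storeLevel E0 r i t), P i with hA2
      have e1 : max (d t - A) 0 = d t - A := max_eq_left (by linarith)
      have e2 : max (A - p) 0 = A - p := max_eq_left (by linarith)
      have e3 : max 0 (d t - p) = d t - p := max_eq_right (by linarith)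
      rw [e1, e2, e3]; ring
  have hRIcc : IntegrableOn (fun t => ∑ i, r i t) (Icc 0 T) :=
    integrable_finset_sum _ fun i _ => hg.1.rIcc i
  have hU : IntegrableOn (fun t => max (d t - ∑ i, r i t) 0) (Icc 0 T) :=
    (hdint.sub hRIcc).pos_part
  have hDint : IntegrableOn (fun t => ∑ i ∈ D, r i t) (Icc 0 T) :=
    integrable_finset_sum _ fun i _ => hg.1.rIcc i
  have hEq : (∫ u in (0:ℝ)..T, max 0 (d u - p)) = unserved d T r + ∑ i ∈ D, E0 i := by
    have h1 : (∫ u in (0:ℝ)..T, max 0 (d u - p)) =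
        ∫ t in (0:ℝ)..T, (max (d t - ∑ i, r i t) 0 + ∑ i ∈ D, r i t) := by
      refine intervalIntegral.integral_congr ?_
      intro t ht
      rw [uIcc_of_le hT] at ht
      exact hL3 t ht
    rw [h1, intervalIntegral.integral_add (II_of_Icc hT hU) (II_of_Icc hT hDint)]
    unfold unserved
    congr 1
    rw [intervalIntegral.integral_finset_sum (fun i _ => hg.1.rII i le_rfl hT le_rfl)]
    exact Finset.sum_congr rfl fun i hi => hg.1.integral_eq hT (Finset.mem_filter.mp hi).2
  have hstrict : ∀ i ∈ D, ∀ j ∈ F, E0 i / P i < E0 j / P j := by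
    intro i hi j hj
    have h := ratio_lt hP hT hg (Finset.mem_filter.mp hi).2
      (not_le.mp (Finset.mem_filter.mp hj).2) (Set.left_mem_Icc.mpr hT)
    simpa [storeLevel, intervalIntegral.integral_same] using h
  have hDFdisj : Disjoint D F := by
    rw [hD, hF]; exact Finset.disjoint_filter_filter_not Finset.univ Finset.univ _
  have hcapEq : ∀ u ∈ Set.Ioi (0:ℝ),
      max 0 ((∑ i ∈ Finset.univ.filter (fun i => u ≤ E0 i / P i), P i) - p)
        = ∑ i ∈ D, Set.indicator (Ioc 0 (E0 i / P i)) (fun _ => P i) u := by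
    intro u hu
    have hu0 : (0:ℝ) < u := hu
    have hrhs : (∑ i ∈ D, Set.indicator (Ioc 0 (E0 i / P i)) (fun _ => P i) u)
        = ∑ i ∈ D.filter (fun i => u ≤ E0 i / P i), P i := by
      rw [Finset.sum_filter (s := D)]
      refine Finset.sum_congr rfl fun i _ => ?_
      by_cases h : u ≤ E0 i / P i <;> simp [Set.indicator_apply, Set.mem_Ioc, hu0, h]
    have hdisj : Disjoint (D.filter (fun i => u ≤ E0 i / P i))
        (F.filter (fun i => u ≤ E0 i / P i)) :=
      Disjoint.mono (Finset.filter_subset _ _) (Finset.filter_subset _ _) hDFdisj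
    have hunion : Finset.univ.filter (fun i => u ≤ E0 i / P i)
        = (D.filter (fun i => u ≤ E0 i / P i)) ∪ (F.filter (fun i => u ≤ E0 i / P i)) := by
      rw [← Finset.filter_union]
      congr 1
      rw [hD, hF, Finset.filter_union_filter_not_eq]
    by_cases hex : ∃ i ∈ D, u ≤ E0 i / P i
    · obtain ⟨i0, hi0, hui0⟩ := hex
      have hFall : F.filter (fun i => u ≤ E0 i / P i) = F :=
        Finset.filter_true_of_mem fun j hj => le_of_lt (lt_of_le_of_lt hui0 (hstrict i0 hi0 j hj))
      rw [hunion, Finset.sum_union hdisj, hFall, hrhs]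
      have hDnn : (0:ℝ) ≤ ∑ i ∈ D.filter (fun i => u ≤ E0 i / P i), P i :=
        Finset.sum_nonneg fun i _ => (hP i).le
      have heq2 : (∑ i ∈ D.filter (fun i => u ≤ E0 i / P i), P i) + (∑ j ∈ F, P j) - p
          = ∑ i ∈ D.filter (fun i => u ≤ E0 i / P i), P i := by rw [hp]; ring
      rw [heq2, max_eq_right hDnn]
    · push_neg at hex
      have hDempty : D.filter (fun i => u ≤ E0 i / P i) = ∅ :=
        Finset.filter_eq_empty_iff.mpr fun i hi => not_le.mpr (hex i hi)
      rw [hunion, Finset.sum_union hdisj, hDempty, Finset.sum_empty, zero_add, hrhs,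
        hDempty, Finset.sum_empty]
      have hFle : (∑ j ∈ F.filter (fun i => u ≤ E0 i / P i), P j) ≤ p := by
        rw [hp]
        exact Finset.sum_le_sum_of_subset_of_nonneg (Finset.filter_subset _ _)
          fun i _ _ => (hP i).le
      exact max_eq_left (by linarith)
  have heSval : (∫ u in Set.Ioi (0:ℝ),
      max 0 ((∑ i ∈ Finset.univ.filter (fun i => u ≤ E0 i / P i), P i) - p))
      = ∑ i ∈ D, E0 i := by
    rw [setIntegral_congr_fun measurableSet_Ioi hcapEq]
    rw [integral_finset_sum D (fun i _ => indic_integrableOn)]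
    refine Finset.sum_congr rfl fun i hi => ?_
    rw [indic_integral (div_nonneg (hE i) (hP i).le), mul_comm,
      div_mul_cancel₀ _ (hP i).ne']
  exact ⟨p, hp0, by rw [heSval]; linarith [hEq]⟩


end GGDDFAux

/-- The minimum over all discharge-only policies of the unserved energy demand
over `[0,T]` equals `max_{p ≥ 0} (e^D_{0,T}(p) − e^S(p))`, and this minimum is
achieved by the GGDDF policy. -/
theorem unserved_minimum_is_transform_gap
    {S : Type*} [Fintype S] (E0 P : S → ℝ) (hE : ∀ i, 0 ≤ E0 i) (hP : ∀ i, 0 < P i)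
    (T : ℝ) (hT : 0 ≤ T)
    (d : ℝ → ℝ) (hd : Measurable d) (hd0 : ∀ t ∈ Icc 0 T, 0 ≤ d t)
    (hdint : IntegrableOn d (Icc 0 T))
    (eS eD : ℝ → ℝ)
    (heS : ∀ p, eS p =
      ∫ u in Set.Ioi (0:ℝ),
        max 0 ((∑ i ∈ Finset.univ.filter (fun i => u ≤ E0 i / P i), P i) - p))
    (heD : ∀ p, eD p = ∫ u in (0:ℝ)..T, max 0 (d u - p)) :
    ∃ M : ℝ,
      IsGreatest {x : ℝ | ∃ p, 0 ≤ p ∧ x = eD p - eS p} M ∧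
      (∀ r : S → ℝ → ℝ, IsPolicy E0 P d T r → M ≤ unserved d T r) ∧
      (∀ r : S → ℝ → ℝ, IsGGDDF E0 P d T r → unserved d T r = M) := by
  classical
  have hCmax0 : (0:ℝ) ≤ ∑ i, P i := Finset.sum_nonneg fun i _ => (hP i).le
  set Cmax := ∑ i, P i with hCmax
  set X := ∑ i, E0 i / P i with hX
  have hX0 : 0 ≤ X := Finset.sum_nonneg fun i _ => div_nonneg (hE i) (hP i).le
  have hEDint : ∀ p : ℝ, IntegrableOn (fun u => max 0 (d u - p)) (Icc 0 T) := fun p =>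
    GGDDFAux.integrableOn_max0 (hdint.sub ((integrableOn_const_iff).mpr (Or.inr measure_Icc_lt_top)))
  have hLipD : ∀ p q : ℝ, |eD p - eD q| ≤ |p - q| * T := by
    intro p q
    rw [heD p, heD q, ← intervalIntegral.integral_sub (GGDDFAux.II_of_Icc hT (hEDint p))
      (GGDDFAux.II_of_Icc hT (hEDint q))]
    have h1 : |∫ u in (0:ℝ)..T, (max 0 (d u - p) - max 0 (d u - q))|
        ≤ ∫ u in (0:ℝ)..T, |max 0 (d u - p) - max 0 (d u - q)| :=
      intervalIntegral.abs_integral_le_integral_abs hT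
    have h2 : (∫ u in (0:ℝ)..T, |max 0 (d u - p) - max 0 (d u - q)|)
        ≤ ∫ _u in (0:ℝ)..T, |p - q| := by
      refine intervalIntegral.integral_mono_on hT
        (GGDDFAux.II_of_Icc hT (((hEDint p).sub (hEDint q)).abs)) intervalIntegrable_const ?_
      intro t _ht
      have h := abs_max_sub_max_le_abs (d t - p) (d t - q) (0:ℝ)
      rw [max_comm (d t - p) 0, max_comm (d t - q) 0] at h
      calc |max 0 (d t - p) - max 0 (d t - q)| ≤ |d t - p - (d t - q)| := h
        _ = |q - p| := by congr 1; ring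
        _ = |p - q| := abs_sub_comm q p
    rw [intervalIntegral.integral_const, smul_eq_mul, sub_zero, mul_comm] at h2
    exact le_trans h1 h2
  have hESint : ∀ p : ℝ, 0 ≤ p → IntegrableOn
      (fun u => max 0 ((∑ i ∈ Finset.univ.filter (fun i => u ≤ E0 i / P i), P i) - p))
      (Set.Ioi 0) := fun p hp => GGDDFAux.cap_integrable E0 hP Finset.univ hp
  have hLipS : ∀ p q : ℝ, 0 ≤ p → 0 ≤ q → |eS p - eS q| ≤ |p - q| * X := by
    intro p q hp hq
    rw [heS p, heS q, ← integral_sub (hESint p hp) (hESint q hq)]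
    have h1 : |∫ u in Set.Ioi (0:ℝ),
          (max 0 ((∑ i ∈ Finset.univ.filter (fun i => u ≤ E0 i / P i), P i) - p)
            - max 0 ((∑ i ∈ Finset.univ.filter (fun i => u ≤ E0 i / P i), P i) - q))|
        ≤ ∫ u in Set.Ioi (0:ℝ),
          |max 0 ((∑ i ∈ Finset.univ.filter (fun i => u ≤ E0 i / P i), P i) - p)
            - max 0 ((∑ i ∈ Finset.univ.filter (fun i => u ≤ E0 i / P i), P i) - q)| := by
      have := norm_integral_le_integral_norm (μ := volume.restrict (Set.Ioi 0))
        (f := fun u => (max 0 ((∑ i ∈ Finset.univ.filter (fun i => u ≤ E0 i / P i), P i) - p)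
          - max 0 ((∑ i ∈ Finset.univ.filter (fun i => u ≤ E0 i / P i), P i) - q)))
      simpa [Real.norm_eq_abs] using this
    have h2 : (∫ u in Set.Ioi (0:ℝ),
          |max 0 ((∑ i ∈ Finset.univ.filter (fun i => u ≤ E0 i / P i), P i) - p)
            - max 0 ((∑ i ∈ Finset.univ.filter (fun i => u ≤ E0 i / P i), P i) - q)|)
        ≤ ∫ u in Set.Ioi (0:ℝ), Set.indicator (Ioc 0 X) (fun _ => |p - q|) u := by
      refine setIntegral_mono_on (((hESint p hp).sub (hESint q hq)).abs)
        GGDDFAux.indic_integrableOn measurableSet_Ioi ?_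
      intro u hu
      by_cases h : u ≤ X
      · rw [Set.indicator_of_mem (Set.mem_Ioc.mpr ⟨hu, h⟩)]
        have h3 := abs_max_sub_max_le_abs
          ((∑ i ∈ Finset.univ.filter (fun i => u ≤ E0 i / P i), P i) - p)
          ((∑ i ∈ Finset.univ.filter (fun i => u ≤ E0 i / P i), P i) - q) (0:ℝ)
        rw [max_comm _ (0:ℝ), max_comm ((∑ i ∈ Finset.univ.filter (fun i => u ≤ E0 i / P i), P i) - q) (0:ℝ)] at h3
        refine le_trans h3 (le_of_eq ?_)
        rw [show (∑ i ∈ Finset.univ.filter (fun i => u ≤ E0 i / P i), P i) - p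
            - ((∑ i ∈ Finset.univ.filter (fun i => u ≤ E0 i / P i), P i) - q) = q - p by ring]
        exact abs_sub_comm q p
      · have hfe : Finset.univ.filter (fun i => u ≤ E0 i / P i) = ∅ := by
          refine Finset.filter_eq_empty_iff.mpr fun i _ => ?_
          push_neg
          have h4 : E0 i / P i ≤ X := by
            rw [hX]
            exact Finset.single_le_sum (f := fun j => E0 j / P j)
              (fun j _ => div_nonneg (hE j) (hP j).le) (Finset.mem_univ i)
          linarith
        rw [Set.indicator_of_notMem (by simp [Set.mem_Ioc, h]), hfe]
        simp only [Finset.sum_empty, zero_sub]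
        rw [max_eq_left (neg_nonpos.mpr hp), max_eq_left (neg_nonpos.mpr hq)]
        simp
    have h3 := le_trans h1 h2
    rwa [GGDDFAux.indic_integral hX0] at h3
  have hESzero : ∀ p : ℝ, Cmax ≤ p → eS p = 0 := by
    intro p hpc
    rw [heS p]
    have hpt : ∀ u ∈ Set.Ioi (0:ℝ),
        max 0 ((∑ i ∈ Finset.univ.filter (fun i => u ≤ E0 i / P i), P i) - p) = (0:ℝ) := by
      intro u _hu
      have h1 : (∑ i ∈ Finset.univ.filter (fun i => u ≤ E0 i / P i), P i) ≤ Cmax := by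
        rw [hCmax]
        exact Finset.sum_le_sum_of_subset_of_nonneg (Finset.filter_subset _ _)
          fun i _ _ => (hP i).le
      exact max_eq_left (by linarith)
    rw [setIntegral_congr_fun measurableSet_Ioi hpt]
    simp
  have hEDmono : ∀ p q : ℝ, p ≤ q → eD q ≤ eD p := by
    intro p q hpq
    rw [heD p, heD q]
    refine intervalIntegral.integral_mono_on hT (GGDDFAux.II_of_Icc hT (hEDint q))
      (GGDDFAux.II_of_Icc hT (hEDint p)) ?_
    intro t _ht
    exact max_le_max le_rfl (by linarith)
  have hlip : LipschitzOnWith (Real.toNNReal (T + X)) (fun p => eD p - eS p) (Icc 0 Cmax) := by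
    refine LipschitzOnWith.of_dist_le_mul ?_
    intro p hp q hq
    rw [Real.dist_eq, Real.dist_eq]
    have h1 := hLipD p q
    have h2 := hLipS p q hp.1 hq.1
    have h3 : |(eD p - eS p) - (eD q - eS q)| ≤ |eD p - eD q| + |eS p - eS q| := by
      rw [show (eD p - eS p) - (eD q - eS q) = (eD p - eD q) - (eS p - eS q) by ring]
      exact abs_sub _ _
    have h5 : (Real.toNNReal (T + X) : ℝ) = T + X := Real.coe_toNNReal _ (by linarith)
    rw [h5]
    have h6 : (T + X) * |p - q| = |p - q| * T + |p - q| * X := by ring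
    linarith
  obtain ⟨phat, hphatmem, hphatmax⟩ :=
    isCompact_Icc.exists_isMaxOn (Set.nonempty_Icc.mpr hCmax0) hlip.continuousOn
  have hub : ∀ p : ℝ, 0 ≤ p → eD p - eS p ≤ eD phat - eS phat := by
    intro p hp0
    rcases le_total p Cmax with h | h
    · exact hphatmax ⟨hp0, h⟩
    · have h1 : eD p - eS p ≤ eD Cmax - eS Cmax := by
        rw [hESzero p h, hESzero Cmax le_rfl]
        have := hEDmono Cmax p h
        linarith
      exact le_trans h1 (hphatmax ⟨hCmax0, le_rfl⟩)
  have hlow : ∀ r : S → ℝ → ℝ, IsPolicy E0 P d T r → eD phat - eS phat ≤ unserved d T r := by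
    intro r hr
    have h := GGDDFAux.lower_bound hP hE hT hdint hr (p := phat) hphatmem.1
    rw [← heD phat, ← heS phat] at h
    exact h
  refine ⟨eD phat - eS phat, ⟨⟨phat, hphatmem.1, rfl⟩, ?_⟩, hlow, ?_⟩
  · rintro x ⟨p, hp0, rfl⟩
    exact hub p hp0
  · intro r hg
    obtain ⟨p, hp0, heq⟩ := GGDDFAux.ggddf_eq hP hE hT hd0 hdint hg
    rw [← heD p, ← heS p] at heq
    rw [heq]
    exact le_antisymm (hub p hp0) (by rw [← heq]; exact hlow r hg.1)
end

section
/- Under the GGDDF policy, for every p ≥ 0 and almost every time t, the time-derivative of the storage energy-power transform satisfies (d/dt) e^S_t(p) ≤ min(0, p − d̄(t)), where d̄(t) is the total rate at which demand is served at time t, with equality whenever p lies in the set π(t) of cumulative power levels at which the ordered discharge-durations strictly decrease. -/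
open MeasureTheory Set Finset
open scoped Classical

section GgddfAux
open Filter Metric Asymptotics
open scoped Topology ENNReal

set_option linter.unusedSectionVars false in
lemma ggddf_telescope {S : Type*} [Fintype S] {κ : Type*} [LinearOrder κ] (P : S → ℝ) (φ : ℝ → ℝ) :
    ∀ (B : Finset S) (k : S → κ), Set.InjOn k B →
    ∑ i ∈ B, (φ ((∑ j ∈ B.filter (fun j => k i < k j), P j) + P i)
      - φ (∑ j ∈ B.filter (fun j => k i < k j), P j))
    = φ (∑ j ∈ B, P j) - φ 0 := by
  intro B
  induction B using Finset.strongInduction with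
  | _ B ih =>
    intro k hk
    rcases B.eq_empty_or_nonempty with rfl | hne
    · simp
    · obtain ⟨i0, hi0B, hmin⟩ := B.exists_min_image k hne
      have hfe : ∀ i ∈ B.erase i0,
          B.filter (fun j => k i < k j) = (B.erase i0).filter (fun j => k i < k j) := by
        intro i hi
        rw [Finset.filter_erase, Finset.erase_eq_of_notMem]
        intro hmem
        exact absurd ((Finset.mem_filter.1 hmem).2) (not_lt.2 (hmin i (Finset.mem_of_mem_erase hi)))
      have hfi0 : B.filter (fun j => k i0 < k j) = B.erase i0 := by
        ext j
        simp only [Finset.mem_filter, Finset.mem_erase]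
        constructor
        · rintro ⟨hj, hlt⟩; exact ⟨fun h => absurd (h ▸ hlt) (lt_irrefl _), hj⟩
        · rintro ⟨hne', hj⟩
          refine ⟨hj, lt_of_le_of_ne (hmin j hj) ?_⟩
          intro heq; exact hne' (hk hj hi0B heq.symm)
      rw [← Finset.add_sum_erase _ _ hi0B]
      have hsum : ∑ i ∈ B.erase i0,
          (φ ((∑ j ∈ B.filter (fun j => k i < k j), P j) + P i)
            - φ (∑ j ∈ B.filter (fun j => k i < k j), P j))
          = ∑ i ∈ B.erase i0,
          (φ ((∑ j ∈ (B.erase i0).filter (fun j => k i < k j), P j) + P i)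
            - φ (∑ j ∈ (B.erase i0).filter (fun j => k i < k j), P j)) := by
        refine Finset.sum_congr rfl fun i hi => by rw [hfe i hi]
      rw [hsum, ih (B.erase i0) (Finset.erase_ssubset hi0B) k
        (hk.mono (Finset.coe_subset.2 (Finset.erase_subset _ _))), hfi0,
        ← Finset.sum_erase_add B P hi0B]
      ring

/-- Tie-broken key used to order stores by residual duration. -/
def ggddfKey {S : Type*} (x : S → ℝ) (idx : S → ℕ) (i : S) : ℝ ×ₗ ℕ := toLex (x i, idx i)

lemma ggddfKey_lt_of_lt {S : Type*} {x : S → ℝ} {idx : S → ℕ} {i j : S} (h : x i < x j) :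
    ggddfKey x idx i < ggddfKey x idx j := by
  rw [ggddfKey, ggddfKey, Prod.Lex.lt_iff]; exact Or.inl h

lemma le_of_ggddfKey_lt {S : Type*} {x : S → ℝ} {idx : S → ℕ} {i j : S}
    (h : ggddfKey x idx i < ggddfKey x idx j) : x i ≤ x j := by
  rw [ggddfKey, ggddfKey, Prod.Lex.lt_iff] at h
  rcases h with h | ⟨h, _⟩
  · exact h.le
  · exact h.le

lemma ggddfKey_injective {S : Type*} {x : S → ℝ} {idx : S → ℕ} (hidx : Function.Injective idx) :
    Function.Injective (ggddfKey x idx) := by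
  intro i j h
  rw [ggddfKey, ggddfKey] at h
  have := congrArg (fun z : ℝ ×ₗ ℕ => (ofLex z).2) h
  exact hidx this

/-- Cumulative power strictly above store `i` in the key order. -/
noncomputable def ggddfCum {S : Type*} [Fintype S] (P x : S → ℝ) (idx : S → ℕ) (i : S) : ℝ :=
  ∑ j ∈ Finset.univ.filter (fun j => ggddfKey x idx i < ggddfKey x idx j), P j

lemma ggddfCum_nonneg {S : Type*} [Fintype S] {P x : S → ℝ} (hP : ∀ i, 0 < P i)
    {idx : S → ℕ} {i : S} : 0 ≤ ggddfCum P x idx i :=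
  Finset.sum_nonneg fun j _ => (hP j).le

lemma ggddf_pointwise {S : Type*} [Fintype S] (P : S → ℝ) (x : S → ℝ) (idx : S → ℕ)
    (hidx : Function.Injective idx) {p : ℝ} (hp : 0 ≤ p) (u : ℝ) :
    max 0 ((∑ i ∈ Finset.univ.filter (fun i => u ≤ x i), P i) - p)
    = ∑ i, (if u ≤ x i then
        (max 0 (ggddfCum P x idx i + P i - p) - max 0 (ggddfCum P x idx i - p)) else 0) := by
  classical
  rw [← Finset.sum_filter]
  set B := Finset.univ.filter (fun i => u ≤ x i) with hB
  have hcum : ∀ i ∈ B, ggddfCum P x idx i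
      = ∑ j ∈ B.filter (fun j => ggddfKey x idx i < ggddfKey x idx j), P j := by
    intro i hi
    rw [ggddfCum]
    refine Finset.sum_congr ?_ (fun _ _ => rfl)
    ext j
    simp only [Finset.mem_filter, Finset.mem_univ, true_and, hB]
    constructor
    · intro hj
      exact ⟨le_trans (Finset.mem_filter.1 hi).2 (le_of_ggddfKey_lt hj), hj⟩
    · exact fun h => h.2
  have hT := ggddf_telescope P (fun a => max 0 (a - p)) B (ggddfKey x idx)
    (Function.Injective.injOn (ggddfKey_injective hidx))
  rw [show max 0 ((0:ℝ) - p) = 0 from by simp [hp]] at hT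
  rw [← sub_zero (max 0 ((∑ i ∈ B, P i) - p)), ← hT]
  refine (Finset.sum_congr rfl fun i hi => ?_).symm
  rw [hcum i hi]

set_option linter.unusedSectionVars false in
lemma ggddf_transform_eq {S : Type*} [Fintype S] (P : S → ℝ) (hP : ∀ i, 0 < P i)
    (x : S → ℝ) (hx : ∀ i, 0 ≤ x i)
    (idx : S → ℕ) (hidx : Function.Injective idx) {p : ℝ} (hp : 0 ≤ p) :
    ∫ u in Set.Ioi (0:ℝ), max 0 ((∑ i ∈ Finset.univ.filter (fun i => u ≤ x i), P i) - p)
    = ∑ i, x i * (max 0 (ggddfCum P x idx i + P i - p) - max 0 (ggddfCum P x idx i - p)) := by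
  have h1 : ∀ i : S, (fun u : ℝ => (if u ≤ x i then
        (max 0 (ggddfCum P x idx i + P i - p) - max 0 (ggddfCum P x idx i - p)) else 0))
      = (Set.Iic (x i)).indicator (fun _ =>
        (max 0 (ggddfCum P x idx i + P i - p) - max 0 (ggddfCum P x idx i - p))) := by
    intro i; funext u
    simp [Set.indicator_apply, Set.mem_Iic]
  have hmeas : ∀ a : ℝ, 0 ≤ a → (volume.restrict (Set.Ioi (0:ℝ))) (Set.Iic a) = ENNReal.ofReal a := by
    intro a _
    rw [Measure.restrict_apply measurableSet_Iic, Set.Iic_inter_Ioi, Real.volume_Ioc, sub_zero]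
  have hint : ∀ i : S, Integrable ((Set.Iic (x i)).indicator (fun _ =>
        (max 0 (ggddfCum P x idx i + P i - p) - max 0 (ggddfCum P x idx i - p))))
      (volume.restrict (Set.Ioi (0:ℝ))) := by
    intro i
    rw [integrable_indicator_iff measurableSet_Iic]
    refine integrableOn_const ?_
    rw [hmeas _ (hx i)]
    exact ENNReal.ofReal_ne_top
  calc ∫ u in Set.Ioi (0:ℝ), max 0 ((∑ i ∈ Finset.univ.filter (fun i => u ≤ x i), P i) - p)
      = ∫ u in Set.Ioi (0:ℝ), ∑ i, (if u ≤ x i then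
          (max 0 (ggddfCum P x idx i + P i - p) - max 0 (ggddfCum P x idx i - p)) else 0) := by
        refine integral_congr_ae (Filter.Eventually.of_forall fun u => ?_)
        exact ggddf_pointwise P x idx hidx hp u
    _ = ∑ i, ∫ u in Set.Ioi (0:ℝ), (if u ≤ x i then
          (max 0 (ggddfCum P x idx i + P i - p) - max 0 (ggddfCum P x idx i - p)) else 0) := by
        simp_rw [h1]
        exact integral_finset_sum _ (fun i _ => hint i)
    _ = ∑ i, x i * (max 0 (ggddfCum P x idx i + P i - p) - max 0 (ggddfCum P x idx i - p)) := by
        refine Finset.sum_congr rfl fun i _ => ?_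
        rw [h1 i, integral_indicator_const _ measurableSet_Iic, measureReal_def, hmeas _ (hx i),
          ENNReal.toReal_ofReal (hx i), smul_eq_mul]

lemma ggddf_fiber_sum {S : Type*} [Fintype S] (P : S → ℝ) (idx : S → ℕ)
    (hidx : Function.Injective idx)
    (x0 x : S → ℝ) (hsep : ∀ i j, x0 i < x0 j → x i < x j) (φ : ℝ → ℝ) (v : ℝ) :
    ∑ i ∈ Finset.univ.filter (fun i => x0 i = v),
        (φ (ggddfCum P x idx i + P i) - φ (ggddfCum P x idx i))
    = φ ((∑ j ∈ Finset.univ.filter (fun j => v < x0 j), P j)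
          + ∑ j ∈ Finset.univ.filter (fun j => x0 j = v), P j)
      - φ (∑ j ∈ Finset.univ.filter (fun j => v < x0 j), P j) := by
  classical
  set V := Finset.univ.filter (fun i => x0 i = v) with hV
  set Bv := ∑ j ∈ Finset.univ.filter (fun j => v < x0 j), P j with hBv
  have hsplit : ∀ i ∈ V, ggddfCum P x idx i
      = Bv + ∑ j ∈ V.filter (fun j => ggddfKey x idx i < ggddfKey x idx j), P j := by
    intro i hi
    have hx0i : x0 i = v := (Finset.mem_filter.1 hi).2
    have hset : Finset.univ.filter (fun j => ggddfKey x idx i < ggddfKey x idx j)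
        = (Finset.univ.filter (fun j => v < x0 j))
          ∪ (V.filter (fun j => ggddfKey x idx i < ggddfKey x idx j)) := by
      ext j
      simp only [Finset.mem_filter, Finset.mem_univ, true_and, Finset.mem_union, hV]
      constructor
      · intro hj
        rcases lt_trichotomy (x0 j) v with hlt | heq | hgt
        · exfalso
          have : x j < x i := hsep j i (by rw [hx0i]; exact hlt)
          exact absurd hj (not_lt.2 (le_of_lt (ggddfKey_lt_of_lt this)))
        · exact Or.inr ⟨heq, hj⟩
        · exact Or.inl hgt
      · rintro (hgt | ⟨_, hj⟩)
        · exact ggddfKey_lt_of_lt (hsep i j (by rw [hx0i]; exact hgt))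
        · exact hj
    have hdisj : Disjoint (Finset.univ.filter (fun j => v < x0 j))
        (V.filter (fun j => ggddfKey x idx i < ggddfKey x idx j)) := by
      rw [Finset.disjoint_left]
      intro a ha ha'
      have h1 : v < x0 a := (Finset.mem_filter.1 ha).2
      have h2 : x0 a = v := (Finset.mem_filter.1 (Finset.mem_of_mem_filter a ha')).2
      exact absurd (h2 ▸ h1) (lt_irrefl v)
    rw [ggddfCum, hset, Finset.sum_union hdisj]
  have hT := ggddf_telescope P (fun a => φ (Bv + a)) V (ggddfKey x idx)
    (Function.Injective.injOn (ggddfKey_injective hidx))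
  simp only [add_zero] at hT
  calc ∑ i ∈ V, (φ (ggddfCum P x idx i + P i) - φ (ggddfCum P x idx i))
      = ∑ i ∈ V, ((fun a => φ (Bv + a)) ((∑ j ∈ V.filter
            (fun j => ggddfKey x idx i < ggddfKey x idx j), P j) + P i)
          - (fun a => φ (Bv + a)) (∑ j ∈ V.filter
            (fun j => ggddfKey x idx i < ggddfKey x idx j), P j)) := by
        refine Finset.sum_congr rfl fun i hi => ?_
        rw [hsplit i hi]; ring_nf
    _ = φ (Bv + ∑ j ∈ V, P j) - φ Bv := hT

lemma ggddf_class_sum {S : Type*} [Fintype S] (P : S → ℝ) (idx : S → ℕ)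
    (hidx : Function.Injective idx)
    (x0 : S → ℝ) (w : S → ℝ) (hw : ∀ i j, x0 i = x0 j → w i = w j) (φ : ℝ → ℝ)
    (x x' : S → ℝ) (hsep : ∀ i j, x0 i < x0 j → x i < x j)
    (hsep' : ∀ i j, x0 i < x0 j → x' i < x' j) :
    ∑ i, w i * (φ (ggddfCum P x idx i + P i) - φ (ggddfCum P x idx i))
    = ∑ i, w i * (φ (ggddfCum P x' idx i + P i) - φ (ggddfCum P x' idx i)) := by
  classical
  have hfib : ∀ (y : S → ℝ),
      ∑ i, w i * (φ (ggddfCum P y idx i + P i) - φ (ggddfCum P y idx i))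
      = ∑ v ∈ Finset.univ.image x0, ∑ i ∈ Finset.univ.filter (fun i => x0 i = v),
          w i * (φ (ggddfCum P y idx i + P i) - φ (ggddfCum P y idx i)) := by
    intro y
    exact (Finset.sum_fiberwise_of_maps_to
      (fun i _ => Finset.mem_image_of_mem x0 (Finset.mem_univ i)) _).symm
  rw [hfib x, hfib x']
  refine Finset.sum_congr rfl fun v hv => ?_
  obtain ⟨i0, _, hi0⟩ := Finset.mem_image.1 hv
  have hinner : ∀ (y : S → ℝ), (∀ i j, x0 i < x0 j → y i < y j) →
      ∑ i ∈ Finset.univ.filter (fun i => x0 i = v),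
          w i * (φ (ggddfCum P y idx i + P i) - φ (ggddfCum P y idx i))
      = w i0 * (φ ((∑ j ∈ Finset.univ.filter (fun j => v < x0 j), P j)
          + ∑ j ∈ Finset.univ.filter (fun j => x0 j = v), P j)
        - φ (∑ j ∈ Finset.univ.filter (fun j => v < x0 j), P j)) := by
    intro y hy
    have hcongr : ∑ i ∈ Finset.univ.filter (fun i => x0 i = v),
        w i * (φ (ggddfCum P y idx i + P i) - φ (ggddfCum P y idx i))
        = ∑ i ∈ Finset.univ.filter (fun i => x0 i = v),
        w i0 * (φ (ggddfCum P y idx i + P i) - φ (ggddfCum P y idx i)) := by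
      refine Finset.sum_congr rfl fun i hi => ?_
      have : x0 i = x0 i0 := by rw [(Finset.mem_filter.1 hi).2, hi0]
      rw [hw i i0 this]
    rw [hcongr, ← Finset.mul_sum, ggddf_fiber_sum P idx hidx x0 y hy φ v]
  rw [hinner x hsep, hinner x' hsep']

lemma ggddf_ae_hasDerivAt_primitive (f : ℝ → ℝ) (hf : Integrable f volume) :
    ∀ᵐ t ∂(volume : Measure ℝ), HasDerivAt (fun τ => ∫ v in (0:ℝ)..τ, f v) (f t) t := by
  filter_upwards [IsUnifLocDoublingMeasure.ae_tendsto_average_norm_sub (μ := volume)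
    (hf.locallyIntegrable) 1] with t ht
  have havg : Tendsto (fun ρ : ℝ => ⨍ y in closedBall t ρ, ‖f y - f t‖) (𝓝[>] 0) (𝓝 0) := by
    refine ht (fun _ : ℝ => t) id tendsto_id ?_
    filter_upwards [self_mem_nhdsWithin] with ρ (hρ : (0:ℝ) < ρ)
    exact mem_closedBall_self (by simp only [id]; linarith)
  rw [hasDerivAt_iff_isLittleO, isLittleO_iff]
  intro ε hε
  have h2 : ∀ᶠ ρ in 𝓝[>] (0:ℝ), (⨍ y in closedBall t ρ, ‖f y - f t‖) < ε / 2 :=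
    havg.eventually_lt_const (by positivity)
  rw [eventually_nhdsWithin_iff] at h2
  obtain ⟨δ0, hδ0, hball⟩ := Metric.eventually_nhds_iff.1 h2
  rw [Metric.eventually_nhds_iff]
  refine ⟨δ0, hδ0, fun τ hτ => ?_⟩
  rcases eq_or_ne τ t with rfl | hne
  · simp
  · set ρ := |τ - t| with hρdef
    have hρpos : 0 < ρ := abs_pos.2 (sub_ne_zero.2 hne)
    have hρδ : ρ < δ0 := by simpa [Real.dist_eq] using hτ
    have havgρ : (⨍ y in closedBall t ρ, ‖f y - f t‖) < ε / 2 := by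
      refine hball (by simpa [Real.dist_eq, abs_of_pos hρpos] using hρδ) hρpos
    have hii : ∀ a b : ℝ, IntervalIntegrable f volume a b := fun a b => hf.intervalIntegrable
    have hk1 : (∫ v in (0:ℝ)..τ, f v) - (∫ v in (0:ℝ)..t, f v) = ∫ v in t..τ, f v :=
      intervalIntegral.integral_interval_sub_left (hii 0 τ) (hii 0 t)
    have hk2 : (∫ v in t..τ, (f v - f t)) = (∫ v in t..τ, f v) - (τ - t) • f t := by
      rw [intervalIntegral.integral_sub (hii t τ) intervalIntegrable_const,
        intervalIntegral.integral_const]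
    have hkey : ((∫ v in (0:ℝ)..τ, f v) - (∫ v in (0:ℝ)..t, f v)) - (τ - t) • f t
        = ∫ v in t..τ, (f v - f t) := by
      rw [hk2, hk1]
    rw [hkey]
    have hb1 : ‖∫ v in t..τ, (f v - f t)‖ ≤ ∫ v in Set.uIoc t τ, ‖f v - f t‖ :=
      intervalIntegral.norm_integral_le_integral_norm_uIoc
    have habs : |τ - t| ≤ ρ := le_of_eq rfl
    have hτub : τ ≤ t + ρ := by cases abs_le.1 habs; linarith
    have hτlb : t - ρ ≤ τ := by cases abs_le.1 habs; linarith
    have hsub : Set.uIoc t τ ⊆ closedBall t ρ := by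
      refine subset_trans Set.uIoc_subset_uIcc ?_
      rw [Real.closedBall_eq_Icc, Set.uIcc]
      refine Set.Icc_subset_Icc (le_inf (by linarith) hτlb) (sup_le (by linarith) hτub)
    have hint : IntegrableOn (fun v => ‖f v - f t‖) (closedBall t ρ) volume := by
      refine (Integrable.sub hf.integrableOn ?_).norm
      exact integrableOn_const measure_closedBall_lt_top.ne
    have hb2 : ∫ v in Set.uIoc t τ, ‖f v - f t‖ ≤ ∫ v in closedBall t ρ, ‖f v - f t‖ := by
      refine setIntegral_mono_set hint ?_ (HasSubset.Subset.eventuallyLE hsub)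
      filter_upwards with v using norm_nonneg _
    have hvol : (volume (closedBall t ρ)).toReal = 2 * ρ := by
      rw [Real.volume_closedBall]
      rw [ENNReal.toReal_ofReal (by linarith)]
    have hb3 : ∫ v in closedBall t ρ, ‖f v - f t‖
        = (2 * ρ) * ⨍ y in closedBall t ρ, ‖f y - f t‖ := by
      rw [setAverage_eq, smul_eq_mul, measureReal_def, hvol, ← mul_assoc, mul_inv_cancel₀ (by linarith), one_mul]
    have hfin : ‖∫ v in t..τ, (f v - f t)‖ ≤ (2 * ρ) * (ε / 2) := by
      refine le_trans hb1 (le_trans hb2 ?_)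
      rw [hb3]
      exact mul_le_mul_of_nonneg_left havgρ.le (by linarith)
    calc ‖∫ v in t..τ, (f v - f t)‖ ≤ (2 * ρ) * (ε / 2) := hfin
      _ = ε * ρ := by ring
      _ = ε * ‖τ - t‖ := by rw [hρdef]; norm_num

lemma ggddf_ae_tie (g h : ℝ → ℝ) (hgc : Continuous g) (hhc : Continuous h) :
    ∀ᵐ t ∂(volume : Measure ℝ), ∀ a b : ℝ,
      g t = h t → HasDerivAt g a t → HasDerivAt h b t → a = b := by
  set Z : Set ℝ := {τ | g τ = h τ} with hZdef
  have hZ : MeasurableSet Z := (isClosed_eq hgc hhc).measurableSet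
  filter_upwards [Besicovitch.ae_tendsto_measure_inter_div_of_measurableSet volume hZ]
    with t ht a b heq hga hhb
  have htZ : t ∈ Z := heq
  rw [Set.indicator_of_mem htZ] at ht
  have hacc : t ∈ closure (Z \ {t}) := by
    by_contra hc
    rw [Metric.mem_closure_iff] at hc
    push_neg at hc
    obtain ⟨ε, hε, hfar⟩ := hc
    have hzero : ∀ᶠ ρ in 𝓝[>] (0:ℝ),
        volume (Z ∩ closedBall t ρ) / volume (closedBall t ρ) = 0 := by
      filter_upwards [Ioo_mem_nhdsGT_of_mem (Set.left_mem_Ico.2 hε)] with ρ hρ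
      have hsub : Z ∩ closedBall t ρ ⊆ {t} := by
        rintro y ⟨hyZ, hyB⟩
        by_contra hyne
        refine absurd (hfar y ⟨hyZ, hyne⟩) (not_le.2 ?_)
        rw [dist_comm]
        calc dist y t ≤ ρ := mem_closedBall.1 hyB
          _ < ε := hρ.2
      have hnull : volume (Z ∩ closedBall t ρ) = 0 :=
        measure_mono_null hsub (by simp)
      rw [hnull, ENNReal.zero_div]
    have h0 : Tendsto (fun ρ => volume (Z ∩ closedBall t ρ) / volume (closedBall t ρ))
        (𝓝[>] (0:ℝ)) (𝓝 0) := by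
      rw [tendsto_congr' hzero]; exact tendsto_const_nhds
    have := tendsto_nhds_unique ht h0
    simp at this
  have hF : (𝓝[Z \ {t}] t).NeBot := mem_closure_iff_nhdsWithin_neBot.1 hacc
  have hd : HasDerivAt (fun τ => g τ - h τ) (a - b) t := hga.sub hhb
  have hs : Tendsto (slope (fun τ => g τ - h τ) t) (𝓝[Z \ {t}] t) (𝓝 (a - b)) :=
    (hasDerivAt_iff_tendsto_slope.1 hd).mono_left
      (nhdsWithin_mono t (fun y hy => hy.2))
  have h0' : slope (fun τ => g τ - h τ) t =ᶠ[𝓝[Z \ {t}] t] (fun _ => (0:ℝ)) := by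
    filter_upwards [self_mem_nhdsWithin] with y hy
    have hyZ : g y = h y := hy.1
    simp [slope_def_field, hyZ, heq]
  have hs0 : Tendsto (slope (fun τ => g τ - h τ) t) (𝓝[Z \ {t}] t) (𝓝 0) := by
    rw [tendsto_congr' h0']; exact tendsto_const_nhds
  have := tendsto_nhds_unique hs hs0
  linarith [this]

lemma ggddf_G_bound (a Q p : ℝ) (hQ : 0 ≤ Q) : |max 0 (a + Q - p) - max 0 (a - p)| ≤ Q := by
  have h1 : |max (a + Q - p) 0 - max (a - p) 0| ≤ |(a + Q - p) - (a - p)| :=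
    abs_max_sub_max_le_abs _ _ _
  rw [max_comm (0:ℝ) (a + Q - p), max_comm (0:ℝ) (a - p)]
  calc |max (a + Q - p) 0 - max (a - p) 0| ≤ |(a + Q - p) - (a - p)| := h1
    _ = Q := by rw [show (a + Q - p) - (a - p) = Q by ring, abs_of_nonneg hQ]

lemma ggddf_min_max (a p : ℝ) : a - max 0 (a - p) = min a p := by
  rcases le_total a p with h | h
  · rw [max_eq_left (by linarith), min_eq_left h]; ring
  · rw [max_eq_right (by linarith), min_eq_right h]; ring

end GgddfAux

/-- The energy-power transform of the residual stored-energy configuration at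
time `t`. -/
noncomputable def eSt {S : Type*} [Fintype S] (E0 P : S → ℝ) (r : S → ℝ → ℝ)
    (t p : ℝ) : ℝ :=
  ∫ u in Set.Ioi (0:ℝ),
    max 0 ((∑ i ∈ Finset.univ.filter
      (fun i => u ≤ storeLevel E0 r i t / P i), P i) - p)

/-- The breakpoint set `π(t)`: `0`, together with the cumulative power levels
`Σ_{i : E_i(t)/P_i ≥ E_j(t)/P_j} P_i` over stores `j` of positive residual
discharge-duration (this includes the total power when no store is empty). -/
noncomputable def piSet {S : Type*} [Fintype S] (E0 P : S → ℝ) (r : S → ℝ → ℝ)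
    (t : ℝ) : Finset ℝ :=
  insert 0
    ((Finset.univ.filter (fun j => 0 < storeLevel E0 r j t / P j)).image
      (fun j => ∑ i ∈ Finset.univ.filter
        (fun i => storeLevel E0 r j t / P j ≤ storeLevel E0 r i t / P i), P i))

/-- Under the GGDDF policy, for almost every time `t` and every `p ≥ 0` the
time-derivative of the storage energy-power transform satisfies
`(d/dt) e^S_t(p) ≤ min(0, p − d̄(t))`, with equality whenever `p ∈ π(t)`. -/
theorem ggddf_transform_derivative
    {S : Type*} [Fintype S] (E0 P : S → ℝ) (hE : ∀ i, 0 ≤ E0 i) (hP : ∀ i, 0 < P i)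
    (T : ℝ) (hT : 0 ≤ T)
    (d : ℝ → ℝ) (hd : Measurable d) (hd0 : ∀ t ∈ Icc 0 T, 0 ≤ d t)
    (r : S → ℝ → ℝ) (hr : IsGGDDF E0 P d T r) :
    ∀ᵐ t ∂(volume.restrict (Ioo 0 T)),
      ∀ p, 0 ≤ p → ∃ D : ℝ,
        HasDerivAt (fun τ => eSt E0 P r τ p) D t ∧
        D ≤ min 0 (p - ∑ i, r i t) ∧
        (p ∈ piSet E0 P r t → D = min 0 (p - ∑ i, r i t)) := by
  classical
  obtain ⟨⟨hrmeas, hrbound, hrd, hlevel⟩, hgg⟩ := hr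
  set idx : S → ℕ := fun i => ((Fintype.equivFin S) i : ℕ) with hidxdef
  have hidx : Function.Injective idx := fun a b hab =>
    (Fintype.equivFin S).injective (Fin.val_injective hab)
  set f : S → ℝ → ℝ := fun i => (Set.Icc (0:ℝ) T).indicator (r i) with hfdef
  have hfb : ∀ i v, ‖f i v‖ ≤ (Set.Icc (0:ℝ) T).indicator (fun _ => P i) v := by
    intro i v
    by_cases hv : v ∈ Set.Icc (0:ℝ) T
    · rw [hfdef]
      simp only [Set.indicator_of_mem hv]
      rw [Real.norm_eq_abs, abs_of_nonneg (hrbound i v hv).1]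
      exact (hrbound i v hv).2
    · simp [hfdef, Set.indicator_of_notMem hv]
  have hfint : ∀ i, Integrable (f i) volume := by
    intro i
    refine Integrable.mono' ?_
      (((hrmeas i).indicator measurableSet_Icc).aestronglyMeasurable)
      (Filter.Eventually.of_forall (hfb i))
    exact (integrable_indicator_iff measurableSet_Icc).2
      (integrableOn_const measure_Icc_lt_top.ne)
  set X : S → ℝ → ℝ := fun i τ => (E0 i - ∫ v in (0:ℝ)..τ, f i v) / P i with hXdef
  have hXcont : ∀ i, Continuous (X i) := fun i =>
    (continuous_const.sub (intervalIntegral.continuous_primitive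
      (fun a b => (hfint i).intervalIntegrable) 0)).div_const _
  have hXeq : ∀ τ ∈ Set.Icc (0:ℝ) T, ∀ i, storeLevel E0 r i τ / P i = X i τ := by
    intro τ hτ i
    rw [hXdef, storeLevel]
    have : (∫ v in (0:ℝ)..τ, r i v) = ∫ v in (0:ℝ)..τ, f i v := by
      refine intervalIntegral.integral_congr (fun v hv => ?_)
      rw [Set.uIcc_of_le hτ.1] at hv
      simp only [hfdef]
      have hm : v ∈ Set.Icc (0:ℝ) T := ⟨hv.1, le_trans hv.2 hτ.2⟩
      exact (Set.indicator_of_mem hm (r i)).symm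
    rw [this]
  have hae1 : ∀ᵐ t ∂(volume : Measure ℝ),
      ∀ i, HasDerivAt (fun τ => ∫ v in (0:ℝ)..τ, f i v) (f i t) t :=
    Filter.eventually_all.2 (fun i => ggddf_ae_hasDerivAt_primitive (f i) (hfint i))
  have hae2 : ∀ᵐ t ∂(volume : Measure ℝ), ∀ i j : S, ∀ a b : ℝ,
      X i t = X j t → HasDerivAt (X i) a t → HasDerivAt (X j) b t → a = b := by
    rw [Filter.eventually_all]
    intro i
    rw [Filter.eventually_all]
    intro j
    exact ggddf_ae_tie (X i) (X j) (hXcont i) (hXcont j)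
  filter_upwards [ae_restrict_of_ae hae1, ae_restrict_of_ae hae2,
    ae_restrict_mem measurableSet_Ioo] with t ht1 ht2 htIoo
  have htIcc : t ∈ Set.Icc (0:ℝ) T := ⟨htIoo.1.le, htIoo.2.le⟩
  set y : S → ℝ := fun i => -(r i t) / P i with hydef
  have hfr : ∀ i, f i t = r i t := fun i => Set.indicator_of_mem htIcc _
  have hder : ∀ i, HasDerivAt (X i) (y i) t := by
    intro i
    have h1 : HasDerivAt (fun τ => E0 i - ∫ v in (0:ℝ)..τ, f i v) (-(f i t)) t :=
      (ht1 i).const_sub (E0 i)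
    have h2 := h1.div_const (P i)
    rw [hfr i] at h2
    exact h2
  have htie : ∀ i j, X i t = X j t → y i = y j :=
    fun i j h => ht2 i j _ _ h (hder i) (hder j)
  intro p hp
  set x0 : S → ℝ := fun i => X i t with hx0def
  set cA : S → ℝ := ggddfCum P x0 idx with hcAdef
  set G : S → ℝ := fun i => max 0 (cA i + P i - p) - max 0 (cA i - p) with hGdef
  set D : ℝ := ∑ i, y i * G i with hDdef
  have hx0nn : ∀ τ ∈ Set.Icc (0:ℝ) T, ∀ i, 0 ≤ X i τ := by
    intro τ hτ i
    rw [← hXeq τ hτ i]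
    exact div_nonneg (hlevel i τ hτ) (hP i).le
  -- closed form for the transform
  have hclosed : ∀ τ ∈ Set.Icc (0:ℝ) T, eSt E0 P r τ p
      = ∑ i, X i τ * (max 0 (ggddfCum P (fun j => X j τ) idx i + P i - p)
          - max 0 (ggddfCum P (fun j => X j τ) idx i - p)) := by
    intro τ hτ
    rw [eSt]
    simp only [hXeq τ hτ]
    exact ggddf_transform_eq P hP (fun j => X j τ) (fun j => hx0nn τ hτ j) idx hidx hp
  -- Part 1 : derivative
  have hderiv : HasDerivAt (fun τ => eSt E0 P r τ p) D t := by
    have hIooev : ∀ᶠ τ in nhds t, τ ∈ Set.Ioo (0:ℝ) T :=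
      Filter.eventually_of_mem (isOpen_Ioo.mem_nhds htIoo) (fun τ h => h)
    have hpair : ∀ ij : S × S, ∀ᶠ τ in nhds t,
        (X ij.1 t < X ij.2 t → X ij.1 τ < X ij.2 τ) := by
      rintro ⟨i, j⟩
      by_cases hlt : X i t < X j t
      · have hc : Filter.Tendsto (fun τ => X j τ - X i τ) (nhds t)
            (nhds (X j t - X i t)) := ((hXcont j).sub (hXcont i)).continuousAt
        have := hc.eventually_const_lt (sub_pos.2 hlt)
        exact this.mono (fun τ hτ _ => sub_pos.1 hτ)
      · exact Filter.Eventually.of_forall (fun τ h => absurd h hlt)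
    have hev : ∀ᶠ τ in nhds t, τ ∈ Set.Ioo (0:ℝ) T ∧
        ∀ i j : S, X i t < X j t → X i τ < X j τ := by
      refine hIooev.and ?_
      refine (Filter.eventually_all.2 hpair).mono (fun τ h i j => h (i, j))
    rw [hasDerivAt_iff_isLittleO]
    -- the eventual identity
    have hEE : ∀ᶠ τ in nhds t,
        eSt E0 P r τ p - eSt E0 P r t p - (τ - t) • D
        = ∑ i, (X i τ - X i t - (τ - t) * y i)
            * (max 0 (ggddfCum P (fun j => X j τ) idx i + P i - p)
              - max 0 (ggddfCum P (fun j => X j τ) idx i - p)) := by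
      filter_upwards [hev] with τ hτ
      obtain ⟨hτIoo, hsep⟩ := hτ
      have hτIcc : τ ∈ Set.Icc (0:ℝ) T := ⟨hτIoo.1.le, hτIoo.2.le⟩
      have h1 := hclosed τ hτIcc
      have h2 := hclosed t htIcc
      have h3 : ∑ i, (X i t + (τ - t) * y i)
            * ((fun a => max 0 (a - p)) (ggddfCum P (fun j => X j τ) idx i + P i)
              - (fun a => max 0 (a - p)) (ggddfCum P (fun j => X j τ) idx i))
          = ∑ i, (X i t + (τ - t) * y i)
            * ((fun a => max 0 (a - p)) (ggddfCum P x0 idx i + P i)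
              - (fun a => max 0 (a - p)) (ggddfCum P x0 idx i)) := by
        refine ggddf_class_sum P idx hidx x0 (fun i => X i t + (τ - t) * y i)
          (fun i j h => by
            have h' : X i t = X j t := h
            simp only [htie i j h', h'])
          (fun a => max 0 (a - p)) (fun j => X j τ) x0 hsep (fun i j h => h)
      simp only at h3
      have h4 : eSt E0 P r t p + (τ - t) • D
          = ∑ i, (X i t + (τ - t) * y i) * G i := by
        rw [h2, smul_eq_mul, hDdef, Finset.mul_sum, ← Finset.sum_add_distrib]
        refine Finset.sum_congr rfl fun i _ => ?_
        have : ggddfCum P x0 idx i = cA i := rfl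
        rw [hGdef]
        ring
      have h5 : ∀ i, G i = max 0 (ggddfCum P x0 idx i + P i - p)
          - max 0 (ggddfCum P x0 idx i - p) := fun i => rfl
      calc eSt E0 P r τ p - eSt E0 P r t p - (τ - t) • D
          = eSt E0 P r τ p - (eSt E0 P r t p + (τ - t) • D) := by ring
        _ = (∑ i, X i τ * (max 0 (ggddfCum P (fun j => X j τ) idx i + P i - p)
              - max 0 (ggddfCum P (fun j => X j τ) idx i - p)))
            - ∑ i, (X i t + (τ - t) * y i)
              * (max 0 (ggddfCum P (fun j => X j τ) idx i + P i - p)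
                - max 0 (ggddfCum P (fun j => X j τ) idx i - p)) := by
            rw [h1, h4, ← h3]
        _ = ∑ i, (X i τ - X i t - (τ - t) * y i)
            * (max 0 (ggddfCum P (fun j => X j τ) idx i + P i - p)
              - max 0 (ggddfCum P (fun j => X j τ) idx i - p)) := by
            rw [← Finset.sum_sub_distrib]
            refine Finset.sum_congr rfl fun i _ => ?_
            ring
    -- little-o estimate
    have hlo : (fun τ => ∑ i, (X i τ - X i t - (τ - t) * y i)
            * (max 0 (ggddfCum P (fun j => X j τ) idx i + P i - p)
              - max 0 (ggddfCum P (fun j => X j τ) idx i - p)))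
        =o[nhds t] (fun τ => τ - t) := by
      refine Asymptotics.IsLittleO.fun_sum (fun i _ => ?_)
      have hbase : (fun τ => X i τ - X i t - (τ - t) * y i)
          =o[nhds t] (fun τ => τ - t) := by
        have := hasDerivAt_iff_isLittleO.1 (hder i)
        simpa only [smul_eq_mul] using this
      have hbig : (fun τ => max 0 (ggddfCum P (fun j => X j τ) idx i + P i - p)
              - max 0 (ggddfCum P (fun j => X j τ) idx i - p))
          =O[nhds t] (fun _ => (1:ℝ)) := by
        refine Asymptotics.isBigO_iff.2 ⟨P i, Filter.Eventually.of_forall (fun τ => ?_)⟩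
        rw [Real.norm_eq_abs, norm_one, mul_one]
        exact ggddf_G_bound _ _ _ (hP i).le
      have := hbase.mul_isBigO hbig
      simpa only [mul_one] using this
    have hEE' : (fun τ => eSt E0 P r τ p - eSt E0 P r t p - (τ - t) • D)
        =ᶠ[nhds t] (fun τ => ∑ i, (X i τ - X i t - (τ - t) * y i)
            * (max 0 (ggddfCum P (fun j => X j τ) idx i + P i - p)
              - max 0 (ggddfCum P (fun j => X j τ) idx i - p))) := hEE
    exact hlo.congr' hEE'.symm Filter.EventuallyEq.rfl
  have hrt : ∀ i, 0 ≤ r i t ∧ r i t ≤ P i := fun i => hrbound i t htIcc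
  have hcA0 : ∀ i, 0 ≤ cA i := fun i => ggddfCum_nonneg hP
  have hG0 : ∀ i, 0 ≤ G i := by
    intro i
    simp only [hGdef]
    refine sub_nonneg.2 (max_le_max le_rfl (by linarith [(hP i).le]))
  have hGP : ∀ i, G i ≤ P i := by
    intro i
    have := (abs_le.1 (ggddf_G_bound (cA i) (P i) p (hP i).le)).2
    simpa only [hGdef] using this
  have hy0 : ∀ i, y i ≤ 0 := by
    intro i
    simp only [hydef, neg_div]
    exact neg_nonpos.2 (div_nonneg (hrt i).1 (hP i).le)
  have hD0 : D ≤ 0 := by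
    rw [hDdef]
    exact Finset.sum_nonpos (fun i _ => mul_nonpos_iff.2 (Or.inr ⟨hy0 i, hG0 i⟩))
  have hcAe : ∀ i, cA i = ∑ m ∈ Finset.univ.filter
      (fun m => ggddfKey x0 idx i < ggddfKey x0 idx m), P m := fun i => rfl
  have hterm : ∀ i, r i t + y i * G i ≤ min (cA i + P i) p - min (cA i) p := by
    intro i
    have hGdiff : P i - G i = min (cA i + P i) p - min (cA i) p := by
      simp only [hGdef]
      rw [← ggddf_min_max (cA i + P i) p, ← ggddf_min_max (cA i) p]
      ring
    have hid : r i t + y i * G i = (r i t / P i) * (P i - G i) := by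
      have hPne : P i ≠ 0 := (hP i).ne'
      simp only [hydef, hGdef]
      field_simp
      ring
    rw [hid, ← hGdiff]
    have h1 : r i t / P i ≤ 1 := (div_le_one (hP i)).2 (hrt i).2
    have h2 : 0 ≤ P i - G i := sub_nonneg.2 (hGP i)
    nlinarith [mul_le_mul_of_nonneg_right h1 h2]
  have htel : ∑ i, (min (cA i + P i) p - min (cA i) p) = min (∑ j, P j) p := by
    have hTT := ggddf_telescope P (fun a => min a p) Finset.univ (ggddfKey x0 idx)
      (Function.Injective.injOn (ggddfKey_injective hidx))
    rw [min_eq_left hp, sub_zero] at hTT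
    simp only [hcAe]
    exact hTT
  have hDlep : D ≤ p - ∑ i, r i t := by
    have hs1 : ∑ i, (r i t + y i * G i) ≤ ∑ i, (min (cA i + P i) p - min (cA i) p) :=
      Finset.sum_le_sum (fun i _ => hterm i)
    rw [htel] at hs1
    have hs2 : ∑ i, (r i t + y i * G i) = ∑ i, r i t + D := by
      rw [hDdef, Finset.sum_add_distrib]
    rw [hs2] at hs1
    have := le_trans hs1 (min_le_right _ _)
    linarith
  refine ⟨D, hderiv, le_min hD0 hDlep, ?_⟩
  intro hpπ
  rw [piSet] at hpπ
  rcases Finset.mem_insert.1 hpπ with hp0 | hmem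
  · -- the breakpoint p = 0
    have hd0 : 0 ≤ ∑ i, r i t := Finset.sum_nonneg fun i _ => (hrt i).1
    have hGei : ∀ i, G i = P i := by
      intro i
      simp only [hGdef, hp0]
      rw [sub_zero, sub_zero, max_eq_right (hcA0 i),
        max_eq_right (add_nonneg (hcA0 i) (hP i).le)]
      ring
    have hDv : D = p - ∑ i, r i t := by
      rw [hDdef]
      have : ∀ i : S, y i * G i = -(r i t) := by
        intro i
        rw [hGei i]
        simp only [hydef]
        rw [div_mul_cancel₀ _ (hP i).ne']
      rw [Finset.sum_congr rfl (fun i _ => this i), hp0]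
      rw [Finset.sum_neg_distrib]
      ring
    rw [hDv, hp0, min_eq_right (by linarith)]
  · -- a genuine breakpoint
    obtain ⟨j, hjmem, hjp⟩ := Finset.mem_image.1 hmem
    have hjpos : 0 < X j t := by
      have := (Finset.mem_filter.1 hjmem).2
      rwa [hXeq t htIcc j] at this
    set Top := Finset.univ.filter (fun i => X j t ≤ X i t) with hTopdef
    have hpeq : p = ∑ i ∈ Top, P i := by
      rw [← hjp, hTopdef]
      refine Finset.sum_congr ?_ (fun _ _ => rfl)
      ext i
      simp only [Finset.mem_filter, Finset.mem_univ, true_and,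
        hXeq t htIcc i, hXeq t htIcc j]
    have h1 : ∀ i ∈ Top, cA i + P i ≤ p := by
      intro i hi
      have hXi : X j t ≤ X i t := (Finset.mem_filter.1 hi).2
      have hnotmem : i ∉ Finset.univ.filter
          (fun m => ggddfKey x0 idx i < ggddfKey x0 idx m) := by
        simp [lt_irrefl]
      have hsub : insert i (Finset.univ.filter
          (fun m => ggddfKey x0 idx i < ggddfKey x0 idx m)) ⊆ Top := by
        intro m hm
        rcases Finset.mem_insert.1 hm with rfl | hm'
        · exact hi
        · have hle : x0 i ≤ x0 m := le_of_ggddfKey_lt (Finset.mem_filter.1 hm').2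
          exact Finset.mem_filter.2 ⟨Finset.mem_univ m, le_trans hXi hle⟩
      calc cA i + P i
          = ∑ m ∈ insert i (Finset.univ.filter
              (fun m => ggddfKey x0 idx i < ggddfKey x0 idx m)), P m := by
            rw [Finset.sum_insert hnotmem, hcAe i]; ring
        _ ≤ ∑ m ∈ Top, P m :=
            Finset.sum_le_sum_of_subset_of_nonneg hsub (fun m _ _ => (hP m).le)
        _ = p := hpeq.symm
    have h2 : ∀ i ∉ Top, p ≤ cA i := by
      intro i hi
      have hXi : X i t < X j t := by
        by_contra hc
        exact hi (Finset.mem_filter.2 ⟨Finset.mem_univ i, not_lt.1 hc⟩)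
      have hsub : Top ⊆ Finset.univ.filter
          (fun m => ggddfKey x0 idx i < ggddfKey x0 idx m) := by
        intro m hm
        have hjm : X j t ≤ X m t := (Finset.mem_filter.1 hm).2
        exact Finset.mem_filter.2 ⟨Finset.mem_univ m,
          ggddfKey_lt_of_lt (lt_of_lt_of_le hXi hjm)⟩
      calc p = ∑ m ∈ Top, P m := hpeq
        _ ≤ ∑ m ∈ Finset.univ.filter
              (fun m => ggddfKey x0 idx i < ggddfKey x0 idx m), P m :=
            Finset.sum_le_sum_of_subset_of_nonneg hsub (fun m _ _ => (hP m).le)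
        _ = cA i := (hcAe i).symm
    have hGTop : ∀ i ∈ Top, G i = 0 := by
      intro i hi
      simp only [hGdef]
      rw [max_eq_left (by linarith [h1 i hi]), max_eq_left (by linarith [h1 i hi, (hP i).le])]
      ring
    have hGnot : ∀ i ∉ Top, G i = P i := by
      intro i hi
      simp only [hGdef]
      rw [max_eq_right (by linarith [h2 i hi, (hP i).le]), max_eq_right (by linarith [h2 i hi])]
      ring
    have hrsplit : ∑ i, r i t = ∑ i ∈ Top, r i t
        + ∑ i ∈ Finset.univ.filter (fun i => ¬ X j t ≤ X i t), r i t := by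
      rw [hTopdef]
      exact (Finset.sum_filter_add_sum_filter_not Finset.univ _ _).symm
    have hDsplit : D = -∑ i ∈ Finset.univ.filter (fun i => ¬ X j t ≤ X i t), r i t := by
      rw [hDdef, ← Finset.sum_filter_add_sum_filter_not Finset.univ (fun i => X j t ≤ X i t)]
      have hz1 : ∑ i ∈ Top, y i * G i = 0 :=
        Finset.sum_eq_zero (fun i hi => by rw [hGTop i hi, mul_zero])
      have hz2 : ∑ i ∈ Finset.univ.filter (fun i => ¬ X j t ≤ X i t), y i * G i
          = ∑ i ∈ Finset.univ.filter (fun i => ¬ X j t ≤ X i t), -(r i t) := by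
        refine Finset.sum_congr rfl (fun i hi => ?_)
        have hni : i ∉ Top := by
          rw [hTopdef]
          simp only [Finset.mem_filter, Finset.mem_univ, true_and]
          exact (Finset.mem_filter.1 hi).2
        rw [hGnot i hni]
        simp only [hydef]
        rw [div_mul_cancel₀ _ (hP i).ne']
      rw [hz1, hz2, zero_add, Finset.sum_neg_distrib]
    by_cases hex : ∀ i ∈ Finset.univ.filter (fun i => ¬ X j t ≤ X i t), r i t = 0
    · have hDz : D = 0 := by rw [hDsplit, Finset.sum_eq_zero hex, neg_zero]
      have hrle : ∑ i, r i t ≤ p := by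
        rw [hrsplit, Finset.sum_eq_zero hex, add_zero, hpeq]
        exact Finset.sum_le_sum (fun i _ => (hrt i).2)
      rw [hDz, min_eq_left (by linarith)]
    · push_neg at hex
      obtain ⟨i0, hi0mem, hi0ne⟩ := hex
      have hi0pos : 0 < r i0 t := lt_of_le_of_ne (hrt i0).1 (Ne.symm hi0ne)
      have hi0lt : X i0 t < X j t := by
        have := (Finset.mem_filter.1 hi0mem).2
        first
        | exact this
        | exact not_le.1 this
      have hfull : ∀ m ∈ Top, r m t = P m := by
        intro m hm
        refine (hgg t htIcc).2 i0 m ?_ hi0pos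
        rw [hXeq t htIcc i0, hXeq t htIcc m]
        exact lt_of_lt_of_le hi0lt (Finset.mem_filter.1 hm).2
      have hTopsum : ∑ i ∈ Top, r i t = p := by
        rw [Finset.sum_congr rfl hfull, hpeq]
      have hge : p ≤ ∑ i, r i t := by
        rw [hrsplit, hTopsum]
        have : 0 ≤ ∑ i ∈ Finset.univ.filter (fun i => ¬ X j t ≤ X i t), r i t := by
          refine Finset.sum_nonneg (fun i _ => (hrt i).1)
        linarith
      have hDval : D = p - ∑ i, r i t := by
        rw [hDsplit, hrsplit, hTopsum]
        ring
      rw [hDval, min_eq_right (by linarith)]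
end

section
/- Under the GGDDF policy, the set π(t) of breakpoints (cumulative power levels at which ordered discharge-durations strictly decrease, together with 0 and, when no store is empty, the total power) is weakly decreasing in time: π(u) ⊇ π(t) for all 0 ≤ u ≤ t. Equivalently, once the discharge-durations of two stores become equal under GGDDF, they remain equal at all subsequent times. -/
open MeasureTheory Set Finset
open scoped Classical

section Aux

variable {S : Type*} [Fintype S] {E0 P : S → ℝ} {d : ℝ → ℝ} {T : ℝ} {r : S → ℝ → ℝ}

lemma GG.intOn (hr : IsGGDDF E0 P d T r) (i : S) :
    IntegrableOn (r i) (Icc 0 T) := by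
  obtain ⟨⟨hm, hb, -, -⟩, -⟩ := hr
  refine Measure.integrableOn_of_bounded (M := P i) measure_Icc_lt_top.ne
    (hm i).aestronglyMeasurable ?_
  filter_upwards [ae_restrict_mem measurableSet_Icc] with t ht
  have h := hb i t ht
  rw [Real.norm_eq_abs, abs_of_nonneg h.1]; exact h.2

lemma GG.intervalInt (hr : IsGGDDF E0 P d T r) (i : S) {a b : ℝ}
    (ha : a ∈ Icc 0 T) (hb : b ∈ Icc 0 T) :
    IntervalIntegrable (r i) volume a b := by
  rw [intervalIntegrable_iff]
  exact (GG.intOn hr i).mono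
    (Set.uIoc_subset_uIcc.trans (Set.uIcc_subset_Icc ha hb)) le_rfl

lemma GG.level_split (hr : IsGGDDF E0 P d T r) (i : S) {a b : ℝ}
    (ha : a ∈ Icc 0 T) (hb : b ∈ Icc 0 T) :
    storeLevel E0 r i b = storeLevel E0 r i a - ∫ v in a..b, r i v := by
  have h0 : (0:ℝ) ∈ Icc 0 T := ⟨le_rfl, ha.1.trans ha.2⟩
  have := intervalIntegral.integral_add_adjacent_intervals
    (GG.intervalInt hr i h0 ha) (GG.intervalInt hr i ha hb)
  simp only [storeLevel]
  rw [← this]; ring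

lemma GG.level_mono (hr : IsGGDDF E0 P d T r) (i : S) {a b : ℝ}
    (ha : a ∈ Icc 0 T) (hb : b ∈ Icc 0 T) (hab : a ≤ b) :
    storeLevel E0 r i b ≤ storeLevel E0 r i a := by
  rw [GG.level_split hr i ha hb]
  have : 0 ≤ ∫ v in a..b, r i v := by
    apply intervalIntegral.integral_nonneg hab
    intro v hv
    exact (hr.1.2.1 i v ⟨ha.1.trans hv.1, hv.2.trans hb.2⟩).1
  linarith

lemma GG.cont (hr : IsGGDDF E0 P d T r) (hT : 0 ≤ T) (i : S) :
    ContinuousOn (fun t => storeLevel E0 r i t) (Icc 0 T) := by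
  have : ContinuousOn (fun t => ∫ v in (0:ℝ)..t, r i v) (Icc 0 T) := by
    have := intervalIntegral.continuousOn_primitive_interval
      (f := r i) (a := (0:ℝ)) (b := T) (μ := volume) ?_
    · rwa [Set.uIcc_of_le hT] at this
    · rw [Set.uIcc_of_le hT]; exact GG.intOn hr i
  exact continuousOn_const.sub this

/-- Key order-preservation lemma. -/
lemma GG.order (hP : ∀ i, 0 < P i) (hr : IsGGDDF E0 P d T r)
    {u t : ℝ} (hu : 0 ≤ u) (hut : u ≤ t) (ht : t ≤ T) (i j : S)
    (h : storeLevel E0 r i u / P i ≤ storeLevel E0 r j u / P j) :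
    storeLevel E0 r i t / P i ≤ storeLevel E0 r j t / P j := by
  have hT : 0 ≤ T := hu.trans (hut.trans ht)
  have hmemu : u ∈ Icc 0 T := ⟨hu, hut.trans ht⟩
  have hmemt : t ∈ Icc 0 T := ⟨hu.trans hut, ht⟩
  by_contra hcon
  push_neg at hcon
  set F : ℝ → ℝ := fun s =>
    storeLevel E0 r i s / P i - storeLevel E0 r j s / P j with hF
  have hFc : ContinuousOn F (Icc 0 T) :=
    ((GG.cont hr hT i).div_const _).sub ((GG.cont hr hT j).div_const _)
  set A : Set ℝ := Icc u t ∩ F ⁻¹' (Iic 0) with hA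
  have hsub : Icc u t ⊆ Icc 0 T := Set.Icc_subset_Icc hu ht
  have hAclosed : IsClosed A :=
    (hFc.mono hsub).preimage_isClosed_of_isClosed isClosed_Icc isClosed_Iic
  have hAne : A.Nonempty := ⟨u, ⟨le_rfl, hut⟩, by simpa [F] using h⟩
  have hAbdd : BddAbove A := ⟨t, fun s hs => hs.1.2⟩
  set s0 := sSup A with hs0
  have hs0A : s0 ∈ A := hAclosed.csSup_mem hAne hAbdd
  have hs0t : s0 ≤ t := hs0A.1.2
  have hs0u : u ≤ s0 := hs0A.1.1
  have hs0mem : s0 ∈ Icc 0 T := hsub hs0A.1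
  have hFs0 : F s0 ≤ 0 := hs0A.2
  have hpos : ∀ s ∈ Ioc s0 t, 0 < F s := by
    intro s hs
    by_contra hcon2
    push_neg at hcon2
    have : s ∈ A := ⟨⟨hs0u.trans hs.1.le, hs.2⟩, hcon2⟩
    exact absurd (le_csSup hAbdd this) (not_le.mpr hs.1)
  -- pointwise inequality on the integrand
  have hptwise : ∀ v ∈ Ioc s0 t, 0 ≤ r i v / P i - r j v / P j := by
    intro v hv
    have hvmem : v ∈ Icc 0 T := hsub ⟨hs0u.trans hv.1.le, hv.2⟩
    have hFv := hpos v hv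
    have hlt : storeLevel E0 r j v / P j < storeLevel E0 r i v / P i := by
      simp only [F] at hFv; linarith
    rcases (hr.1.2.1 j v hvmem).1.lt_or_eq with hrj | hrj
    · have := (hr.2 v hvmem).2 j i hlt hrj
      rw [this, div_self (hP i).ne']
      have := (hr.1.2.1 j v hvmem).2
      rw [sub_nonneg]
      exact div_le_one_of_le₀ this (hP j).le
    · rw [← hrj, zero_div, sub_zero]
      exact div_nonneg (hr.1.2.1 i v hvmem).1 (hP i).le
  have hint : 0 ≤ ∫ v in s0..t, (r i v / P i - r j v / P j) := by
    rw [intervalIntegral.integral_of_le hs0t]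
    exact setIntegral_nonneg measurableSet_Ioc hptwise
  have hii : IntervalIntegrable (fun v => r i v / P i) volume s0 t :=
    (GG.intervalInt hr i hs0mem hmemt).div_const _
  have hij : IntervalIntegrable (fun v => r j v / P j) volume s0 t :=
    (GG.intervalInt hr j hs0mem hmemt).div_const _
  have hsplit := intervalIntegral.integral_sub hii hij
  have hIi : (∫ v in s0..t, r i v / P i) = (∫ v in s0..t, r i v) / P i :=
    intervalIntegral.integral_div _ _
  have hIj : (∫ v in s0..t, r j v / P j) = (∫ v in s0..t, r j v) / P j :=
    intervalIntegral.integral_div _ _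
  have hFt : F t ≤ F s0 := by
    have hi := GG.level_split hr i hs0mem hmemt
    have hj := GG.level_split hr j hs0mem hmemt
    simp only [F]
    rw [hsplit, hIi, hIj] at hint
    rw [hi, hj, sub_div, sub_div]
    linarith
  have hFtpos : 0 < F t := by simp only [F]; linarith
  linarith

lemma GG.eq_preserved (hP : ∀ i, 0 < P i) (hr : IsGGDDF E0 P d T r)
    {u t : ℝ} (hu : 0 ≤ u) (hut : u ≤ t) (ht : t ≤ T) (i j : S)
    (h : storeLevel E0 r i u / P i = storeLevel E0 r j u / P j) :
    storeLevel E0 r i t / P i = storeLevel E0 r j t / P j :=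
  le_antisymm (GG.order hP hr hu hut ht i j h.le)
    (GG.order hP hr hu hut ht j i h.ge)

end Aux

/-- Under the GGDDF policy the breakpoint set `π` is weakly decreasing in time
(`π(u) ⊇ π(t)` for `0 ≤ u ≤ t ≤ T`); equivalently, once the discharge-durations
of two stores become equal they remain equal at all subsequent times. -/
theorem ggddf_breakpoints_decreasing
    {S : Type*} [Fintype S] (E0 P : S → ℝ) (hE : ∀ i, 0 ≤ E0 i) (hP : ∀ i, 0 < P i)
    (T : ℝ) (hT : 0 ≤ T)
    (d : ℝ → ℝ) (hd : Measurable d) (hd0 : ∀ t ∈ Icc 0 T, 0 ≤ d t)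
    (r : S → ℝ → ℝ) (hr : IsGGDDF E0 P d T r) :
    (∀ u t : ℝ, 0 ≤ u → u ≤ t → t ≤ T → piSet E0 P r t ⊆ piSet E0 P r u) ∧
    (∀ i j : S, ∀ u t : ℝ, 0 ≤ u → u ≤ t → t ≤ T →
      storeLevel E0 r i u / P i = storeLevel E0 r j u / P j →
      storeLevel E0 r i t / P i = storeLevel E0 r j t / P j) := by
  constructor
  · intro u t hu hut ht b hb
    have hmemu : u ∈ Icc 0 T := ⟨hu, hut.trans ht⟩
    have hmemt : t ∈ Icc 0 T := ⟨hu.trans hut, ht⟩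
    simp only [piSet, Finset.mem_insert, Finset.mem_image, Finset.mem_filter] at hb ⊢
    rcases hb with rfl | ⟨j, ⟨-, hjpos⟩, rfl⟩
    · left; rfl
    · right
      set A := Finset.univ.filter
        (fun i => storeLevel E0 r j t / P j ≤ storeLevel E0 r i t / P i) with hAdef
      have hjA : j ∈ A := by simp [hAdef]
      obtain ⟨j', hj'A, hj'min⟩ :=
        A.exists_min_image (fun i => storeLevel E0 r i u / P i) ⟨j, hjA⟩
      have hj'le : storeLevel E0 r j t / P j ≤ storeLevel E0 r j' t / P j' :=
        (Finset.mem_filter.mp hj'A).2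
      refine ⟨j', ⟨Finset.mem_univ _, ?_⟩, ?_⟩
      · have h2 : storeLevel E0 r j' t / P j' ≤ storeLevel E0 r j' u / P j' :=
          (div_le_div_iff_of_pos_right (hP j')).mpr (GG.level_mono hr j' hmemu hmemt hut)
        linarith
      · have hfilt : Finset.univ.filter
            (fun i => storeLevel E0 r j' u / P j' ≤ storeLevel E0 r i u / P i) = A := by
          ext i
          simp only [Finset.mem_filter, Finset.mem_univ, true_and, hAdef]
          constructor
          · intro hiu
            have h1 := GG.order hP hr hu hut ht j' i hiu
            linarith
          · intro hit
            exact hj'min i (Finset.mem_filter.mpr ⟨Finset.mem_univ _, hit⟩)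
        rw [hfilt]
  · intro i j u t hu hut ht h
    exact GG.eq_preserved hP hr hu hut ht i j h
end

section
/- Suppose all stores are initially full, have round-trip efficiency η_i = 1, and the demand (d(t), t ∈ [0,T]) is nonnegative and weakly increasing. If the demand can be completely served using cross-charging, it can be completely served without cross-charging, and with exactly the same energy remaining in each store at time T. (Proof via time-and-space reversal: the map E*_i(t) = Ē_i − E_i(T − t) converts the problem into serving the time-reversed, weakly decreasing demand d*(t) = d(T − t).) -/
open MeasureTheory Set Finset
open scoped Classical

/-- A policy possibly involving cross-charging on `[0,T]`, for stores of perfect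
round-trip efficiency (so the net served power is simply `Σ_i r_i(t)`). -/
def IsCrossPolicy {S : Type*} [Fintype S] (E0 Ebar P P' : S → ℝ) (d : ℝ → ℝ)
    (T : ℝ) (r : S → ℝ → ℝ) : Prop :=
  (∀ i, Measurable (r i)) ∧
  (∀ i, ∀ t ∈ Icc 0 T, -P' i ≤ r i t ∧ r i t ≤ P i) ∧
  (∀ i, ∀ t ∈ Icc 0 T, 0 ≤ storeLevel E0 r i t ∧ storeLevel E0 r i t ≤ Ebar i) ∧
  (∀ t ∈ Icc 0 T, 0 ≤ ∑ i, r i t ∧ ∑ i, r i t ≤ d t)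


-- clamp algebra
lemma clamp_nonneg (y c p : ℝ) (hp : 0 ≤ p) : 0 ≤ min (max (y - c) 0) p := le_min (le_max_right _ _) hp

lemma clamp_le (y c p : ℝ) : min (max (y - c) 0) p ≤ p := min_le_right _ _

lemma resid_mono {x y : ℝ} (c p : ℝ) (hp : 0 ≤ p) (h : x ≤ y) :
    x - min (max (x - c) 0) p ≤ y - min (max (y - c) 0) p := by
  simp only [min_def, max_def]; split_ifs <;> linarith

lemma resid_nonneg {x c : ℝ} (p : ℝ) (hx : 0 ≤ x) (hc : 0 ≤ c) :
    0 ≤ x - min (max (x - c) 0) p := by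
  simp only [min_def, max_def]; split_ifs <;> linarith

lemma resid_le_self {x c : ℝ} (p : ℝ) (hc : 0 ≤ c) (hp : 0 ≤ p) :
    x - min (max (x - c) 0) p ≤ x := by
  simp only [min_def, max_def]; split_ifs <;> linarith

lemma pos_part_resid_of_ge {x c p x' : ℝ} (hp : 0 ≤ p) (hcx : c ≤ x') :
    max (x - min (max (x - c) 0) p - x') 0 = max (x - p - x') 0 := by
  simp only [min_def, max_def]; split_ifs <;> linarith

lemma pos_part_resid_of_lt {x c p x' : ℝ} (hp : 0 ≤ p) (hcx : x' < c) :
    max (x - min (max (x - c) 0) p - x') 0 = max (x - x') 0 - min (max (x - c) 0) p := by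
  simp only [min_def, max_def]; split_ifs <;> linarith

-- ae helper: a property holding off a single point holds a.e.
lemma ae_of_off_singleton {p : ℝ → Prop} {c : ℝ} (h : ∀ x, x ≠ c → p x) :
    ∀ᵐ x : ℝ, p x := by
  rw [MeasureTheory.ae_iff]
  refine measure_mono_null (fun x hx => ?_) (Real.volume_singleton (a := c))
  simp only [mem_setOf_eq] at hx ⊢
  by_contra hne
  exact hx (h x hne)

-- integrability helper
lemma intervalIntegrable_of_boundIco {g : ℝ → ℝ} {T C : ℝ} (hT : 0 ≤ T)
    (hm : Measurable g) (hb : ∀ t ∈ Ico (0:ℝ) T, |g t| ≤ C) :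
    IntervalIntegrable g volume 0 T := by
  rw [intervalIntegrable_iff_integrableOn_Ioc_of_le hT]
  refine Integrable.mono' (integrable_const C) hm.aestronglyMeasurable.restrict ?_
  rw [ae_restrict_iff' measurableSet_Ioc]
  refine ae_of_off_singleton (c := T) (fun x hx hxI => ?_)
  exact hb x ⟨le_of_lt hxI.1, lt_of_le_of_ne hxI.2 hx⟩

-- greedy fill
lemma greedy_fill {S : Type*} (P : S → ℝ) (hP : ∀ i, 0 < P i) :
    ∀ (s : Finset S) (y : ℝ), 0 ≤ y → y ≤ ∑ i ∈ s, P i →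
    ∃ g : S → ℝ, (∀ i, 0 ≤ g i ∧ g i ≤ P i) ∧ ∑ i ∈ s, g i = y := by
  intro s
  induction s using Finset.induction_on with
  | empty =>
    intro y h0 h1
    simp only [Finset.sum_empty] at h1
    exact ⟨fun _ => 0, fun i => ⟨le_rfl, (hP i).le⟩, by simp; linarith⟩
  | @insert a s' ha ih =>
    intro y h0 h1
    rw [Finset.sum_insert ha] at h1
    obtain ⟨g', hg', hsum'⟩ := ih (y - min (P a) y) (by
      rcases le_total (P a) y with h | h
      · simp [min_eq_left h]; linarith
      · simp [min_eq_right h])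
      (by rcases le_total (P a) y with h | h
          · simp [min_eq_left h]; linarith
          · simp [min_eq_right h]
            exact Finset.sum_nonneg (fun i _ => (hP i).le))
    refine ⟨Function.update g' a (min (P a) y), fun i => ?_, ?_⟩
    · rcases eq_or_ne i a with rfl | hne
      · rw [Function.update_self]
        exact ⟨le_min (hP i).le h0, min_le_left _ _⟩
      · simp [Function.update_of_ne hne]; exact hg' i
    · rw [Finset.sum_insert ha, Function.update_self,
        Finset.sum_congr rfl (fun i hi => Function.update_of_ne (fun h : i = a => ha (h ▸ hi)) _ g'), hsum']
      ring


lemma clamp_diff_le {x c₁ c₂ p : ℝ} :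
    |min (max (x - c₁) 0) p - min (max (x - c₂) 0) p| ≤ |c₁ - c₂| := by
  have h1 : c₁ - c₂ ≤ |c₁ - c₂| := le_abs_self _
  have h2 : c₂ - c₁ ≤ |c₁ - c₂| := by rw [abs_sub_comm]; exact le_abs_self _
  rw [abs_le]
  constructor <;> (simp only [min_def, max_def]; split_ifs <;> linarith)

lemma min_eq_sub {x p : ℝ} (hx : 0 ≤ x) (hp : 0 ≤ p) :
    min (max (x - 0) 0) p = x - max (x - p) 0 := by
  simp only [min_def, max_def]; split_ifs <;> linarith

lemma key_alloc {S : Type*} [Fintype S] (P : S → ℝ) (hP : ∀ i, 0 < P i)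
    (T : ℝ) (hT : 0 ≤ T) :
    ∀ (s : Finset S) (e : ℝ → ℝ) (A : S → ℝ),
      Measurable e →
      (∀ u v : ℝ, 0 ≤ u → u ≤ v → v < T → e u ≤ e v) →
      (∀ t ∈ Ico (0:ℝ) T, 0 ≤ e t ∧ e t ≤ ∑ i ∈ s, P i) →
      (∀ i ∈ s, 0 ≤ A i) →
      (∀ B ⊆ s, (∫ t in (0:ℝ)..T, max (e t - ∑ i ∈ s \ B, P i) 0) ≤ ∑ i ∈ B, A i) →
      (∑ i ∈ s, A i = ∫ t in (0:ℝ)..T, e t) →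
      ∃ f : S → ℝ → ℝ, (∀ i, Measurable (f i)) ∧
        (∀ i ∈ s, ∀ t ∈ Ico (0:ℝ) T, 0 ≤ f i t ∧ f i t ≤ P i) ∧
        (∀ t ∈ Ico (0:ℝ) T, ∑ i ∈ s, f i t = e t) ∧
        (∀ i ∈ s, (∫ t in (0:ℝ)..T, f i t) = A i) := by
  intro s
  induction s using Finset.induction_on with
  | empty =>
    intro e A he hmono hbd hA0 hHall hsum
    refine ⟨fun _ _ => 0, fun i => measurable_const, by simp, fun t ht => ?_, by simp⟩
    have := hbd t ht
    simp only [Finset.sum_empty] at this ⊢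
    linarith [this.1, this.2]
  | @insert a s' ha ih =>
    intro e A he hmono hbd hA0 hHall hsum
    set M' : ℝ := ∑ i ∈ s', P i with hM'def
    set M : ℝ := ∑ i ∈ insert a s', P i with hMdef
    have hMsplit : M = P a + M' := Finset.sum_insert ha
    have hM'0 : 0 ≤ M' := Finset.sum_nonneg fun i _ => (hP i).le
    have hM0 : 0 ≤ M := by linarith [(hP a).le]
    -- integrability facts
    have he_int : IntervalIntegrable e volume 0 T := by
      refine intervalIntegrable_of_boundIco hT he (C := M) fun t ht => ?_
      have := hbd t ht; rw [abs_le]; constructor <;> linarith [this.1, this.2]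
    have hpp_meas : ∀ x : ℝ, Measurable fun t => max (e t - x) 0 := fun x =>
      (he.sub measurable_const).max measurable_const
    have hpp_int : ∀ x : ℝ, 0 ≤ x →
        IntervalIntegrable (fun t => max (e t - x) 0) volume 0 T := by
      intro x hx
      refine intervalIntegrable_of_boundIco hT (hpp_meas x) (C := M) fun t ht => ?_
      have := hbd t ht
      rw [abs_le]
      refine ⟨le_trans (neg_nonpos.mpr hM0) (le_max_right _ _), ?_⟩
      exact max_le (by linarith [this.2]) hM0
    have hg_meas : ∀ c : ℝ, Measurable fun t => min (max (e t - c) 0) (P a) := fun c =>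
      (hpp_meas c).min measurable_const
    have hg_int : ∀ c : ℝ, IntervalIntegrable (fun t => min (max (e t - c) 0) (P a)) volume 0 T := by
      intro c
      refine intervalIntegrable_of_boundIco hT (hg_meas c) (C := P a) fun t ht => ?_
      rw [abs_le]
      exact ⟨by linarith [clamp_nonneg (e t) c (P a) (hP a).le, hP a], clamp_le _ _ _⟩
    -- the function Ψ
    set Ψ : ℝ → ℝ := fun c => ∫ t in (0:ℝ)..T, min (max (e t - c) 0) (P a) with hΨdef
    have hΨlip : LipschitzWith (Real.toNNReal T) Ψ := by
      refine LipschitzWith.of_dist_le_mul fun c₁ c₂ => ?_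
      rw [Real.dist_eq, Real.dist_eq, Real.coe_toNNReal _ hT]
      have hsub : Ψ c₁ - Ψ c₂ = ∫ t in (0:ℝ)..T,
          (min (max (e t - c₁) 0) (P a) - min (max (e t - c₂) 0) (P a)) :=
        (intervalIntegral.integral_sub (hg_int c₁) (hg_int c₂)).symm
      calc |Ψ c₁ - Ψ c₂| ≤ |c₁ - c₂| * |T - 0| := by
            rw [hsub, ← Real.norm_eq_abs]
            exact intervalIntegral.norm_integral_le_of_norm_le_const (C := |c₁ - c₂|)
              (fun x _ => le_trans (le_of_eq (Real.norm_eq_abs _)) clamp_diff_le)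
          _ = T * |c₁ - c₂| := by rw [sub_zero, abs_of_nonneg hT]; ring
    -- Ψ M = 0
    have hΨM : Ψ M = 0 := by
      have : Ψ M = ∫ t in (0:ℝ)..T, (0:ℝ) := by
        refine intervalIntegral.integral_congr_ae ?_
        rw [Set.uIoc_of_le hT]
        refine ae_of_off_singleton (c := T) fun x hx hxm => ?_
        have hb := (hbd x ⟨hxm.1.le, lt_of_le_of_ne hxm.2 hx⟩).2
        have : max (e x - M) 0 = 0 := max_eq_right (by linarith)
        rw [this]
        exact min_eq_left (hP a).le
      simpa using this
    -- Ψ 0 ≥ A a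
    have hsdiff1 : insert a s' \ s' = {a} := by
      ext x; simp only [Finset.mem_sdiff, Finset.mem_insert, Finset.mem_singleton]
      constructor
      · rintro ⟨h1 | h1, h2⟩ <;> tauto
      · rintro rfl; exact ⟨Or.inl rfl, ha⟩
    have hΨ0 : A a ≤ Ψ 0 := by
      have hcongr : Ψ 0 = ∫ t in (0:ℝ)..T, (e t - max (e t - P a) 0) := by
        refine intervalIntegral.integral_congr_ae ?_
        rw [Set.uIoc_of_le hT]
        refine ae_of_off_singleton (c := T) fun x hx hxm => ?_
        exact min_eq_sub (hbd x ⟨hxm.1.le, lt_of_le_of_ne hxm.2 hx⟩).1 (hP a).le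
      have hΦPa := hHall s' (Finset.subset_insert a s')
      rw [hsdiff1, Finset.sum_singleton] at hΦPa
      have hsplit : (∫ t in (0:ℝ)..T, (e t - max (e t - P a) 0))
          = (∫ t in (0:ℝ)..T, e t) - ∫ t in (0:ℝ)..T, max (e t - P a) 0 :=
        intervalIntegral.integral_sub he_int (hpp_int (P a) (hP a).le)
      have hAa : A a = (∑ i ∈ insert a s', A i) - ∑ i ∈ s', A i := by
        rw [Finset.sum_insert ha]; ring
      rw [hcongr, hsplit, hAa, hsum]
      linarith
    -- IVT
    have hc_ex : ∃ c ∈ Icc (0:ℝ) M, Ψ c = A a := by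
      have hmem : A a ∈ Icc (Ψ M) (Ψ 0) := ⟨by rw [hΨM]; exact hA0 a (Finset.mem_insert_self a s'), hΨ0⟩
      have := intermediate_value_Icc' hM0 hΨlip.continuous.continuousOn hmem
      obtain ⟨c, hc, hceq⟩ := this
      exact ⟨c, hc, hceq⟩
    obtain ⟨c, hcmem, hΨc⟩ := hc_ex
    have hc0 : 0 ≤ c := hcmem.1
    -- residual
    set g : ℝ → ℝ := fun t => min (max (e t - c) 0) (P a) with hgdef
    set e' : ℝ → ℝ := fun t => e t - g t with he'def
    have he'_meas : Measurable e' := he.sub (hg_meas c)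
    have he'_int : IntervalIntegrable e' volume 0 T := he_int.sub (hg_int c)
    have he'_mono : ∀ u v : ℝ, 0 ≤ u → u ≤ v → v < T → e' u ≤ e' v := fun u v hu huv hv =>
      resid_mono c (P a) (hP a).le (hmono u v hu huv hv)
    have he'_bd1 : ∀ t ∈ Ico (0:ℝ) T, 0 ≤ e' t := fun t ht =>
      resid_nonneg (P a) (hbd t ht).1 hc0
    -- pointwise identity helpers on sets
    have hInsMinusSingleton : insert a s' \ {a} = s' := by
      ext x; simp only [Finset.mem_sdiff, Finset.mem_insert, Finset.mem_singleton]
      constructor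
      · rintro ⟨h1 | h1, h2⟩
        · exact absurd h1 h2
        · exact h1
      · intro hx; exact ⟨Or.inr hx, fun h => ha (h ▸ hx)⟩
    -- ∫ (e - M)⁺ = 0
    have hppM0 : (∫ t in (0:ℝ)..T, max (e t - M) 0) = 0 := by
      have : (∫ t in (0:ℝ)..T, max (e t - M) 0) = ∫ t in (0:ℝ)..T, (0:ℝ) := by
        refine intervalIntegral.integral_congr_ae ?_
        rw [Set.uIoc_of_le hT]
        refine ae_of_off_singleton (c := T) fun x hx hxm => ?_
        exact max_eq_right (by linarith [(hbd x ⟨hxm.1.le, lt_of_le_of_ne hxm.2 hx⟩).2])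
      simpa using this
    have hh_meas : Measurable fun t => max (e' t - M') 0 :=
      (he'_meas.sub measurable_const).max measurable_const
    have hh_int : IntervalIntegrable (fun t => max (e' t - M') 0) volume 0 T := by
      refine intervalIntegrable_of_boundIco hT hh_meas (C := M) fun t ht => ?_
      rw [abs_le]
      constructor
      · linarith [le_max_right (e' t - M') 0]
      · refine max_le ?_ hM0
        have h1 : e' t ≤ e t := by
          simp only [he'def, hgdef]
          exact resid_le_self (P a) hc0 (hP a).le
        linarith [(hbd t ht).2]
    have hint0 : (∫ t in (0:ℝ)..T, max (e' t - M') 0) = 0 := by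
      rcases le_or_gt c M' with hcM | hcM
      · have hpt : (fun t => max (e' t - M') 0) = fun t => max (e t - M) 0 := by
          funext t
          simp only [he'def, hgdef]
          rw [pos_part_resid_of_ge (hP a).le hcM, sub_sub, ← hMsplit]
        rw [hpt, hppM0]
      · have hpt : (fun t => max (e' t - M') 0) = fun t => max (e t - M') 0 - g t := by
          funext t
          simp only [he'def, hgdef]
          exact pos_part_resid_of_lt (hP a).le hcM
        have hHa := hHall {a} (by simp)
        rw [hInsMinusSingleton, Finset.sum_singleton] at hHa
        have hΨceq : (∫ t in (0:ℝ)..T, g t) = A a := hΨc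
        have hnn : 0 ≤ ∫ t in (0:ℝ)..T, max (e' t - M') 0 :=
          intervalIntegral.integral_nonneg hT fun u _ => le_max_right _ _
        have : (∫ t in (0:ℝ)..T, max (e' t - M') 0)
            = (∫ t in (0:ℝ)..T, max (e t - M') 0) - ∫ t in (0:ℝ)..T, g t := by
          rw [hpt]
          exact intervalIntegral.integral_sub (hpp_int M' hM'0) (hg_int c)
        rw [hΨceq] at this
        linarith
    have he'_bd2 : ∀ t ∈ Ico (0:ℝ) T, e' t ≤ M' := by
      intro t0 ht0
      by_contra hgt
      push_neg at hgt
      have hδpos : 0 < e' t0 - M' := by linarith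
      have hsub1 : Set.uIcc (0:ℝ) t0 ⊆ Set.uIcc (0:ℝ) T := by
        rw [Set.uIcc_of_le ht0.1, Set.uIcc_of_le hT]
        exact Set.Icc_subset_Icc le_rfl ht0.2.le
      have hsub2 : Set.uIcc t0 T ⊆ Set.uIcc (0:ℝ) T := by
        rw [Set.uIcc_of_le ht0.2.le, Set.uIcc_of_le hT]
        exact Set.Icc_subset_Icc ht0.1 le_rfl
      have hadj := intervalIntegral.integral_add_adjacent_intervals
        (hh_int.mono_set hsub1) (hh_int.mono_set hsub2)
      have h1 : 0 ≤ ∫ t in (0:ℝ)..t0, max (e' t - M') 0 :=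
        intervalIntegral.integral_nonneg ht0.1 fun u _ => le_max_right _ _
      have h2 : (e' t0 - M') * (T - t0) ≤ ∫ t in t0..T, max (e' t - M') 0 := by
        have hconst : (∫ _ in t0..T, (e' t0 - M')) = (T - t0) * (e' t0 - M') := by
          rw [intervalIntegral.integral_const, smul_eq_mul]
        rw [mul_comm, ← hconst]
        refine intervalIntegral.integral_mono_ae_restrict ht0.2.le
          intervalIntegrable_const (hh_int.mono_set hsub2) ?_
        rw [Filter.EventuallyLE, ae_restrict_iff' measurableSet_Icc]
        refine ae_of_off_singleton (c := T) fun x hx hxm => ?_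
        have hxT : x < T := lt_of_le_of_ne hxm.2 hx
        have := he'_mono t0 x ht0.1 hxm.1 hxT
        exact le_trans (by linarith) (le_max_left _ _)
      have hpos : 0 < (e' t0 - M') * (T - t0) := mul_pos hδpos (by linarith [ht0.2])
      rw [hint0] at hadj
      linarith
    -- Hall conditions for the residual problem
    have hHall' : ∀ B ⊆ s',
        (∫ t in (0:ℝ)..T, max (e' t - ∑ i ∈ s' \ B, P i) 0) ≤ ∑ i ∈ B, A i := by
      intro B hB
      have hx0 : 0 ≤ ∑ i ∈ s' \ B, P i := Finset.sum_nonneg fun i _ => (hP i).le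
      have haB : a ∉ B := fun h => ha (hB h)
      rcases le_or_gt c (∑ i ∈ s' \ B, P i) with hcx | hcx
      · have hpt : (fun t => max (e' t - ∑ i ∈ s' \ B, P i) 0)
            = fun t => max (e t - (P a + ∑ i ∈ s' \ B, P i)) 0 := by
          funext t
          simp only [he'def, hgdef]
          rw [pos_part_resid_of_ge (hP a).le hcx, sub_sub]
        rw [hpt]
        have hset : insert a s' \ B = insert a (s' \ B) := by
          ext y; simp only [Finset.mem_sdiff, Finset.mem_insert]
          constructor
          · rintro ⟨h1 | h1, h2⟩
            · exact Or.inl h1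
            · exact Or.inr ⟨h1, h2⟩
          · rintro (rfl | ⟨h1, h2⟩)
            · exact ⟨Or.inl rfl, haB⟩
            · exact ⟨Or.inr h1, h2⟩
        have := hHall B (hB.trans (Finset.subset_insert a s'))
        rwa [hset, Finset.sum_insert (fun h => ha (Finset.mem_sdiff.mp h).1)] at this
      · have hpt : (fun t => max (e' t - ∑ i ∈ s' \ B, P i) 0)
            = fun t => max (e t - ∑ i ∈ s' \ B, P i) 0 - g t := by
          funext t
          simp only [he'def, hgdef]
          exact pos_part_resid_of_lt (hP a).le hcx
        have hset : insert a s' \ insert a B = s' \ B := by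
          ext y; simp only [Finset.mem_sdiff, Finset.mem_insert]
          constructor
          · rintro ⟨h1 | h1, h2⟩
            · exact absurd (Or.inl h1) h2
            · exact ⟨h1, fun hy => h2 (Or.inr hy)⟩
          · rintro ⟨h1, h2⟩
            refine ⟨Or.inr h1, ?_⟩
            rintro (rfl | hy)
            · exact ha h1
            · exact h2 hy
        have hH := hHall (insert a B) (Finset.insert_subset_insert a hB)
        rw [hset, Finset.sum_insert haB] at hH
        have hΨceq : (∫ t in (0:ℝ)..T, g t) = A a := hΨc
        have heq : (∫ t in (0:ℝ)..T, max (e' t - ∑ i ∈ s' \ B, P i) 0)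
            = (∫ t in (0:ℝ)..T, max (e t - ∑ i ∈ s' \ B, P i) 0) - ∫ t in (0:ℝ)..T, g t := by
          rw [hpt]
          exact intervalIntegral.integral_sub (hpp_int _ hx0) (hg_int c)
        rw [hΨceq] at heq
        linarith
    have hsum' : ∑ i ∈ s', A i = ∫ t in (0:ℝ)..T, e' t := by
      have h1 : (∫ t in (0:ℝ)..T, e' t) = (∫ t in (0:ℝ)..T, e t) - ∫ t in (0:ℝ)..T, g t := by
        simp only [he'def]
        exact intervalIntegral.integral_sub he_int (hg_int c)
      have h2 : (∫ t in (0:ℝ)..T, g t) = A a := hΨc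
      have h3 : ∑ i ∈ insert a s', A i = A a + ∑ i ∈ s', A i := Finset.sum_insert ha
      rw [h1, h2, ← hsum, h3]; ring
    obtain ⟨f', hf'meas, hf'bd, hf'sum, hf'int⟩ := ih e' A he'_meas he'_mono
      (fun t ht => ⟨he'_bd1 t ht, he'_bd2 t ht⟩)
      (fun i hi => hA0 i (Finset.mem_insert_of_mem hi)) hHall' hsum'
    classical
    refine ⟨fun i => if i = a then g else f' i, ?_, ?_, ?_, ?_⟩
    · intro i
      dsimp only
      split_ifs with h
      · exact hg_meas c
      · exact hf'meas i
    · intro i hi t ht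
      dsimp only
      split_ifs with h
      · subst h
        simp only [hgdef]
        exact ⟨clamp_nonneg _ _ _ (hP i).le, clamp_le _ _ _⟩
      · exact hf'bd i (Finset.mem_of_mem_insert_of_ne hi h) t ht
    · intro t ht
      rw [Finset.sum_insert ha]
      dsimp only
      rw [if_pos rfl]
      have hcg : ∑ i ∈ s', (if i = a then g t else f' i t) = ∑ i ∈ s', f' i t :=
        Finset.sum_congr rfl fun i hi => by rw [if_neg (fun h : i = a => ha (h ▸ hi))]
      have hcg2 : ∑ i ∈ s', (if i = a then g else f' i) t = ∑ i ∈ s', (if i = a then g t else f' i t) :=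
        Finset.sum_congr rfl fun i hi => by split_ifs <;> rfl
      rw [hcg2, hcg, hf'sum t ht]
      simp only [he'def]; ring
    · intro i hi
      dsimp only
      split_ifs with h
      · subst h
        exact hΨc
      · exact hf'int i (Finset.mem_of_mem_insert_of_ne hi h)
-- TOP LEVEL (to be appended)
/-- If all stores are initially full, have perfect round-trip efficiency, and
the demand on `[0,T]` is nonnegative and weakly increasing, then any demand
completely servable with cross-charging is completely servable without
cross-charging, with exactly the same energy remaining in each store at `T`. -/
theorem increasing_demand_no_cross_charging_needed
    {S : Type*} [Fintype S] (E0 Ebar P P' : S → ℝ)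
    (hfull : ∀ i, E0 i = Ebar i) (hE : ∀ i, 0 ≤ Ebar i)
    (hP : ∀ i, 0 < P i) (hP' : ∀ i, 0 ≤ P' i)
    (T : ℝ) (hT : 0 ≤ T)
    (d : ℝ → ℝ) (hd : Measurable d) (hd0 : ∀ t ∈ Icc 0 T, 0 ≤ d t)
    (hinc : ∀ s t : ℝ, 0 ≤ s → s ≤ t → t ≤ T → d s ≤ d t)
    (r : S → ℝ → ℝ) (hr : IsCrossPolicy E0 Ebar P P' d T r)
    (hserve : ∀ t ∈ Icc 0 T, ∑ i, r i t = d t) :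
    ∃ r' : S → ℝ → ℝ,
      (∀ i, ∀ t ∈ Icc 0 T, 0 ≤ r' i t) ∧
      IsCrossPolicy E0 Ebar P P' d T r' ∧
      (∀ t ∈ Icc 0 T, ∑ i, r' i t = d t) ∧
      (∀ i, storeLevel E0 r' i T = storeLevel E0 r i T) := by
  classical
  obtain ⟨hrmeas, hrbd, hrlevel, _⟩ := hr
  have hr_int : ∀ i, IntervalIntegrable (r i) volume 0 T := by
    intro i
    refine intervalIntegrable_of_boundIco hT (hrmeas i) (C := max (P i) (P' i)) fun t ht => ?_
    have := hrbd i t ⟨ht.1, ht.2.le⟩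
    rw [abs_le]
    constructor
    · linarith [le_max_right (P i) (P' i), this.1]
    · linarith [le_max_left (P i) (P' i), this.2]
  set A : S → ℝ := fun i => ∫ t in (0:ℝ)..T, r i t with hAdef
  have hR0 : ∀ i, ∀ u ∈ Icc (0:ℝ) T, 0 ≤ ∫ t in (0:ℝ)..u, r i t := by
    intro i u hu
    have h := (hrlevel i u hu).2
    rw [storeLevel, hfull i] at h
    linarith
  have hA0 : ∀ i, 0 ≤ A i := fun i => hR0 i T ⟨hT, le_rfl⟩
  have hAle : ∀ i, A i ≤ Ebar i := by
    intro i
    have h := (hrlevel i T ⟨hT, le_rfl⟩).1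
    rw [storeLevel, hfull i] at h
    simp only [hAdef]
    linarith
  have hdcap : ∀ t ∈ Icc (0:ℝ) T, d t ≤ ∑ i, P i := fun t ht => by
    rw [← hserve t ht]; exact Finset.sum_le_sum fun i _ => (hrbd i t ht).2
  have hPsum0 : (0:ℝ) ≤ ∑ i, P i := Finset.sum_nonneg fun i _ => (hP i).le
  have hd_int : IntervalIntegrable d volume 0 T := by
    refine intervalIntegrable_of_boundIco hT hd (C := ∑ i, P i) fun t ht => ?_
    have ht' : t ∈ Icc (0:ℝ) T := ⟨ht.1, ht.2.le⟩
    rw [abs_le]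
    exact ⟨by linarith [hd0 t ht'], hdcap t ht'⟩
  -- Hall conditions
  have hHall : ∀ B : Finset S,
      (∫ t in (0:ℝ)..T, max (d t - ∑ i ∈ univ \ B, P i) 0) ≤ ∑ i ∈ B, A i := by
    intro B
    set x : ℝ := ∑ i ∈ univ \ B, P i with hxdef
    have hx0 : 0 ≤ x := Finset.sum_nonneg fun i _ => (hP i).le
    set U : Set ℝ := {t | t ∈ Icc (0:ℝ) T ∧ x < d t} with hU
    set u : ℝ := sInf (U ∪ {T}) with hu
    have hbdd : BddBelow (U ∪ {T}) := by
      refine ⟨0, fun y hy => ?_⟩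
      rcases hy with hy | hy
      · exact hy.1.1
      · rw [Set.mem_singleton_iff] at hy; rw [hy]; exact hT
    have hne : (U ∪ {T}).Nonempty := ⟨T, Or.inr rfl⟩
    have hu0 : 0 ≤ u := le_csInf hne (fun y hy => by
      rcases hy with hy | hy
      · exact hy.1.1
      · rw [Set.mem_singleton_iff] at hy; rw [hy]; exact hT)
    have huT : u ≤ T := csInf_le hbdd (Or.inr rfl)
    have hlow : ∀ t, 0 ≤ t → t < u → d t ≤ x := by
      intro t ht htl
      by_contra hgt
      push_neg at hgt
      have hmem : t ∈ U ∪ {T} := Or.inl ⟨⟨ht, le_trans htl.le huT⟩, hgt⟩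
      exact absurd (csInf_le hbdd hmem) (not_le.mpr htl)
    have hhigh : ∀ t, u < t → t ≤ T → x < d t := by
      intro t htu htT
      obtain ⟨y, hy, hyt⟩ := exists_lt_of_csInf_lt hne htu
      rcases hy with hy | hy
      · exact lt_of_lt_of_le hy.2 (hinc y t hy.1.1 hyt.le htT)
      · rw [Set.mem_singleton_iff] at hy
        exfalso; rw [hy] at hyt; linarith
    have hpp_meas : Measurable fun t => max (d t - x) 0 :=
      (hd.sub measurable_const).max measurable_const
    have hpp_int : IntervalIntegrable (fun t => max (d t - x) 0) volume 0 T := by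
      refine intervalIntegrable_of_boundIco hT hpp_meas (C := ∑ i, P i) fun t ht => ?_
      have ht' : t ∈ Icc (0:ℝ) T := ⟨ht.1, ht.2.le⟩
      rw [abs_le]
      constructor
      · linarith [le_max_right (d t - x) 0]
      · exact max_le (by linarith [hdcap t ht']) hPsum0
    have hsub1 : Set.uIcc (0:ℝ) u ⊆ Set.uIcc (0:ℝ) T := by
      rw [Set.uIcc_of_le hu0, Set.uIcc_of_le hT]
      exact Set.Icc_subset_Icc le_rfl huT
    have hsub2 : Set.uIcc u T ⊆ Set.uIcc (0:ℝ) T := by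
      rw [Set.uIcc_of_le huT, Set.uIcc_of_le hT]
      exact Set.Icc_subset_Icc hu0 le_rfl
    have hadj := intervalIntegral.integral_add_adjacent_intervals
      (hpp_int.mono_set hsub1) (hpp_int.mono_set hsub2)
    have hzero : (∫ t in (0:ℝ)..u, max (d t - x) 0) = 0 := by
      have hcongr : (∫ t in (0:ℝ)..u, max (d t - x) 0) = ∫ t in (0:ℝ)..u, (0:ℝ) := by
        refine intervalIntegral.integral_congr_ae ?_
        rw [Set.uIoc_of_le hu0]
        refine ae_of_off_singleton (c := u) fun y hy hym => ?_
        exact max_eq_right (by linarith [hlow y hym.1.le (lt_of_le_of_ne hym.2 hy)])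
      simpa using hcongr
    have htail : (∫ t in u..T, max (d t - x) 0) = ∫ t in u..T, (d t - x) := by
      refine intervalIntegral.integral_congr_ae (Filter.Eventually.of_forall fun y hy => ?_)
      rw [Set.uIoc_of_le huT] at hy
      exact max_eq_left (by linarith [hhigh y hy.1 hy.2])
    have hIoc_sub : Set.Icc u T ⊆ Set.Icc (0:ℝ) T := Set.Icc_subset_Icc hu0 le_rfl
    have hdr : (∫ t in u..T, d t) = ∑ i, ∫ t in u..T, r i t := by
      have h2 : (∫ t in u..T, d t) = ∫ t in u..T, (∑ i, r i t) := by
        refine intervalIntegral.integral_congr fun t ht => ?_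
        rw [Set.uIcc_of_le huT] at ht
        exact (hserve t (hIoc_sub ht)).symm
      rw [h2]
      exact intervalIntegral.integral_finset_sum (fun i _ => (hr_int i).mono_set hsub2)
    have hsplit : (∫ t in u..T, (d t - x)) = (∑ i, ∫ t in u..T, r i t) - (T - u) * x := by
      rw [intervalIntegral.integral_sub ((hd_int).mono_set hsub2) intervalIntegrable_const,
        hdr, intervalIntegral.integral_const, smul_eq_mul]
    have hBc : ∀ i, (∫ t in u..T, r i t) ≤ (T - u) * P i := by
      intro i
      have hmono2 : (∫ t in u..T, r i t) ≤ ∫ t in u..T, (P i : ℝ) := by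
        refine intervalIntegral.integral_mono_on huT ((hr_int i).mono_set hsub2)
          intervalIntegrable_const (fun t ht => (hrbd i t (hIoc_sub ht)).2)
      simpa [intervalIntegral.integral_const, smul_eq_mul] using hmono2
    have hBin : ∀ i, (∫ t in u..T, r i t) ≤ A i := by
      intro i
      have hadj2 := intervalIntegral.integral_add_adjacent_intervals
        ((hr_int i).mono_set hsub1) ((hr_int i).mono_set hsub2)
      have h0u := hR0 i u ⟨hu0, huT⟩
      simp only [hAdef]
      linarith [hadj2]
    have hsum_split : ∑ i, ∫ t in u..T, r i t
        = (∑ i ∈ univ \ B, ∫ t in u..T, r i t) + ∑ i ∈ B, ∫ t in u..T, r i t :=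
      (Finset.sum_sdiff (Finset.subset_univ B)).symm
    have hb1 : ∑ i ∈ univ \ B, (∫ t in u..T, r i t) ≤ (T - u) * x := by
      rw [hxdef, Finset.mul_sum]
      exact Finset.sum_le_sum fun i _ => hBc i
    have hb2 : ∑ i ∈ B, (∫ t in u..T, r i t) ≤ ∑ i ∈ B, A i :=
      Finset.sum_le_sum fun i _ => hBin i
    calc (∫ t in (0:ℝ)..T, max (d t - x) 0)
        = (∫ t in (0:ℝ)..u, max (d t - x) 0) + ∫ t in u..T, max (d t - x) 0 := hadj.symm
      _ = ∫ t in u..T, (d t - x) := by rw [hzero, htail, zero_add]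
      _ = (∑ i, ∫ t in u..T, r i t) - (T - u) * x := hsplit
      _ ≤ ∑ i ∈ B, A i := by rw [hsum_split]; linarith
  have hsumA : ∑ i, A i = ∫ t in (0:ℝ)..T, d t := by
    simp only [hAdef]
    rw [← intervalIntegral.integral_finset_sum (fun i _ => hr_int i)]
    refine intervalIntegral.integral_congr fun t ht => ?_
    rw [Set.uIcc_of_le hT] at ht
    exact hserve t ht
  obtain ⟨f, hfmeas, hfbd, hfsum, hfint⟩ := key_alloc P hP T hT univ d A hd
    (fun u' v' hu' huv' hv' => hinc u' v' hu' huv' hv'.le)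
    (fun t ht => ⟨hd0 t ⟨ht.1, ht.2.le⟩, hdcap t ⟨ht.1, ht.2.le⟩⟩)
    (fun i _ => hA0 i) (fun B _ => hHall B) hsumA
  obtain ⟨gT, hgTbd, hgTsum⟩ := greedy_fill P hP univ (d T) (hd0 T ⟨hT, le_rfl⟩)
    (hdcap T ⟨hT, le_rfl⟩)
  set r' : S → ℝ → ℝ := fun i t => if t = T then gT i else f i t with hr'def
  have hf_int : ∀ i, IntervalIntegrable (f i) volume 0 T := by
    intro i
    refine intervalIntegrable_of_boundIco hT (hfmeas i) (C := P i) fun t ht => ?_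
    have := hfbd i (Finset.mem_univ i) t ht
    rw [abs_le]; exact ⟨by linarith [this.1], this.2⟩
  have hr'int_eq : ∀ i, ∀ t : ℝ, (∫ v in (0:ℝ)..t, r' i v) = ∫ v in (0:ℝ)..t, f i v := by
    intro i t
    refine intervalIntegral.integral_congr_ae ?_
    refine ae_of_off_singleton (c := T) fun y hy hym => ?_
    simp only [hr'def, if_neg hy]
  have hcum_nonneg : ∀ i, ∀ t ∈ Icc (0:ℝ) T, 0 ≤ ∫ v in (0:ℝ)..t, f i v := by
    intro i t ht
    refine intervalIntegral.integral_nonneg_of_ae_restrict ht.1 ?_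
    rw [Filter.EventuallyLE, ae_restrict_iff' measurableSet_Icc]
    refine ae_of_off_singleton (c := T) fun y hy hym => ?_
    exact (hfbd i (Finset.mem_univ i) y ⟨hym.1, lt_of_le_of_ne (le_trans hym.2 ht.2) hy⟩).1
  have hcum_le : ∀ i, ∀ t ∈ Icc (0:ℝ) T, (∫ v in (0:ℝ)..t, f i v) ≤ A i := by
    intro i t ht
    have hs1 : Set.uIcc (0:ℝ) t ⊆ Set.uIcc (0:ℝ) T := by
      rw [Set.uIcc_of_le ht.1, Set.uIcc_of_le hT]
      exact Set.Icc_subset_Icc le_rfl ht.2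
    have hs2 : Set.uIcc t T ⊆ Set.uIcc (0:ℝ) T := by
      rw [Set.uIcc_of_le ht.2, Set.uIcc_of_le hT]
      exact Set.Icc_subset_Icc ht.1 le_rfl
    have hadj := intervalIntegral.integral_add_adjacent_intervals
      ((hf_int i).mono_set hs1) ((hf_int i).mono_set hs2)
    have htl : 0 ≤ ∫ v in t..T, f i v := by
      refine intervalIntegral.integral_nonneg_of_ae_restrict ht.2 ?_
      rw [Filter.EventuallyLE, ae_restrict_iff' measurableSet_Icc]
      refine ae_of_off_singleton (c := T) fun y hy hym => ?_
      exact (hfbd i (Finset.mem_univ i) y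
        ⟨le_trans ht.1 hym.1, lt_of_le_of_ne hym.2 hy⟩).1
    have hAi : (∫ v in (0:ℝ)..T, f i v) = A i := hfint i (Finset.mem_univ i)
    linarith
  have hsum_r' : ∀ t ∈ Icc (0:ℝ) T, ∑ i, r' i t = d t := by
    intro t ht
    by_cases hteq : t = T
    · subst hteq
      simp only [hr'def, if_pos rfl]
      exact hgTsum
    · have htIco : t ∈ Ico (0:ℝ) T := ⟨ht.1, lt_of_le_of_ne ht.2 hteq⟩
      simp only [hr'def, if_neg hteq]
      exact hfsum t htIco
  have hr'bd : ∀ i, ∀ t ∈ Icc (0:ℝ) T, 0 ≤ r' i t ∧ r' i t ≤ P i := by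
    intro i t ht
    by_cases hteq : t = T
    · subst hteq
      simp only [hr'def, if_pos rfl]
      exact hgTbd i
    · have htIco : t ∈ Ico (0:ℝ) T := ⟨ht.1, lt_of_le_of_ne ht.2 hteq⟩
      simp only [hr'def, if_neg hteq]
      exact hfbd i (Finset.mem_univ i) t htIco
  refine ⟨r', fun i t ht => (hr'bd i t ht).1, ⟨?_, ?_, ?_, ?_⟩, hsum_r', ?_⟩
  · intro i
    exact Measurable.ite (measurableSet_singleton T) measurable_const (hfmeas i)
  · intro i t ht
    exact ⟨le_trans (neg_nonpos.mpr (hP' i)) (hr'bd i t ht).1, (hr'bd i t ht).2⟩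
  · intro i t ht
    rw [storeLevel, hfull i, hr'int_eq i t]
    constructor
    · linarith [hcum_le i t ht, hAle i]
    · linarith [hcum_nonneg i t ht]
  · intro t ht
    rw [hsum_r' t ht]
    exact ⟨hd0 t ht, le_rfl⟩
  · intro i
    rw [storeLevel, storeLevel, hr'int_eq i T, hfint i (Finset.mem_univ i), hAdef]
end

section
/- There exist two stores and a nonnegative demand process such that the demand can be completely served with cross-charging but not without it. Specifically, stores with (capacity, rate) = (2,2) and (4,1), symmetric charge/discharge rates, perfect efficiency, both initially full, and demand d(t) = 3 on [0,1] ∪ [3,4] and d(t) = 0 otherwise: the demand is servable (empty store 1 and one unit of store 2 on [0,1], recharge store 1 from store 2 on [1,3], discharge both on [3,4]), but no policy with all r_i(t) ≥ 0 serves it. -/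
open MeasureTheory Set Finset
open scoped Classical

/-- bounded measurable functions are interval integrable -/
lemma bdd_intInt {f : ℝ → ℝ} (hf : Measurable f) {C a b : ℝ}
    (h : ∀ x ∈ Set.uIcc a b, |f x| ≤ C) : IntervalIntegrable f volume a b :=
  (intervalIntegrable_const (c := C)).mono_fun' hf.aestronglyMeasurable
    (MeasureTheory.ae_restrict_of_forall_mem measurableSet_uIoc fun x hx => by
      simpa [Real.norm_eq_abs] using h x (Set.uIoc_subset_uIcc hx))

/-- the explicit cross-charging rate for store 1 -/
noncomputable def rr0 : ℝ → ℝ := fun t =>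
  if (0 ≤ t ∧ t ≤ 1) ∨ (3 ≤ t ∧ t ≤ 4) then (2:ℝ) else -1

lemma rr0_meas : Measurable rr0 := by
  have hs : MeasurableSet {t : ℝ | (0 ≤ t ∧ t ≤ 1) ∨ (3 ≤ t ∧ t ≤ 4)} := by
    have : {t : ℝ | (0 ≤ t ∧ t ≤ 1) ∨ (3 ≤ t ∧ t ≤ 4)} = Set.Icc 0 1 ∪ Set.Icc 3 4 := rfl
    rw [this]; exact measurableSet_Icc.union measurableSet_Icc
  exact Measurable.ite hs measurable_const measurable_const

lemma rr0_bdd : ∀ x : ℝ, |rr0 x| ≤ 2 := by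
  intro x; unfold rr0; split_ifs <;> norm_num

lemma rr0_int (a b : ℝ) : IntervalIntegrable rr0 volume a b :=
  bdd_intInt rr0_meas (fun x _ => rr0_bdd x)

lemma rr0_int01 {t : ℝ} (h0 : 0 ≤ t) (h1 : t ≤ 1) :
    ∫ v in (0:ℝ)..t, rr0 v = 2 * t := by
  rw [intervalIntegral.integral_congr (g := fun _ => (2:ℝ))]
  · simp; ring
  · intro x hx
    rw [Set.uIcc_of_le h0] at hx
    unfold rr0
    rw [if_pos (Or.inl ⟨hx.1, le_trans hx.2 h1⟩)]

lemma rr0_int13 {t : ℝ} (h1 : 1 ≤ t) (h3 : t ≤ 3) :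
    ∫ v in (1:ℝ)..t, rr0 v = -(t - 1) := by
  have hae : ∀ᵐ x : ℝ ∂(volume : Measure ℝ), x ≠ (3:ℝ) := by
    rw [ae_iff]
    simp [measure_singleton]
  rw [intervalIntegral.integral_congr_ae (g := fun _ => (-1:ℝ))]
  · simp
  · filter_upwards [hae] with x hx3 hxI
    rw [Set.uIoc_of_le h1] at hxI
    unfold rr0
    rw [if_neg]
    push_neg
    constructor
    · intro h0; linarith [hxI.1]
    · intro hge3
      have : x = 3 := le_antisymm (le_trans hxI.2 h3) hge3
      exact absurd this hx3

lemma rr0_int34 {t : ℝ} (h3 : 3 ≤ t) (h4 : t ≤ 4) :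
    ∫ v in (3:ℝ)..t, rr0 v = 2 * (t - 3) := by
  rw [intervalIntegral.integral_congr (g := fun _ => (2:ℝ))]
  · simp; ring
  · intro x hx
    rw [Set.uIcc_of_le h3] at hx
    unfold rr0
    rw [if_pos (Or.inr ⟨hx.1, le_trans hx.2 h4⟩)]

lemma rr0_level {t : ℝ} (h0 : 0 ≤ t) (h4 : t ≤ 4) :
    ∫ v in (0:ℝ)..t, rr0 v =
      if t ≤ 1 then 2 * t else if t ≤ 3 then 3 - t else 2 * t - 6 := by
  split_ifs with h1 h3
  · exact rr0_int01 h0 h1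
  · push_neg at h1
    rw [← intervalIntegral.integral_add_adjacent_intervals (rr0_int 0 1) (rr0_int 1 t),
      rr0_int01 (by norm_num) le_rfl, rr0_int13 h1.le h3]
    ring
  · push_neg at h1 h3
    rw [← intervalIntegral.integral_add_adjacent_intervals (rr0_int 0 3) (rr0_int 3 t),
      ← intervalIntegral.integral_add_adjacent_intervals (rr0_int 0 1) (rr0_int 1 3),
      rr0_int01 (by norm_num) le_rfl, rr0_int13 (by norm_num) le_rfl, rr0_int34 h3.le h4]
    ring

/-- Example 2 of the paper: two initially full stores, with (capacity, rate)
`(2,2)` and `(4,1)`, symmetric charge/discharge rates and perfect efficiency,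
and demand `3` on `[0,1] ∪ [3,4]`, `0` otherwise.  The demand can be completely
served with cross-charging but not without it. -/
theorem cross_charging_can_be_necessary :
    let Ebar : Fin 2 → ℝ := ![2, 4]
    let P : Fin 2 → ℝ := ![2, 1]
    let d : ℝ → ℝ := fun t =>
      if (0 ≤ t ∧ t ≤ 1) ∨ (3 ≤ t ∧ t ≤ 4) then 3 else 0
    (∃ r : Fin 2 → ℝ → ℝ, IsCrossPolicy Ebar Ebar P P d 4 r ∧
        ∀ t ∈ Icc (0:ℝ) 4, ∑ i, r i t = d t) ∧
    ¬ (∃ r : Fin 2 → ℝ → ℝ, IsCrossPolicy Ebar Ebar P P d 4 r ∧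
        (∀ i, ∀ t ∈ Icc (0:ℝ) 4, 0 ≤ r i t) ∧
        ∀ t ∈ Icc (0:ℝ) 4, ∑ i, r i t = d t) := by
  intro Ebar P d
  constructor
  · -- with cross-charging
    refine ⟨![rr0, fun _ => 1], ⟨?_, ?_, ?_, ?_⟩, ?_⟩
    · intro i
      fin_cases i
      · exact rr0_meas
      · exact measurable_const
    · intro i t ht
      fin_cases i <;> simp [Ebar, P]
      · unfold rr0; split_ifs <;> norm_num
    · intro i t ht
      obtain ⟨ht0, ht4⟩ := ht
      fin_cases i
      · simp only [storeLevel, Ebar, Fin.zero_eta, Fin.isValue, Matrix.cons_val_zero]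
        rw [rr0_level ht0 ht4]
        split_ifs <;> constructor <;> linarith
      · simp only [storeLevel, Ebar, Fin.mk_one, Fin.isValue, Matrix.cons_val_one,
          Matrix.head_cons, Matrix.cons_val_zero]
        rw [intervalIntegral.integral_const, smul_eq_mul]
        constructor <;> linarith
    · intro t ht
      have : ∑ i, ![rr0, fun _ => (1:ℝ)] i t = rr0 t + 1 := by
        simp [Fin.sum_univ_two]
      rw [this]
      unfold rr0; simp only [d]
      split_ifs <;> norm_num
    · intro t ht
      have : ∑ i, ![rr0, fun _ => (1:ℝ)] i t = rr0 t + 1 := by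
        simp [Fin.sum_univ_two]
      rw [this]
      unfold rr0; simp only [d]
      split_ifs <;> norm_num
  · -- without cross-charging: impossible
    rintro ⟨r, ⟨hm, hrate, hlevel, -⟩, hnn, hsum⟩
    -- integrability
    have hsub : ∀ {a b : ℝ}, a ∈ Icc (0:ℝ) 4 → b ∈ Icc (0:ℝ) 4 →
        Set.uIcc a b ⊆ Icc (0:ℝ) 4 := by
      intro a b ha hb
      rw [← Set.uIcc_of_le (by norm_num : (0:ℝ) ≤ 4)] at ha hb ⊢
      exact Set.uIcc_subset_uIcc ha hb
    have hint : ∀ (i : Fin 2) (a b : ℝ), a ∈ Icc (0:ℝ) 4 → b ∈ Icc (0:ℝ) 4 →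
        IntervalIntegrable (r i) volume a b := by
      intro i a b ha hb
      refine bdd_intInt (hm i) (C := 2) (fun x hx => ?_)
      have hx4 := hsub ha hb hx
      have h := hrate i x hx4
      have hP : P i ≤ 2 := by fin_cases i <;> norm_num [P]
      rw [abs_le]
      exact ⟨by linarith [h.1], by linarith [h.2]⟩
    have m0 : (0:ℝ) ∈ Icc (0:ℝ) 4 := by norm_num
    have m1 : (1:ℝ) ∈ Icc (0:ℝ) 4 := by norm_num
    have m3 : (3:ℝ) ∈ Icc (0:ℝ) 4 := by norm_num
    have m4 : (4:ℝ) ∈ Icc (0:ℝ) 4 := by norm_num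
    -- step A : ∫_0^1 r0 ≥ 2
    have hA : 2 ≤ ∫ t in (0:ℝ)..1, r 0 t := by
      have hpt : ∀ t ∈ Icc (0:ℝ) 1, (fun _ => (2:ℝ)) t ≤ r 0 t := by
        intro t ht
        have ht4 : t ∈ Icc (0:ℝ) 4 := ⟨ht.1, by linarith [ht.2]⟩
        have hs := hsum t ht4
        have hd : d t = 3 := by simp only [d]; rw [if_pos (Or.inl ⟨ht.1, ht.2⟩)]
        rw [Fin.sum_univ_two, hd] at hs
        have h1 := (hrate 1 t ht4).2
        simp only [P, Matrix.cons_val_one, Matrix.head_cons, Matrix.cons_val_zero] at h1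
        simp only
        linarith
      have := intervalIntegral.integral_mono_on (by norm_num : (0:ℝ) ≤ 1)
        intervalIntegrable_const (hint 0 0 1 m0 m1) hpt
      simpa using this
    -- step B : ∫_0^4 r0 ≤ 2
    have hB : (∫ t in (0:ℝ)..4, r 0 t) ≤ 2 := by
      have h := (hlevel 0 4 m4).1
      simp only [storeLevel, Ebar, Matrix.cons_val_zero] at h
      linarith
    -- step C : 0 ≤ ∫_1^3 r0
    have hC : 0 ≤ ∫ t in (1:ℝ)..3, r 0 t := by
      have hpt : ∀ t ∈ Icc (1:ℝ) 3, (fun _ => (0:ℝ)) t ≤ r 0 t := by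
        intro t ht
        exact hnn 0 t ⟨by linarith [ht.1], by linarith [ht.2]⟩
      have := intervalIntegral.integral_mono_on (by norm_num : (1:ℝ) ≤ 3)
        intervalIntegrable_const (hint 0 1 3 m1 m3) hpt
      simpa using this
    -- split
    have hsplit : (∫ t in (0:ℝ)..4, r 0 t) =
        (∫ t in (0:ℝ)..1, r 0 t) + (∫ t in (1:ℝ)..3, r 0 t) + (∫ t in (3:ℝ)..4, r 0 t) := by
      rw [intervalIntegral.integral_add_adjacent_intervals (hint 0 0 1 m0 m1) (hint 0 1 3 m1 m3),
        intervalIntegral.integral_add_adjacent_intervals (hint 0 0 3 m0 m3) (hint 0 3 4 m3 m4)]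
    have hD : (∫ t in (3:ℝ)..4, r 0 t) ≤ 0 := by linarith
    -- step E : ∫_3^4 r1 ≤ 1
    have hE : (∫ t in (3:ℝ)..4, r 1 t) ≤ 1 := by
      have hpt : ∀ t ∈ Icc (3:ℝ) 4, r 1 t ≤ (fun _ => (1:ℝ)) t := by
        intro t ht
        have h1 := (hrate 1 t ⟨by linarith [ht.1], ht.2⟩).2
        simpa [P] using h1
      have h := intervalIntegral.integral_mono_on (by norm_num : (3:ℝ) ≤ 4)
        (hint 1 3 4 m3 m4) intervalIntegrable_const hpt
      simp only [intervalIntegral.integral_const, smul_eq_mul] at h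
      linarith
    -- step F : ∫_3^4 (r0 + r1) = 3
    have hF : (∫ t in (3:ℝ)..4, (r 0 t + r 1 t)) = 3 := by
      rw [intervalIntegral.integral_congr (g := fun _ => (3:ℝ))]
      · norm_num
      · intro t ht
        rw [Set.uIcc_of_le (by norm_num : (3:ℝ) ≤ 4)] at ht
        have ht4 : t ∈ Icc (0:ℝ) 4 := ⟨by linarith [ht.1], ht.2⟩
        have hs := hsum t ht4
        have hd : d t = 3 := by simp only [d]; rw [if_pos (Or.inr ⟨ht.1, ht.2⟩)]
        rw [Fin.sum_univ_two, hd] at hs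
        simpa using hs
    have hadd : (∫ t in (3:ℝ)..4, (r 0 t + r 1 t)) =
        (∫ t in (3:ℝ)..4, r 0 t) + (∫ t in (3:ℝ)..4, r 1 t) :=
      intervalIntegral.integral_add (hint 0 3 4 m3 m4) (hint 1 3 4 m3 m4)
    linarith [hF, hadd]
end

section
/- There exist two stores and a weakly increasing nonnegative demand process, with the stores not all initially full, such that the demand can be completely served with cross-charging but not without it: stores (Ē_1,P_1) = (2,1), (Ē_2,P_2) = (1,1) with symmetric rates and perfect efficiency, E_1(0) = 2, E_2(0) = 0, and d(t) = 0 on [0,1], d(t) = 2 on [1,2]. The unique way to serve is to charge store 2 fully from store 1 on [0,1] and discharge both fully on [1,2]. -/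
open MeasureTheory Set Finset
open scoped Classical

-- the second store's rate in the construction
noncomputable def rr1 : ℝ → ℝ := fun t => if 1 ≤ t then 1 else -1

lemma rr1_meas : Measurable rr1 := by
  unfold rr1
  exact Measurable.ite (measurableSet_le measurable_const measurable_id) measurable_const
    measurable_const

lemma rr1_int (a b : ℝ) : IntervalIntegrable rr1 volume a b := by
  rw [intervalIntegrable_iff]
  refine Integrable.mono' (g := fun _ => (1:ℝ)) ((integrableOn_const_iff (C := (1:ℝ))).mpr (Or.inr measure_Ioc_lt_top)) rr1_meas.aestronglyMeasurable.restrict ?_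
  filter_upwards with x
  unfold rr1; split <;> norm_num

lemma rr1_int01 {t : ℝ} (ht : t ≤ 1) : ∫ v in (0:ℝ)..t, rr1 v = -t := by
  have : ∫ v in (0:ℝ)..t, rr1 v = ∫ v in (0:ℝ)..t, (-1 : ℝ) := by
    apply intervalIntegral.integral_congr_ae
    have hnull : (volume : Measure ℝ) {(1:ℝ)} = 0 := measure_singleton 1
    rw [MeasureTheory.ae_iff]
    refine measure_mono_null ?_ hnull
    intro x hx
    simp only [Set.mem_setOf_eq, Classical.not_imp] at hx
    obtain ⟨hx1, hx2⟩ := hx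
    simp only [Set.mem_singleton_iff]
    by_contra hne
    have hxle : x ≤ 1 := by
      rcases Set.mem_uIoc.mp hx1 with h | h
      · exact h.2.trans ht
      · exact h.2.trans (by norm_num)
    have hxlt : x < 1 := lt_of_le_of_ne hxle hne
    apply hx2
    unfold rr1
    rw [if_neg (not_le.mpr hxlt)]
  rw [this, intervalIntegral.integral_const, smul_eq_mul]
  ring

lemma rr1_int1t {t : ℝ} (ht : 1 ≤ t) : ∫ v in (1:ℝ)..t, rr1 v = t - 1 := by
  have : ∫ v in (1:ℝ)..t, rr1 v = ∫ v in (1:ℝ)..t, (1 : ℝ) := by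
    apply intervalIntegral.integral_congr
    intro x hx
    rw [Set.uIcc_of_le ht] at hx
    unfold rr1
    rw [if_pos hx.1]
  rw [this, intervalIntegral.integral_const, smul_eq_mul]
  ring

lemma rr1_int0t {t : ℝ} (ht : 1 ≤ t) : ∫ v in (0:ℝ)..t, rr1 v = t - 2 := by
  have := intervalIntegral.integral_add_adjacent_intervals (a := (0:ℝ)) (b := 1) (c := t)
    (rr1_int 0 1) (rr1_int 1 t)
  rw [rr1_int01 le_rfl, rr1_int1t ht] at this
  linarith [this]


/-- Example 3 of the paper: stores `(Ē₁,P₁) = (2,1)`, `(Ē₂,P₂) = (1,1)` with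
symmetric rates and perfect efficiency, initial levels `E₁(0) = 2`, `E₂(0) = 0`
(not all full), and the weakly increasing demand `d = 0` on `[0,1]`, `d = 2` on
`[1,2]`.  The demand can be completely served with cross-charging but not
without it. -/
theorem cross_charging_necessary_increasing_demand :
    let Ebar : Fin 2 → ℝ := ![2, 1]
    let P : Fin 2 → ℝ := ![1, 1]
    let E0 : Fin 2 → ℝ := ![2, 0]
    let d : ℝ → ℝ := fun t => if 1 ≤ t ∧ t ≤ 2 then 2 else 0
    (∃ r : Fin 2 → ℝ → ℝ, IsCrossPolicy E0 Ebar P P d 2 r ∧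
        ∀ t ∈ Icc (0:ℝ) 2, ∑ i, r i t = d t) ∧
    ¬ (∃ r : Fin 2 → ℝ → ℝ, IsCrossPolicy E0 Ebar P P d 2 r ∧
        (∀ i, ∀ t ∈ Icc (0:ℝ) 2, 0 ≤ r i t) ∧
        ∀ t ∈ Icc (0:ℝ) 2, ∑ i, r i t = d t) := by
  intro Ebar P E0 d
  constructor
  · -- construction
    refine ⟨![fun _ => 1, rr1], ⟨?_, ?_, ?_, ?_⟩, ?_⟩
    · intro i
      fin_cases i
      · exact measurable_const
      · exact rr1_meas
    · intro i t ht
      fin_cases i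
      · show -(1:ℝ) ≤ 1 ∧ (1:ℝ) ≤ 1; norm_num
      · show -(1:ℝ) ≤ rr1 t ∧ rr1 t ≤ 1
        unfold rr1; split <;> norm_num
    · intro i t ht
      obtain ⟨ht0, ht2⟩ := ht
      fin_cases i
      · show 0 ≤ (2:ℝ) - ∫ v in (0:ℝ)..t, (1:ℝ) ∧ (2:ℝ) - ∫ v in (0:ℝ)..t, (1:ℝ) ≤ 2
        rw [intervalIntegral.integral_const, smul_eq_mul]
        constructor <;> linarith
      · show 0 ≤ (0:ℝ) - ∫ v in (0:ℝ)..t, rr1 v ∧ (0:ℝ) - ∫ v in (0:ℝ)..t, rr1 v ≤ 1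
        rcases le_or_gt t 1 with h | h
        · rw [rr1_int01 h]; constructor <;> linarith
        · rw [rr1_int0t h.le]; constructor <;> linarith
    · intro t ht
      obtain ⟨ht0, ht2⟩ := ht
      rw [Fin.sum_univ_two]
      simp only [Matrix.cons_val_zero, Matrix.cons_val_one, Matrix.head_cons, d]
      unfold rr1
      rcases le_or_gt 1 t with h | h
      · rw [if_pos h, if_pos ⟨h, ht2⟩]; norm_num
      · rw [if_neg (not_le.mpr h), if_neg (by push_neg; intro hc; linarith)]; norm_num
    · intro t ht
      obtain ⟨ht0, ht2⟩ := ht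
      rw [Fin.sum_univ_two]
      simp only [Matrix.cons_val_zero, Matrix.cons_val_one, Matrix.head_cons, d]
      unfold rr1
      rcases le_or_gt 1 t with h | h
      · rw [if_pos h, if_pos ⟨h, ht2⟩]; norm_num
      · rw [if_neg (not_le.mpr h), if_neg (by push_neg; intro hc; linarith)]; norm_num
  · -- impossibility
    rintro ⟨r, ⟨hmeas, hrate, hlevel, -⟩, hnn, hserve⟩
    -- r 1 vanishes on [0,1)
    have hzero : ∀ t, 0 ≤ t → t < 1 → r 1 t = 0 := by
      intro t h0 h1
      have htm : t ∈ Icc (0:ℝ) 2 := ⟨h0, by linarith⟩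
      have hs := hserve t htm
      rw [Fin.sum_univ_two] at hs
      have hd : d t = 0 := by
        simp only [d]; rw [if_neg (by push_neg; intro hc; linarith)]
      have h0' := hnn 0 t htm
      have h1' := hnn 1 t htm
      linarith [hs, hd ▸ hs]
    -- r 1 ≥ 1 on [1,2]
    have hone : ∀ t, 1 ≤ t → t ≤ 2 → 1 ≤ r 1 t := by
      intro t h1 h2
      have htm : t ∈ Icc (0:ℝ) 2 := ⟨by linarith, h2⟩
      have hs := hserve t htm
      rw [Fin.sum_univ_two] at hs
      have hd : d t = 2 := by simp only [d]; rw [if_pos ⟨h1, h2⟩]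
      have hr0 := (hrate 0 t htm).2
      simp only [Matrix.cons_val_zero, P] at hr0
      linarith [hd ▸ hs]
    -- integrability of r 1 on subintervals of [0,2]
    have hint : ∀ a b : ℝ, 0 ≤ a → b ≤ 2 → a ≤ b → IntervalIntegrable (r 1) volume a b := by
      intro a b ha hb hab
      rw [intervalIntegrable_iff]
      rw [Set.uIoc_of_le hab]
      refine Integrable.mono' (g := fun _ => (1:ℝ)) ((integrableOn_const_iff (C := (1:ℝ))).mpr (Or.inr measure_Ioc_lt_top)) ((hmeas 1).aestronglyMeasurable.restrict) ?_
      filter_upwards [ae_restrict_mem measurableSet_Ioc] with x hx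
      have hxm : x ∈ Icc (0:ℝ) 2 := ⟨by linarith [hx.1], le_trans hx.2 hb⟩
      have := hrate 1 x hxm
      simp only [Matrix.cons_val_one, Matrix.head_cons, Matrix.cons_val_zero, P] at this
      rw [Real.norm_eq_abs, abs_le]
      exact ⟨by linarith [this.1], this.2⟩
    -- integral over [0,1] is 0
    have hI01 : ∫ v in (0:ℝ)..1, r 1 v = 0 := by
      have : ∫ v in (0:ℝ)..1, r 1 v = ∫ v in (0:ℝ)..1, (0:ℝ) := by
        apply intervalIntegral.integral_congr_ae
        rw [MeasureTheory.ae_iff]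
        refine measure_mono_null ?_ (measure_singleton (1:ℝ))
        intro x hx
        simp only [Set.mem_setOf_eq, Classical.not_imp] at hx
        obtain ⟨hx1, hx2⟩ := hx
        rw [Set.uIoc_of_le (by norm_num : (0:ℝ) ≤ 1)] at hx1
        simp only [Set.mem_singleton_iff]
        by_contra hne
        exact hx2 (hzero x hx1.1.le (lt_of_le_of_ne hx1.2 hne))
      rw [this, intervalIntegral.integral_zero]
    -- integral over [1,2] is ≥ 1
    have hI12 : 1 ≤ ∫ v in (1:ℝ)..2, r 1 v := by
      have h := intervalIntegral.integral_mono_on (by norm_num : (1:ℝ) ≤ 2)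
        (intervalIntegrable_const (c := (1:ℝ))) (hint 1 2 (by norm_num) le_rfl (by norm_num))
        (fun x hx => hone x hx.1 hx.2)
      rw [intervalIntegral.integral_const, smul_eq_mul] at h
      linarith
    -- level of store 2 at time 2
    have hlev := (hlevel 1 2 ⟨by norm_num, le_rfl⟩).1
    simp only [storeLevel, Matrix.cons_val_one, Matrix.head_cons, Matrix.cons_val_zero, E0] at hlev
    have hadd := intervalIntegral.integral_add_adjacent_intervals (a := (0:ℝ)) (b := 1) (c := 2)
      (hint 0 1 le_rfl (by norm_num) (by norm_num)) (hint 1 2 (by norm_num) le_rfl (by norm_num))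
    rw [hI01] at hadd
    linarith [hadd, hI12]
end

section
/- Suppose all stores i ∈ S satisfy Ē_i/P_i = c for a common constant c, P'_i = α P_i for a common α > 0, have common round-trip efficiency η, and start with E_i(0)/P_i equal for all i. Then under the combined GGDDF (when d(t) > 0) / GGCDF (when d(t) < 0) policy, the configuration remains balanced (E_i(t)/P_i constant over i) for all t ≥ 0, and balance with respect to discharging is equivalent at every time to balance with respect to charging ((Ē_i − E_i(t))/P'_i constant over i). -/
open MeasureTheory Set Finset
open scoped Classical

/-- The combined GGDDF/GGCDF policy: when `d(t) > 0` discharge greedily,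
prioritising greatest residual discharge-duration `E_i(t)/P_i`; when `d(t) < 0`
(external surplus) charge greedily, prioritising greatest residual
charge-duration `(Ē_i − E_i(t))/P'_i`; all stores have common round-trip
efficiency `η`. -/
def IsGGDDFGGCDF {S : Type*} [Fintype S] (E0 Ebar P P' : S → ℝ) (η : ℝ)
    (d : ℝ → ℝ) (r : S → ℝ → ℝ) : Prop :=
  (∀ i, Measurable (r i)) ∧
  (∀ i, ∀ t, 0 ≤ t →
    0 ≤ storeLevel E0 r i t ∧ storeLevel E0 r i t ≤ Ebar i) ∧
  (∀ t, 0 ≤ t → 0 < d t →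
    (∀ i, 0 ≤ r i t ∧ r i t ≤ P i) ∧
    (∑ i, r i t =
      min (d t) (∑ i ∈ Finset.univ.filter (fun i => 0 < storeLevel E0 r i t), P i)) ∧
    (∀ i j, storeLevel E0 r i t / P i < storeLevel E0 r j t / P j →
      0 < r i t → r j t = P j)) ∧
  (∀ t, 0 ≤ t → d t < 0 →
    (∀ i, -P' i ≤ r i t ∧ r i t ≤ 0) ∧
    (∑ i, (- r i t) =
      min (η * (- d t))
        (∑ i ∈ Finset.univ.filter (fun i => storeLevel E0 r i t < Ebar i), P' i)) ∧
    (∀ i j, (Ebar i - storeLevel E0 r i t) / P' i < (Ebar j - storeLevel E0 r j t) / P' j →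
      r i t < 0 → r j t = -P' j)) ∧
  (∀ t, 0 ≤ t → d t = 0 → ∀ i, r i t = 0)

/-- If `Ē_i/P_i = c`, `P'_i = α P_i` and `E_i(0)/P_i` is the same for all
stores, then under the combined GGDDF/GGCDF policy the configuration remains
balanced for all `t ≥ 0`, and at every time balance with respect to discharging
is equivalent to balance with respect to charging. -/
theorem combined_policy_preserves_balance
    {S : Type*} [Fintype S] (E0 Ebar P P' : S → ℝ) (η c α : ℝ)
    (hP : ∀ i, 0 < P i) (hα : 0 < α) (hP' : ∀ i, P' i = α * P i)
    (hc : ∀ i, Ebar i / P i = c) (hη : 0 < η ∧ η ≤ 1)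
    (hE0 : ∀ i, 0 ≤ E0 i ∧ E0 i ≤ Ebar i)
    (hbal0 : ∀ i j, E0 i / P i = E0 j / P j)
    (d : ℝ → ℝ) (hd : Measurable d)
    (r : S → ℝ → ℝ) (hr : IsGGDDFGGCDF E0 Ebar P P' η d r) :
    (∀ t, 0 ≤ t → ∀ i j,
      storeLevel E0 r i t / P i = storeLevel E0 r j t / P j) ∧
    (∀ t, 0 ≤ t →
      ((∀ i j, storeLevel E0 r i t / P i = storeLevel E0 r j t / P j) ↔
       (∀ i j, (Ebar i - storeLevel E0 r i t) / P' i =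
               (Ebar j - storeLevel E0 r j t) / P' j))) := by
  obtain ⟨hmeas, hbounds, hdis, hchg, hzero⟩ := hr
  have hPne : ∀ i : S, P i ≠ 0 := fun i => (hP i).ne'
  have hEbar : ∀ i : S, Ebar i = c * P i := fun i =>
    (div_eq_iff (hPne i)).mp (hc i)
  have hdur_eq : ∀ (k : S) (v : ℝ), (Ebar k - storeLevel E0 r k v) / P' k
      = (c - storeLevel E0 r k v / P k) / α := by
    intro k v
    rw [hP' k, hEbar k]
    field_simp [hPne k, hα.ne']
  -- pointwise rate comparison when unbalanced
  have hrate : ∀ v : ℝ, 0 ≤ v → ∀ i j : S,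
      storeLevel E0 r i v / P i < storeLevel E0 r j v / P j →
      r i v / P i ≤ r j v / P j := by
    intro v hv i j hlt
    rcases lt_trichotomy (d v) 0 with hdv | hdv | hdv
    · obtain ⟨hbnd, -, hpri⟩ := hchg v hv hdv
      have hdur : (Ebar j - storeLevel E0 r j v) / P' j
          < (Ebar i - storeLevel E0 r i v) / P' i := by
        rw [hdur_eq i v, hdur_eq j v, div_lt_div_iff₀ hα hα]
        nlinarith [mul_pos hα (sub_pos.mpr hlt)]
      rcases lt_or_ge (r j v) 0 with hrj | hrj
      · have hri : r i v = -P' i := hpri j i hdur hrj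
        have h1 : r i v / P i = -α := by
          rw [hri, hP' i, neg_div, mul_div_assoc, div_self (hPne i), mul_one]
        have h2 : -(α * P j) ≤ r j v := by rw [← hP' j]; exact (hbnd j).1
        rw [h1, le_div_iff₀ (hP j)]
        linarith
      · have h0 : r j v = 0 := le_antisymm (hbnd j).2 hrj
        rw [h0, zero_div]
        exact div_nonpos_iff.mpr (Or.inr ⟨(hbnd i).2, (hP i).le⟩)
    · rw [hzero v hv hdv i, hzero v hv hdv j]
      simp
    · obtain ⟨hbnd, -, hpri⟩ := hdis v hv hdv
      rcases lt_or_ge 0 (r i v) with hri | hri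
      · rw [hpri i j hlt hri, div_self (hPne j)]
        exact div_le_one_of_le₀ (hbnd i).2 (hP i).le
      · have h0 : r i v = 0 := le_antisymm hri (hbnd i).1
        rw [h0, zero_div]
        exact div_nonneg (hbnd j).1 (hP j).le
  -- integrability of the rates on nonnegative intervals
  have hintIcc : ∀ (k : S) (a b : ℝ), 0 ≤ a → IntegrableOn (r k) (Icc a b) := by
    intro k a b ha
    refine Measure.integrableOn_of_bounded (M := max (P k) (P' k))
      measure_Icc_lt_top.ne (hmeas k).aestronglyMeasurable ?_
    filter_upwards [ae_restrict_mem measurableSet_Icc] with v hv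
    have hv0 : 0 ≤ v := ha.trans hv.1
    have hP'pos : 0 < P' k := by rw [hP' k]; exact mul_pos hα (hP k)
    rw [Real.norm_eq_abs, abs_le]
    rcases lt_trichotomy (d v) 0 with hdv | hdv | hdv
    · have h1 := (hchg v hv0 hdv).1 k
      exact ⟨by linarith [le_max_right (P k) (P' k)],
        by linarith [le_max_left (P k) (P' k), (hP k).le]⟩
    · rw [hzero v hv0 hdv k]
      constructor <;> linarith [le_max_left (P k) (P' k), (hP k).le]
    · have h1 := (hdis v hv0 hdv).1 k
      exact ⟨by linarith [le_max_right (P k) (P' k), hP'pos],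
        by linarith [le_max_left (P k) (P' k)]⟩
  have hintI : ∀ (k : S) (a b : ℝ), 0 ≤ a → a ≤ b →
      IntervalIntegrable (r k) volume a b := by
    intro k a b ha hab
    rw [intervalIntegrable_iff_integrableOn_Ioc_of_le hab]
    exact (hintIcc k a b ha).mono_set Ioc_subset_Icc_self
  -- never strictly unbalanced
  have notlt : ∀ t : ℝ, 0 ≤ t → ∀ i j : S,
      ¬ (storeLevel E0 r i t / P i < storeLevel E0 r j t / P j) := by
    intro t ht i j hlt
    have hcontg : ∀ k : S,
        ContinuousOn (fun s => storeLevel E0 r k s) (Icc 0 t) := by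
      intro k
      have h1 : IntegrableOn (r k) (uIcc 0 t) := by
        rw [uIcc_of_le ht]; exact hintIcc k 0 t le_rfl
      have h2 := intervalIntegral.continuousOn_primitive_interval (μ := volume)
        (f := r k) (a := 0) (b := t) h1
      rw [uIcc_of_le ht] at h2
      exact (continuousOn_const.sub h2 : ContinuousOn (fun s => E0 k - ∫ v in (0:ℝ)..s, r k v) _)
    have hcont : ContinuousOn
        (fun s => storeLevel E0 r j s / P j - storeLevel E0 r i s / P i)
        (Icc 0 t) :=
      ((hcontg j).div_const _).sub ((hcontg i).div_const _)
    have hst0 : ∀ k : S, storeLevel E0 r k 0 = E0 k := by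
      intro k; simp [storeLevel]
    set A : Set ℝ := Icc 0 t ∩
      (fun s => storeLevel E0 r j s / P j - storeLevel E0 r i s / P i) ⁻¹' Iic 0
      with hA
    have hAne : A.Nonempty := by
      refine ⟨0, ⟨le_rfl, ht⟩, ?_⟩
      simp only [Set.mem_preimage, Set.mem_Iic, hst0]
      rw [hbal0 j i]
      simp
    have hAcl : IsClosed A :=
      hcont.preimage_isClosed_of_isClosed isClosed_Icc isClosed_Iic
    have hAcp : IsCompact A :=
      isCompact_Icc.of_isClosed_subset hAcl inter_subset_left
    set u : ℝ := sSup A with hudef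
    have huA : u ∈ A := hAcp.sSup_mem hAne
    have hu0 : 0 ≤ u := huA.1.1
    have hut : u ≤ t := huA.1.2
    have hhu : storeLevel E0 r j u / P j - storeLevel E0 r i u / P i ≤ 0 := huA.2
    have hht : 0 < storeLevel E0 r j t / P j - storeLevel E0 r i t / P i :=
      sub_pos.mpr hlt
    have hult : u < t := by
      rcases lt_or_eq_of_le hut with h' | h'
      · exact h'
      · rw [h'] at hhu; linarith
    have hpos : ∀ v ∈ Ioc u t,
        storeLevel E0 r i v / P i < storeLevel E0 r j v / P j := by
      intro v hv
      by_contra hc'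
      push_neg at hc'
      have hvA : v ∈ A := ⟨⟨hu0.trans hv.1.le, hv.2⟩, by
        simp only [Set.mem_preimage, Set.mem_Iic]; linarith⟩
      have : v ≤ u := le_csSup hAcp.bddAbove hvA
      exact absurd this (not_le.mpr hv.1)
    have hsplit : ∀ k : S, storeLevel E0 r k t
        = storeLevel E0 r k u - ∫ v in u..t, r k v := by
      intro k
      have := intervalIntegral.integral_add_adjacent_intervals
        (hintI k 0 u le_rfl hu0) (hintI k u t hu0 hult.le)
      simp only [storeLevel]
      rw [← this]; ring
    have hIint : ∀ k : S, IntervalIntegrable (fun v => r k v / P k) volume u t :=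
      fun k => (hintI k u t hu0 hult.le).div_const _
    have hnn : 0 ≤ ∫ v in u..t, (r j v / P j - r i v / P i) := by
      rw [intervalIntegral.integral_of_le hult.le]
      refine setIntegral_nonneg measurableSet_Ioc ?_
      intro v hv
      have := hrate v (hu0.trans hv.1.le) i j (hpos v hv)
      linarith
    have hint_sub : (∫ v in u..t, (r j v / P j - r i v / P i))
        = (∫ v in u..t, r j v) / P j - (∫ v in u..t, r i v) / P i := by
      rw [intervalIntegral.integral_sub (hIint j) (hIint i),
        intervalIntegral.integral_div, intervalIntegral.integral_div]
    have hfin : storeLevel E0 r j t / P j - storeLevel E0 r i t / P i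
        = (storeLevel E0 r j u / P j - storeLevel E0 r i u / P i)
          - ∫ v in u..t, (r j v / P j - r i v / P i) := by
      rw [hsplit i, hsplit j, hint_sub]
      ring
    rw [hfin] at hht
    linarith
  have part1 : ∀ t, 0 ≤ t → ∀ i j,
      storeLevel E0 r i t / P i = storeLevel E0 r j t / P j := by
    intro t ht i j
    exact le_antisymm (not_lt.mp (notlt t ht j i)) (not_lt.mp (notlt t ht i j))
  refine ⟨part1, ?_⟩
  intro t ht
  constructor
  · intro hb i j
    rw [hdur_eq i t, hdur_eq j t, hb i j]
  · intro hb i j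
    have h1 := hb i j
    rw [hdur_eq i t, hdur_eq j t, div_eq_div_iff hα.ne' hα.ne'] at h1
    have := mul_right_cancel₀ hα.ne' h1
    linarith
end

section
/- For a given total initial stored energy E and total power P, the pointwise-largest achievable energy-power transform is that of the balanced configuration: for any configuration (E_i, P_i) with Σ E_i = E and Σ P_i = P, its energy-power transform e^S satisfies e^S(p) ≤ (E/P)·max(0, P − p) for all p ≥ 0, with equality for all p iff the configuration is balanced. Consequently the balanced configuration maximises the set of demand processes that can be completely served. -/
open MeasureTheory Set Finset
open scoped Classical


lemma helper_integral_indicator (a c : ℝ) (ha : 0 ≤ a) :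
    ∫ u in Set.Ioi (0:ℝ), (Set.Iic a).indicator (fun _ => c) u = c * a := by
  rw [MeasureTheory.setIntegral_indicator measurableSet_Iic]
  rw [Set.Ioi_inter_Iic, MeasureTheory.setIntegral_const, Real.volume_real_Ioc_of_le (by linarith)]
  simp [mul_comm]

lemma helper_integrableOn {f : ℝ → ℝ} (hf : Measurable f) (C m : ℝ)
    (hbound : ∀ u, |f u| ≤ C) (hzero : ∀ u, m < u → f u = 0) :
    MeasureTheory.IntegrableOn f (Set.Ioi 0) := by
  have hC : 0 ≤ C := (abs_nonneg _).trans (hbound 0)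
  apply MeasureTheory.Integrable.mono'
    (g := (Set.Ioc (0:ℝ) m).indicator fun _ => C)
  · rw [MeasureTheory.integrable_indicator_iff measurableSet_Ioc]
    refine MeasureTheory.integrableOn_const (ne_of_lt ?_)
    refine lt_of_le_of_lt (MeasureTheory.Measure.restrict_apply_le _ _) ?_
    rw [Real.volume_Ioc]; exact ENNReal.ofReal_lt_top
  · exact hf.aestronglyMeasurable
  · refine Filter.eventually_of_mem (MeasureTheory.self_mem_ae_restrict measurableSet_Ioi) ?_
    intro u hu
    by_cases huM : u ∈ Set.Ioc (0:ℝ) m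
    · rw [Set.indicator_of_mem huM]; exact hbound u
    · have hm : m < u := by
        by_contra h
        exact huM ⟨hu, le_of_not_gt h⟩
      rw [Set.indicator_of_notMem huM, Real.norm_eq_abs, hzero u hm, abs_zero]


/-- For given total energy `E` and total power `P`, the balanced configuration
has the pointwise-largest energy-power transform: any configuration with
`Σ E_i = E`, `Σ P_i = P` satisfies `e^S(p) ≤ (E/P)·max(0, P − p)` for all
`p ≥ 0`, with equality for all `p ≥ 0` if and only if the configuration is
balanced (`E_i/P_i` constant over `i`). -/
theorem balanced_configuration_maximises_transform
    {S : Type*} [Fintype S] [Nonempty S] (E P : S → ℝ)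
    (hE : ∀ i, 0 ≤ E i) (hP : ∀ i, 0 < P i)
    (Etot Ptot : ℝ) (hEtot : Etot = ∑ i, E i) (hPtot : Ptot = ∑ i, P i)
    (eS : ℝ → ℝ)
    (heS : ∀ p, eS p =
      ∫ u in Set.Ioi (0:ℝ),
        max 0 ((∑ i ∈ Finset.univ.filter (fun i => u ≤ E i / P i), P i) - p)) :
    (∀ p, 0 ≤ p → eS p ≤ (Etot / Ptot) * max 0 (Ptot - p)) ∧
    ((∀ p, 0 ≤ p → eS p = (Etot / Ptot) * max 0 (Ptot - p)) ↔
      ∀ i j, E i / P i = E j / P j) := by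
  classical
  set r : S → ℝ := fun i => E i / P i with hrdef
  have hr0 : ∀ i, 0 ≤ r i := fun i => div_nonneg (hE i) (hP i).le
  have hPpos : 0 < Ptot := hPtot ▸ Finset.sum_pos (fun i _ => hP i) Finset.univ_nonempty
  have hEnn : 0 ≤ Etot := hEtot ▸ Finset.sum_nonneg (fun i _ => hE i)
  set s : ℝ → ℝ := fun u => ∑ i ∈ Finset.univ.filter (fun i => u ≤ r i), P i with hsdef
  have heS' : ∀ p, eS p = ∫ u in Set.Ioi (0:ℝ), max 0 (s u - p) := heS
  have hs_eq : s = fun u => ∑ i, (Set.Iic (r i)).indicator (fun _ => P i) u := by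
    funext u
    show (∑ i ∈ Finset.univ.filter (fun i => u ≤ r i), P i) = _
    rw [Finset.sum_filter]
    exact Finset.sum_congr rfl fun i _ => by
      by_cases h : u ≤ r i <;> simp [Set.indicator_apply, Set.mem_Iic, h]
  have hs_meas : Measurable s := by
    rw [hs_eq]
    exact Finset.measurable_sum _ fun i _ => measurable_const.indicator measurableSet_Iic
  have hs_nonneg : ∀ u, 0 ≤ s u := fun u =>
    Finset.sum_nonneg fun i _ => (hP i).le
  have hs_le : ∀ u, s u ≤ Ptot := fun u => by
    rw [hPtot]
    exact Finset.sum_le_sum_of_subset_of_nonneg (Finset.subset_univ _)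
      (fun i _ _ => (hP i).le)
  -- the largest ratio
  set m : ℝ := Finset.univ.sup' Finset.univ_nonempty r with hmdef
  have hm0 : 0 ≤ m := by
    obtain ⟨i, _, hi⟩ := Finset.exists_mem_eq_sup' Finset.univ_nonempty r
    rw [hmdef, hi]; exact hr0 i
  have hszero : ∀ u, m < u → s u = 0 := by
    intro u hu
    rw [hsdef]
    refine Finset.sum_eq_zero fun i hi => ?_
    exact absurd ((Finset.mem_filter.1 hi).2.trans (Finset.le_sup' r (Finset.mem_univ i)))
      (not_le.2 hu)
  -- integrability of s
  have hs_intOn : MeasureTheory.IntegrableOn s (Set.Ioi 0) :=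
    helper_integrableOn hs_meas Ptot m
      (fun u => by rw [abs_of_nonneg (hs_nonneg u)]; exact hs_le u) hszero
  -- integral of s is Etot
  have hs_int_val : ∫ u in Set.Ioi (0:ℝ), s u = Etot := by
    rw [hs_eq, MeasureTheory.integral_finset_sum _ (fun i _ => by
      refine helper_integrableOn (measurable_const.indicator measurableSet_Iic) (P i) (r i)
        (fun u => ?_) (fun u hu => ?_)
      · by_cases h : u ∈ Set.Iic (r i)
        · rw [Set.indicator_of_mem h, abs_of_nonneg (hP i).le]
        · rw [Set.indicator_of_notMem h, abs_zero]; exact (hP i).le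
      · have h : u ∉ Set.Iic (r i) := not_le.2 hu
        rw [Set.indicator_of_notMem h])]
    rw [hEtot]
    refine Finset.sum_congr rfl fun i _ => ?_
    rw [helper_integral_indicator (r i) (P i) (hr0 i), hrdef]
    rw [mul_comm, div_mul_cancel₀ _ (hP i).ne']
  -- integrand properties for a given p
  have hf_meas : ∀ p : ℝ, Measurable fun u => max 0 (s u - p) := fun p =>
    measurable_const.max (hs_meas.sub measurable_const)
  have hf_intOn : ∀ p : ℝ, 0 ≤ p →
      MeasureTheory.IntegrableOn (fun u => max 0 (s u - p)) (Set.Ioi 0) := by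
    intro p hp
    refine helper_integrableOn (hf_meas p) Ptot m (fun u => ?_) (fun u hu => ?_)
    · rw [abs_of_nonneg (le_max_left _ _)]
      exact max_le (le_trans hPpos.le le_rfl) (by linarith [hs_le u])
    · rw [hszero u hu]
      exact max_eq_left (by linarith)
  -- pointwise bound
  have hpw : ∀ p : ℝ, 0 ≤ p → p ≤ Ptot → ∀ u,
      max 0 (s u - p) ≤ (1 - p / Ptot) * s u := by
    intro p hp hple u
    have h1 := hs_nonneg u
    have h2 := hs_le u
    have hc : 0 ≤ 1 - p / Ptot := by
      rw [sub_nonneg, div_le_one hPpos]; exact hple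
    refine max_le (mul_nonneg hc h1) ?_
    have hid : (1 - p / Ptot) * s u - (s u - p) = p * (Ptot - s u) / Ptot := by
      field_simp; ring
    have h3 : 0 ≤ p * (Ptot - s u) / Ptot :=
      div_nonneg (mul_nonneg hp (by linarith)) hPpos.le
    linarith
  -- the upper bound with RHS in linear form, for p ≤ Ptot
  have hub : ∀ p : ℝ, 0 ≤ p → p ≤ Ptot →
      eS p ≤ (Etot / Ptot) * (Ptot - p) := by
    intro p hp hple
    rw [heS' p]
    have hg_int : MeasureTheory.IntegrableOn (fun u => (1 - p / Ptot) * s u) (Set.Ioi 0) :=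
      hs_intOn.const_mul _
    calc ∫ u in Set.Ioi (0:ℝ), max 0 (s u - p)
        ≤ ∫ u in Set.Ioi (0:ℝ), (1 - p / Ptot) * s u :=
          MeasureTheory.integral_mono (hf_intOn p hp) hg_int (hpw p hp hple)
      _ = (1 - p / Ptot) * ∫ u in Set.Ioi (0:ℝ), s u := MeasureTheory.integral_const_mul _ _
      _ = (Etot / Ptot) * (Ptot - p) := by rw [hs_int_val]; field_simp
  -- eS p = 0 for p ≥ Ptot
  have hzero_big : ∀ p : ℝ, Ptot ≤ p → eS p = 0 := by
    intro p hple
    rw [heS' p]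
    have : ∀ u : ℝ, max 0 (s u - p) = 0 := fun u =>
      max_eq_left (by linarith [hs_le u])
    simp [this]
  have part1 : ∀ p, 0 ≤ p → eS p ≤ (Etot / Ptot) * max 0 (Ptot - p) := by
    intro p hp
    rcases le_or_gt p Ptot with h | h
    · rw [max_eq_right (by linarith)]
      exact hub p hp h
    · rw [hzero_big p h.le, max_eq_left (by linarith)]
      simp
  refine ⟨part1, ?_, ?_⟩
  · -- equality for all p implies balanced
    intro heq
    by_contra hnb
    push_neg at hnb
    obtain ⟨i₁, j₁, hij⟩ := hnb
    set a : ℝ := Finset.univ.inf' Finset.univ_nonempty r with hadef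
    have ha_le : ∀ i, a ≤ r i := fun i => Finset.inf'_le r (Finset.mem_univ i)
    obtain ⟨ia, _, hia⟩ := Finset.exists_mem_eq_inf' Finset.univ_nonempty r
    have ha0 : 0 ≤ a := by rw [hadef, hia]; exact hr0 ia
    set T : Finset S := Finset.univ.filter (fun i => a < r i) with hTdef
    have hT : T.Nonempty := by
      rcases lt_or_gt_of_ne hij with h | h
      · exact ⟨j₁, Finset.mem_filter.2 ⟨Finset.mem_univ _, lt_of_le_of_lt (ha_le i₁) h⟩⟩
      · exact ⟨i₁, Finset.mem_filter.2 ⟨Finset.mem_univ _, lt_of_le_of_lt (ha_le j₁) h⟩⟩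
    set b : ℝ := T.inf' hT r with hbdef
    obtain ⟨ib, hibT, hib⟩ := Finset.exists_mem_eq_inf' hT r
    have hab : a < b := by
      rw [hbdef, hib]; exact (Finset.mem_filter.1 hibT).2
    set Q : ℝ := ∑ i ∈ T, P i with hQdef
    have hQpos : 0 < Q := Finset.sum_pos (fun i _ => hP i) hT
    have hQlt : Q < Ptot := by
      rw [hPtot]
      have hiaT : ia ∉ T := by
        rw [hTdef]
        simp only [Finset.mem_filter, Finset.mem_univ, true_and, not_lt]
        rw [hadef, hia]
      exact Finset.sum_lt_sum_of_subset (Finset.subset_univ T) (Finset.mem_univ ia) hiaT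
        (hP ia) (fun j _ _ => (hP j).le)
    have hfil : ∀ u ∈ Set.Ioc a b, s u = Q := by
      intro u hu
      have hfeq : Finset.univ.filter (fun i => u ≤ r i) = T := by
        ext i
        simp only [hTdef, Finset.mem_filter, Finset.mem_univ, true_and]
        constructor
        · intro h
          exact lt_of_lt_of_le hu.1 h
        · intro h
          exact hu.2.trans (Finset.inf'_le r (Finset.mem_filter.2 ⟨Finset.mem_univ i, h⟩))
      show (∑ i ∈ Finset.univ.filter (fun i => u ≤ r i), P i) = Q
      rw [hfeq]
    set p : ℝ := Ptot / 2 with hpdef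
    have hp0 : 0 < p := by positivity
    have hplt : p < Ptot := by rw [hpdef]; linarith
    have hc : max 0 (Q - p) < (1 - p / Ptot) * Q := by
      have hkey : (1 - p / Ptot) * Q - (Q - p) = p * (Ptot - Q) / Ptot := by
        field_simp; ring
      have hpos : 0 < p * (Ptot - Q) / Ptot :=
        div_pos (mul_pos hp0 (by linarith)) hPpos
      rcases le_or_gt p Q with h | h
      · rw [max_eq_right (by linarith)]
        linarith
      · rw [max_eq_left (by linarith)]
        exact mul_pos (by rw [sub_pos, div_lt_one hPpos]; exact hplt) hQpos
    -- integrals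
    set g : ℝ → ℝ := fun u => (1 - p / Ptot) * s u with hgdef
    set f : ℝ → ℝ := fun u => max 0 (s u - p) with hfdef
    have hg_int : MeasureTheory.IntegrableOn g (Set.Ioi 0) := hs_intOn.const_mul _
    have hf_int : MeasureTheory.IntegrableOn f (Set.Ioi 0) := hf_intOn p hp0.le
    have hint_eq : ∫ u in Set.Ioi (0:ℝ), (g u - f u) = 0 := by
      rw [MeasureTheory.integral_sub hg_int hf_int]
      have h1 : ∫ u in Set.Ioi (0:ℝ), g u = (Etot / Ptot) * (Ptot - p) := by
        rw [hgdef]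
        rw [MeasureTheory.integral_const_mul, hs_int_val]
        field_simp
      have h2 : ∫ u in Set.Ioi (0:ℝ), f u = (Etot / Ptot) * (Ptot - p) := by
        rw [← heS' p, heq p hp0.le, max_eq_right (by linarith)]
      rw [h1, h2, sub_self]
    have hsubset : Set.Ioc a b ⊆ Set.Ioi (0:ℝ) := fun x hx => lt_of_le_of_lt ha0 hx.1
    have hlower : ∫ u in Set.Ioc a b, (g u - f u) ≤ ∫ u in Set.Ioi (0:ℝ), (g u - f u) := by
      refine MeasureTheory.setIntegral_mono_set (hg_int.sub hf_int) ?_ ?_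
      · refine Filter.Eventually.of_forall fun u => ?_
        exact sub_nonneg.2 (hpw p hp0.le hplt.le u)
      · exact HasSubset.Subset.eventuallyLE hsubset
    have hval : ∫ u in Set.Ioc a b, (g u - f u) = ((1 - p / Ptot) * Q - max 0 (Q - p)) * (b - a) := by
      rw [MeasureTheory.setIntegral_congr_fun measurableSet_Ioc
        (g := fun _ => (1 - p / Ptot) * Q - max 0 (Q - p)) (fun u hu => by
          rw [hgdef, hfdef]; simp only; rw [hfil u hu])]
      rw [MeasureTheory.setIntegral_const, Real.volume_real_Ioc_of_le (by linarith), smul_eq_mul, mul_comm]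
    have : (0:ℝ) < ∫ u in Set.Ioc a b, (g u - f u) := by
      rw [hval]
      exact mul_pos (sub_pos.2 hc) (sub_pos.2 hab)
    linarith [hlower, hint_eq ▸ this]
  · -- balanced implies equality
    intro hbal p hp
    have i₀ : S := Classical.arbitrary S
    set c : ℝ := r i₀ with hcdef
    have hc0 : 0 ≤ c := hr0 i₀
    have hEc : ∀ i, E i = c * P i := by
      intro i
      have h1 : r i = c := hbal i i₀
      rw [← h1, hrdef]
      exact (div_mul_cancel₀ _ (hP i).ne').symm
    have hEtot_c : Etot = c * Ptot := by
      rw [hEtot, hPtot, Finset.mul_sum]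
      exact Finset.sum_congr rfl fun i _ => hEc i
    have hcval : Etot / Ptot = c := by
      rw [hEtot_c, mul_div_assoc, div_self hPpos.ne', mul_one]
    rw [heS' p, hcval]
    have hpt : ∀ u : ℝ, max 0 (s u - p) =
        (Set.Iic c).indicator (fun _ => max 0 (Ptot - p)) u := by
      intro u
      by_cases h : u ≤ c
      · have hmem : u ∈ Set.Iic c := h
        rw [Set.indicator_of_mem hmem]
        have hsu : s u = Ptot := by
          show (∑ i ∈ Finset.univ.filter (fun i => u ≤ r i), P i) = Ptot
          rw [hPtot]
          congr 1
          refine Finset.filter_true_of_mem fun i _ => ?_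
          exact h.trans_eq (hbal i i₀).symm
        rw [hsu]
      · have hnmem : u ∉ Set.Iic c := h
        rw [Set.indicator_of_notMem hnmem]
        have : s u = 0 := by
          rw [hsdef]
          refine Finset.sum_eq_zero fun i hi => ?_
          have h2 := (Finset.mem_filter.1 hi).2
          exact absurd (h2.trans_eq (hbal i i₀)) h
        rw [this, zero_sub, max_eq_left (by linarith)]
    rw [MeasureTheory.integral_congr_ae (Filter.Eventually.of_forall fun u => hpt u)]
    rw [helper_integral_indicator c (max 0 (Ptot - p)) hc0]
    ring
end
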